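/- arXiv:0811.3958 — 7 statements merged into one kernel-verified Lean document; each statement's English description precedes it below -/
import Mathlib

section
/- For all integers N, M, K with 1 < K ≤ N and M > 0 and every real ε > 0, there exists a bipartite multigraph G = ([N],[M],E) in which every left vertex has degree exactly D = ⌈(M/K)(ln(1/ε)+1) + (1/ε)(ln(N/K)+1)⌉ and which is a (K,ε)-disperser. -/
open Finset

/-- Bound on binomial coefficients: `C(n,k) ≤ (e n / k)^k = exp(k (log(n/k)+1))`. -/
lemma choose_le_exp (n k : ℕ) (hk : 0 < k) (hkn : k ≤ n) :
    ((n.choose k : ℝ)) ≤ Real.exp (k * (Real.log ((n : ℝ) / k) + 1)) := by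
  have hk' : (0:ℝ) < k := by exact_mod_cast hk
  have hn' : (0:ℝ) < n := by exact_mod_cast lt_of_lt_of_le hk hkn
  have hkf : (0:ℝ) < (k.factorial : ℝ) := by exact_mod_cast k.factorial_pos
  have h1 : (k.factorial : ℝ) * (n.choose k : ℝ) ≤ (n : ℝ) ^ k := by
    have h := Nat.descFactorial_le_pow n k
    rw [Nat.descFactorial_eq_factorial_mul_choose] at h
    exact_mod_cast h
  have h2 : (k:ℝ) ^ k / k.factorial ≤ Real.exp k := by
    calc (k:ℝ) ^ k / k.factorial
        ≤ ∑ i ∈ Finset.range (k+1), (k:ℝ) ^ i / i.factorial :=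
          Finset.single_le_sum (f := fun i => (k:ℝ) ^ i / i.factorial)
            (fun i _ => by positivity) (Finset.self_mem_range_succ k)
      _ ≤ Real.exp k := Real.sum_le_exp_of_nonneg hk'.le _
  have hdiv : (0:ℝ) < (n:ℝ)/k := by positivity
  have hpow : ((n:ℝ)/k) ^ k = Real.exp ((k:ℝ) * Real.log ((n:ℝ)/k)) := by
    rw [Real.exp_nat_mul, Real.exp_log hdiv]
  have key : (n.choose k : ℝ) ≤ (n:ℝ) ^ k / k.factorial := by
    rw [le_div_iff₀ hkf]; linarith
  have eq1 : (n:ℝ) ^ k / k.factorial = ((n:ℝ)/k) ^ k * ((k:ℝ) ^ k / k.factorial) := by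
    rw [div_pow]; field_simp
  calc (n.choose k : ℝ) ≤ (n:ℝ) ^ k / k.factorial := key
    _ = ((n:ℝ)/k) ^ k * ((k:ℝ) ^ k / k.factorial) := eq1
    _ ≤ ((n:ℝ)/k) ^ k * Real.exp k :=
        mul_le_mul_of_nonneg_left h2 (by positivity)
    _ = Real.exp ((k:ℝ) * Real.log ((n:ℝ)/k)) * Real.exp k := by rw [hpow]
    _ = Real.exp ((k:ℝ) * (Real.log ((n:ℝ)/k) + 1)) := by
        rw [← Real.exp_add]; ring_nf


/-- The key numerical inequality for the union bound. -/
lemma disperser_key_ineq (Nr Kr Mr tr Dr ε : ℝ) (hK : 0 < Kr) (hKN : Kr ≤ Nr) (hM : 0 < Mr)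
    (hε : 0 < ε) (hε1 : ε < 1) (htR : ε * Mr < tr)
    (hD : (Mr / Kr) * (Real.log (1 / ε) + 1) + (1 / ε) * (Real.log (Nr / Kr) + 1) ≤ Dr) :
    Kr * (Real.log (Nr / Kr) + 1) + tr * (Real.log (Mr / tr) + 1) - (tr / Mr) * (Dr * Kr) < 0 := by
  set L1 : ℝ := Real.log (1 / ε) + 1 with hL1def
  set L2 : ℝ := Real.log (Nr / Kr) + 1 with hL2def
  have htRpos : (0:ℝ) < tr := lt_of_le_of_lt (by positivity) htR
  have hL2pos : (1:ℝ) ≤ L2 := by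
    have : (0:ℝ) ≤ Real.log (Nr / Kr) := Real.log_nonneg ((one_le_div hK).2 hKN)
    rw [hL2def]; linarith
  have hL1pos : (1:ℝ) < L1 := by
    have : (0:ℝ) < Real.log (1 / ε) := Real.log_pos (by rw [lt_div_iff₀ hε]; linarith)
    rw [hL1def]; linarith
  have hc1 : tr * (Real.log (Mr / tr) + 1) ≤ tr * L1 := by
    have hlog : Real.log (Mr / tr) ≤ Real.log (1 / ε) := by
      apply Real.log_le_log (by positivity)
      rw [div_le_div_iff₀ htRpos hε]
      linarith [htR, mul_comm Mr ε]
    have : Real.log (Mr / tr) + 1 ≤ L1 := by rw [hL1def]; linarith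
    exact mul_le_mul_of_nonneg_left this htRpos.le
  have hc2 : tr * L1 + (tr * Kr / (Mr * ε)) * L2 ≤ (tr / Mr) * (Dr * Kr) := by
    have hfac : (0:ℝ) < tr * Kr / Mr := by positivity
    have := mul_le_mul_of_nonneg_left hD hfac.le
    have heq : tr * Kr / Mr * ((Mr / Kr) * L1 + (1 / ε) * L2)
        = tr * L1 + (tr * Kr / (Mr * ε)) * L2 := by
      field_simp
    have heq2 : tr * Kr / Mr * Dr = (tr / Mr) * (Dr * Kr) := by ring
    linarith [this, heq.le, heq.ge, heq2.le, heq2.ge]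
  have hc3 : Kr * L2 < (tr * Kr / (Mr * ε)) * L2 := by
    have h1 : Kr < tr * Kr / (Mr * ε) := by
      rw [lt_div_iff₀ (by positivity)]
      nlinarith [mul_pos (sub_pos.2 htR) hK]
    exact mul_lt_mul_of_pos_right h1 (by linarith : (0:ℝ) < L2)
  linarith

lemma disperser_exists_aux (N M K D : ℕ) (hK : 0 < K) (hKN : K ≤ N) (hM : 0 < M)
    (ε : ℝ) (hε : 0 < ε) (hε1 : ε < 1)
    (hD : ((M : ℝ) / K) * (Real.log (1 / ε) + 1)
        + (1 / ε) * (Real.log ((N : ℝ) / K) + 1) ≤ (D : ℝ)) :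
    ∃ G : Fin N → Fin D → Fin M,
      ∀ A : Finset (Fin N), K ≤ A.card →
        (1 - ε) * M ≤ ((A.biUnion (fun a => Finset.image (G a) Finset.univ)).card : ℝ) := by
  classical
  by_contra hcon
  push_neg at hcon
  set t : ℕ := ⌊ε * M⌋₊ + 1 with ht
  have hεM : (0:ℝ) ≤ ε * M := by positivity
  have hKR : (0:ℝ) < K := by exact_mod_cast hK
  have hMR : (0:ℝ) < M := by exact_mod_cast hM
  have htR : ε * M < (t:ℝ) := by
    have h := Nat.lt_floor_add_one (ε * M)
    rw [ht]; push_cast; linarith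
  have htR' : (t:ℝ) ≤ ε * M + 1 := by
    have h := Nat.floor_le hεM
    rw [ht]; push_cast; linarith
  have htM : t ≤ M := by
    have h : ⌊ε * M⌋₊ < M := (Nat.floor_lt hεM).2 (by nlinarith)
    omega
  have htpos : 0 < t := Nat.succ_pos _
  have htRpos : (0:ℝ) < t := by exact_mod_cast htpos
  -- the set of graphs all of whose A-edges land inside S
  let Bad : Finset (Fin N) → Finset (Fin M) → Finset (Fin N → Fin D → Fin M) :=
    fun A S => Fintype.piFinset (fun a =>
      if a ∈ A then Fintype.piFinset (fun _ : Fin D => S) else Finset.univ)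
  have hBadcard : ∀ A : Finset (Fin N), ∀ S : Finset (Fin M), A.card = K →
      (Bad A S).card = (S.card ^ D) ^ K * (M ^ D) ^ (N - K) := by
    intro A S hA
    rw [show (Bad A S).card = ∏ a : Fin N, (if a ∈ A then
        Fintype.piFinset (fun _ : Fin D => S) else (Finset.univ : Finset (Fin D → Fin M))).card
      from Fintype.card_piFinset _]
    rw [← Finset.prod_mul_prod_compl A]
    have e1 : ∀ a ∈ A, (if a ∈ A then Fintype.piFinset (fun _ : Fin D => S)
        else (Finset.univ : Finset (Fin D → Fin M))).card = S.card ^ D := by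
      intro a ha
      rw [if_pos ha, Fintype.card_piFinset]
      simp
    have e2 : ∀ a ∈ Aᶜ, (if a ∈ A then Fintype.piFinset (fun _ : Fin D => S)
        else (Finset.univ : Finset (Fin D → Fin M))).card = M ^ D := by
      intro a ha
      rw [if_neg (Finset.mem_compl.1 ha)]
      simp [Finset.card_univ]
    rw [Finset.prod_congr rfl e1, Finset.prod_congr rfl e2, Finset.prod_const,
      Finset.prod_const, hA, Finset.card_compl, Fintype.card_fin, hA]
  -- every graph is bad for some A, S
  have hcover : (Finset.univ : Finset (Fin N → Fin D → Fin M)) ⊆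
      (Finset.powersetCard K (Finset.univ : Finset (Fin N))).biUnion (fun A =>
        (Finset.powersetCard (M - t) (Finset.univ : Finset (Fin M))).biUnion
          (fun S => Bad A S)) := by
    intro G _
    obtain ⟨A, hAK, hAbad⟩ := hcon G
    obtain ⟨A', hA'sub, hA'card⟩ := Finset.exists_subset_card_eq hAK
    set Γ := A'.biUnion (fun a => Finset.image (G a) Finset.univ) with hΓ
    have hΓsub : Γ ⊆ A.biUnion (fun a => Finset.image (G a) Finset.univ) :=
      Finset.biUnion_subset_biUnion_of_subset_left _ hA'sub
    have hΓcard : (Γ.card : ℝ) < (1 - ε) * M :=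
      lt_of_le_of_lt (by exact_mod_cast Finset.card_le_card hΓsub) hAbad
    have hΓle : Γ.card ≤ M - t := by
      have htfloor : (t:ℝ) = (⌊ε * (M:ℝ)⌋₊ : ℝ) + 1 := by rw [ht]; push_cast; ring
      have h3 : ((Γ.card + t : ℕ) : ℝ) < ((M + 1 : ℕ) : ℝ) := by
        push_cast
        nlinarith [hΓcard, htR', htfloor]
      have h4 : Γ.card + t < M + 1 := by exact_mod_cast h3
      omega
    obtain ⟨S, hΓS, hScard⟩ := Finset.exists_superset_card_eq hΓle
      (by simp only [Fintype.card_fin]; omega)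
    refine Finset.mem_biUnion.2 ⟨A', ?_, Finset.mem_biUnion.2 ⟨S, ?_, ?_⟩⟩
    · exact Finset.mem_powersetCard.2 ⟨Finset.subset_univ _, hA'card⟩
    · exact Finset.mem_powersetCard.2 ⟨Finset.subset_univ _, hScard⟩
    · refine Fintype.mem_piFinset.2 (fun a => ?_)
      by_cases ha : a ∈ A'
      · rw [if_pos ha]
        exact Fintype.mem_piFinset.2 (fun j => hΓS (Finset.mem_biUnion.2
          ⟨a, ha, Finset.mem_image.2 ⟨j, Finset.mem_univ _, rfl⟩⟩))
      · rw [if_neg ha]; exact Finset.mem_univ _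
  -- counting
  have hcount : (M ^ D) ^ N ≤
      N.choose K * (M.choose (M - t) * (((M - t) ^ D) ^ K * (M ^ D) ^ (N - K))) := by
    calc (M ^ D) ^ N = (Finset.univ : Finset (Fin N → Fin D → Fin M)).card := by
          simp [Finset.card_univ]
      _ ≤ ((Finset.powersetCard K (Finset.univ : Finset (Fin N))).biUnion (fun A =>
            (Finset.powersetCard (M - t) (Finset.univ : Finset (Fin M))).biUnion
              (fun S => Bad A S))).card := Finset.card_le_card hcover
      _ ≤ ∑ A ∈ Finset.powersetCard K (Finset.univ : Finset (Fin N)),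
            ((Finset.powersetCard (M - t) (Finset.univ : Finset (Fin M))).biUnion
              (fun S => Bad A S)).card := Finset.card_biUnion_le
      _ ≤ ∑ A ∈ Finset.powersetCard K (Finset.univ : Finset (Fin N)),
            ∑ S ∈ Finset.powersetCard (M - t) (Finset.univ : Finset (Fin M)),
              (Bad A S).card := Finset.sum_le_sum (fun A _ => Finset.card_biUnion_le)
      _ = ∑ A ∈ Finset.powersetCard K (Finset.univ : Finset (Fin N)),
            ∑ S ∈ Finset.powersetCard (M - t) (Finset.univ : Finset (Fin M)),
              (((M - t) ^ D) ^ K * (M ^ D) ^ (N - K)) := by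
          refine Finset.sum_congr rfl (fun A hA => Finset.sum_congr rfl (fun S hS => ?_))
          rw [hBadcard A S (Finset.mem_powersetCard.1 hA).2,
            (Finset.mem_powersetCard.1 hS).2]
      _ = N.choose K * (M.choose (M - t) * (((M - t) ^ D) ^ K * (M ^ D) ^ (N - K))) := by
          rw [Finset.sum_const, Finset.sum_const, Finset.card_powersetCard,
            Finset.card_powersetCard, Finset.card_univ, Finset.card_univ,
            Fintype.card_fin, Fintype.card_fin, smul_eq_mul, smul_eq_mul]
  -- pass to ℝ and cancel
  have hMt : ((M - t : ℕ) : ℝ) = (M:ℝ) - t := by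
    rw [Nat.cast_sub htM]
  have hcastN : ((M:ℝ) ^ D) ^ N ≤ (N.choose K : ℝ) * ((M.choose (M - t) : ℝ) *
      ((((M:ℝ) - t) ^ D) ^ K * ((M:ℝ) ^ D) ^ (N - K))) := by
    calc ((M:ℝ)^D)^N = (((M^D)^N : ℕ) : ℝ) := by push_cast; ring
      _ ≤ ((N.choose K * (M.choose (M - t) * (((M - t) ^ D) ^ K * (M ^ D) ^ (N - K))) : ℕ) : ℝ) :=
          Nat.cast_le.2 hcount
      _ = _ := by push_cast [hMt]; ring
  have hsplit : ((M:ℝ) ^ D) ^ N = ((M:ℝ) ^ D) ^ K * ((M:ℝ) ^ D) ^ (N - K) := by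
    rw [← pow_add]; congr 1; omega
  have hposP : (0:ℝ) < ((M:ℝ) ^ D) ^ (N - K) := by positivity
  have hcountR : ((M:ℝ) ^ D) ^ K ≤
      (N.choose K : ℝ) * ((M.choose (M - t) : ℝ) * (((M:ℝ) - t) ^ D) ^ K) := by
    refine (mul_le_mul_iff_of_pos_right hposP).1 ?_
    calc ((M:ℝ)^D)^K * ((M:ℝ)^D)^(N-K)
        = ((M:ℝ)^D)^N := hsplit.symm
      _ ≤ (N.choose K : ℝ) * ((M.choose (M - t) : ℝ) *
            ((((M:ℝ) - t) ^ D) ^ K * ((M:ℝ) ^ D) ^ (N - K))) := hcastN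
      _ = ((N.choose K : ℝ) * ((M.choose (M - t) : ℝ) * (((M:ℝ) - t) ^ D) ^ K))
            * ((M:ℝ)^D)^(N-K) := by ring
  -- bound the RHS by exponentials
  have hCN : (N.choose K : ℝ) ≤ Real.exp (K * (Real.log ((N:ℝ)/K) + 1)) := choose_le_exp N K hK hKN
  have hCM : (M.choose (M - t) : ℝ) ≤ Real.exp (t * (Real.log ((M:ℝ)/t) + 1)) := by
    rw [Nat.choose_symm htM]
    exact choose_le_exp M t htpos htM
  have hbase : (M:ℝ) - t ≤ (M:ℝ) * Real.exp (-(t/M)) := by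
    have h := Real.add_one_le_exp (-(t/M))
    have h2 : (M:ℝ) * (-(t/M) + 1) ≤ (M:ℝ) * Real.exp (-(t/M)) :=
      mul_le_mul_of_nonneg_left h hMR.le
    have h3 : (M:ℝ) * (-(t/M) + 1) = (M:ℝ) - t := by field_simp; ring
    linarith
  have hbasenn : (0:ℝ) ≤ (M:ℝ) - t := by
    have : (t:ℝ) ≤ M := by exact_mod_cast htM
    linarith
  have hpowb : (((M:ℝ) - t) ^ D) ^ K ≤ ((M:ℝ) ^ D) ^ K * Real.exp (-(t/M) * (D * K)) := by
    have h1 : (((M:ℝ) - t) ^ D) ^ K ≤ (((M:ℝ) * Real.exp (-(t/M))) ^ D) ^ K :=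
      pow_le_pow_left₀ (pow_nonneg hbasenn D) (pow_le_pow_left₀ hbasenn hbase D) K
    have h2 : (((M:ℝ) * Real.exp (-(t/M))) ^ D) ^ K
        = ((M:ℝ) ^ D) ^ K * Real.exp (-(t/M) * (D * K)) := by
      calc (((M:ℝ) * Real.exp (-(t/M))) ^ D) ^ K
          = ((M:ℝ)^D)^K * (Real.exp (-(t/M)))^(D*K) := by
            rw [mul_pow, mul_pow, pow_mul]
        _ = ((M:ℝ)^D)^K * Real.exp (-((t:ℝ)/M) * (D*K)) := by
            rw [← Real.exp_nat_mul]; congr 1; push_cast; ring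
    linarith [h1, h2.le, h2.ge]
  have hexp : (K:ℝ) * (Real.log ((N:ℝ)/K) + 1) + t * (Real.log ((M:ℝ)/t) + 1)
      - ((t:ℝ)/M) * (D * K) < 0 :=
    disperser_key_ineq N K M t D ε hKR (by exact_mod_cast hKN) hMR hε hε1 htR hD
  -- combine everything into a contradiction
  have hfinal : ((M:ℝ) ^ D) ^ K ≤
      Real.exp ((K:ℝ) * (Real.log ((N:ℝ)/K) + 1) + t * (Real.log ((M:ℝ)/t) + 1) - (t/M) * (D * K))
        * ((M:ℝ) ^ D) ^ K := by
    calc ((M:ℝ) ^ D) ^ K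
        ≤ (N.choose K : ℝ) * ((M.choose (M - t) : ℝ) * (((M:ℝ) - t) ^ D) ^ K) := hcountR
      _ ≤ Real.exp (K * (Real.log ((N:ℝ)/K) + 1)) * (Real.exp (t * (Real.log ((M:ℝ)/t) + 1))
            * (((M:ℝ) ^ D) ^ K * Real.exp (-(t/M) * (D * K)))) := by
          apply mul_le_mul hCN _ (by positivity) (Real.exp_nonneg _)
          apply mul_le_mul hCM hpowb (by positivity) (Real.exp_nonneg _)
      _ = Real.exp ((K:ℝ) * (Real.log ((N:ℝ)/K) + 1) + t * (Real.log ((M:ℝ)/t) + 1) - (t/M) * (D * K))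
            * ((M:ℝ) ^ D) ^ K := by
          rw [show (-((t:ℝ)/M)) * ((D:ℝ) * K) = -(((t:ℝ)/M) * ((D:ℝ)*K)) by ring,
            Real.exp_neg, Real.exp_sub, Real.exp_add]
          field_simp
  have hMpow : (0:ℝ) < ((M:ℝ) ^ D) ^ K := by positivity
  have : (1:ℝ) ≤ Real.exp ((K:ℝ) * (Real.log ((N:ℝ)/K) + 1) + t * (Real.log ((M:ℝ)/t) + 1)
      - (t/M) * (D * K)) := by
    have h1 : (1:ℝ) * ((M:ℝ)^D)^K ≤ Real.exp ((K:ℝ) * (Real.log ((N:ℝ)/K) + 1)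
        + t * (Real.log ((M:ℝ)/t) + 1) - (t/M) * (D * K)) * ((M:ℝ)^D)^K := by
      rw [one_mul]; exact hfinal
    exact le_of_mul_le_mul_right h1 hMpow
  have := Real.exp_lt_one_iff.2 hexp
  linarith

/-- For all integers `N, M, K` with `1 < K ≤ N`, `M > 0`, and every real `ε > 0`, there is a
bipartite multigraph with left part `[N]`, right part `[M]`, in which every left vertex has
degree exactly `D = ⌈(M/K)(ln(1/ε)+1) + (1/ε)(ln(N/K)+1)⌉` (we represent such a graph by a
function `G : Fin N → Fin D → Fin M` listing the `D` edges of each left vertex), which is a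
`(K, ε)`-disperser: every `A ⊆ [N]` with `|A| ≥ K` has `|Γ(A)| ≥ (1-ε)·M`. -/
theorem disperser_exists (N M K : ℕ) (hK : 1 < K) (hKN : K ≤ N) (hM : 0 < M)
    (ε : ℝ) (hε : 0 < ε) :
    ∃ G : Fin N → Fin (⌈((M : ℝ) / K) * (Real.log (1 / ε) + 1)
        + (1 / ε) * (Real.log ((N : ℝ) / K) + 1)⌉₊) → Fin M,
      ∀ A : Finset (Fin N), K ≤ A.card →
        (1 - ε) * M ≤ ((A.biUnion (fun a => Finset.image (G a) Finset.univ)).card : ℝ) := by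
  by_cases hε1 : ε < 1
  · exact disperser_exists_aux N M K _ (by omega) hKN hM ε hε hε1 (Nat.le_ceil _)
  · push_neg at hε1
    refine ⟨fun _ _ => ⟨0, hM⟩, fun A _ => ?_⟩
    have h1 : (1 - ε) * M ≤ 0 :=
      mul_nonpos_of_nonpos_of_nonneg (by linarith) (Nat.cast_nonneg _)
    exact h1.trans (Nat.cast_nonneg _)
end

section
/- For all integers N, M, K with 1 < K ≤ N and M > 0 and every real ε > 0, there exists a bipartite multigraph G = ([N],[M],E) in which every left vertex has degree exactly D = ⌈max{(M/K)·(ln 2)/ε², (1/ε²)(ln(N/K)+1)}⌉ and which is a (K,ε)-extractor. -/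
open Finset

/-- Number of edges (with multiplicity) from `A` to `B` in the bipartite multigraph
represented by `G : Fin N → Fin D → Fin M`. -/
def edgeCount {N M D : ℕ} (G : Fin N → Fin D → Fin M)
    (A : Finset (Fin N)) (B : Finset (Fin M)) : ℕ :=
  ∑ a ∈ A, (Finset.univ.filter (fun j => G a j ∈ B)).card

section ExtractorAux
open Real

lemma hoeffding_bernoulli (p : ℝ) (hp0 : 0 ≤ p) (hp1 : p ≤ 1) (t : ℝ) :
    (1 - p) * Real.exp (-(t * p)) + p * Real.exp (t * (1 - p)) ≤ Real.exp (t ^ 2 / 8) := by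
  rcases eq_or_lt_of_le hp0 with h0 | h0
  · simp [← h0]
    positivity
  rcases eq_or_lt_of_le hp1 with h1 | h1
  · simp [h1]
    positivity
  set q : ℝ := 1 - p with hq_def
  clear_value q
  have hq : 0 < q := by simp [hq_def]; linarith
  have hden : ∀ x : ℝ, 0 < q + p * Real.exp x := fun x => by positivity
  set g : ℝ → ℝ := fun x => Real.log (q + p * Real.exp x) - p * x - x ^ 2 / 8 with hg_def
  set g' : ℝ → ℝ := fun x => p * Real.exp x / (q + p * Real.exp x) - p - x / 4 with hg'_def
  have hden' : ∀ x : ℝ, HasDerivAt (fun y => q + p * Real.exp y) (p * Real.exp x) x := by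
    intro x
    simpa using ((Real.hasDerivAt_exp x).const_mul p).const_add q
  have hg : ∀ x, HasDerivAt g (g' x) x := by
    intro x
    have h1 : HasDerivAt (fun y => Real.log (q + p * Real.exp y))
        (p * Real.exp x / (q + p * Real.exp x)) x := (hden' x).log (ne_of_gt (hden x))
    have h2 : HasDerivAt (fun y : ℝ => p * y) p x := by
      simpa using (hasDerivAt_id x).const_mul p
    have h3 : HasDerivAt (fun y : ℝ => y ^ 2 / 8) (x / 4) x := by
      have := (hasDerivAt_pow 2 x).div_const 8
      exact this.congr_deriv (by rw [show (2:ℕ) - 1 = 1 from rfl]; push_cast; ring)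
    exact (h1.sub h2).sub h3
  have hg' : ∀ x, HasDerivAt g'
      (p * q * Real.exp x / (q + p * Real.exp x) ^ 2 - 1 / 4) x := by
    intro x
    have h1 : HasDerivAt (fun y => p * Real.exp y / (q + p * Real.exp y))
        ((p * Real.exp x * (q + p * Real.exp x) - p * Real.exp x * (p * Real.exp x)) /
          (q + p * Real.exp x) ^ 2) x :=
      ((Real.hasDerivAt_exp x).const_mul p).div (hden' x) (ne_of_gt (hden x))
    have h1' : HasDerivAt (fun y => p * Real.exp y / (q + p * Real.exp y))
        (p * q * Real.exp x / (q + p * Real.exp x) ^ 2) x := by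
      convert h1 using 1; ring
    have h3 : HasDerivAt (fun y : ℝ => y / 4) (1 / 4) x := by
      simpa using (hasDerivAt_id x).div_const 4
    exact (h1'.sub_const p).sub h3
  have hg'nonpos : ∀ x, p * q * Real.exp x / (q + p * Real.exp x) ^ 2 - 1 / 4 ≤ 0 := by
    intro x
    have he : 0 < Real.exp x := Real.exp_pos x
    have hsq : 0 ≤ (q - p * Real.exp x) ^ 2 := sq_nonneg _
    rw [sub_nonpos, div_le_iff₀ (by positivity)]
    have expand : 1/4 * (q + p * Real.exp x) ^ 2 - p * q * Real.exp x
        = 1/4 * (q - p * Real.exp x) ^ 2 := by ring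
    linarith [hsq]
  have hg'0 : g' 0 = 0 := by
    simp [hg'_def, hq_def]
  -- g' is antitone
  have hanti : Antitone g' := by
    apply antitone_of_deriv_nonpos
    · intro x; exact (hg' x).differentiableAt
    · intro x; rw [(hg' x).deriv]; exact hg'nonpos x
  have hdiff : Differentiable ℝ g := fun y => (hg y).differentiableAt
  have hg0 : g 0 = 0 := by
    simp [hg_def, hq_def]
  have hgle : ∀ x, g x ≤ 0 := by
    intro x
    rcases le_total 0 x with hx | hx
    · have : AntitoneOn g (Set.Ici 0) := by
        apply antitoneOn_of_deriv_nonpos (convex_Ici 0)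
        · exact hdiff.continuous.continuousOn
        · intro y hy; exact (hg y).differentiableAt.differentiableWithinAt
        · intro y hy
          rw [(hg y).deriv]
          have : g' y ≤ g' 0 := hanti (le_of_lt (by simpa using hy))
          rw [hg'0] at this; exact this
      have := this (Set.self_mem_Ici) (Set.mem_Ici.2 hx) hx
      rwa [hg0] at this
    · have : MonotoneOn g (Set.Iic 0) := by
        apply monotoneOn_of_deriv_nonneg (convex_Iic 0)
        · exact hdiff.continuous.continuousOn
        · intro y hy; exact (hg y).differentiableAt.differentiableWithinAt
        · intro y hy
          rw [(hg y).deriv]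
          have : g' 0 ≤ g' y := hanti (le_of_lt (by simpa using hy))
          rw [hg'0] at this; exact this
      have := this (Set.mem_Iic.2 hx) (Set.self_mem_Iic) hx
      rwa [hg0] at this
  have key := hgle t
  have e1 : Real.exp (-(t*p)) * Real.exp (t*p) = 1 := by rw [← Real.exp_add]; simp
  have : (1 - p) * Real.exp (-(t * p)) + p * Real.exp (t * (1 - p))
      = Real.exp (Real.log (q + p * Real.exp t) - p * t) := by
    rw [Real.exp_sub, Real.exp_log (hden t), eq_div_iff (Real.exp_ne_zero _),
      show t * (1 - p) = t + -(t*p) by ring, Real.exp_add, hq_def,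
      show p * t = t * p by ring]
    linear_combination (1 - p + p * Real.exp t) * e1
  rw [hq_def]
  rw [this]
  apply Real.exp_le_exp.2
  have : Real.log (q + p * Real.exp t) - p * t - t ^ 2 / 8 ≤ 0 := key
  linarith

variable {N D M : ℕ}

def hits (f : Fin N × Fin D → Fin M) (A : Finset (Fin N)) (B : Finset (Fin M)) : ℕ :=
  ∑ i : Fin N × Fin D, if i.1 ∈ A ∧ f i ∈ B then 1 else 0

lemma card_filter_fst (A : Finset (Fin N)) :
    ((univ : Finset (Fin N × Fin D)).filter (fun i => i.1 ∈ A)).card = A.card * D := by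
  have : (univ : Finset (Fin N × Fin D)).filter (fun i => i.1 ∈ A) = A ×ˢ univ := by
    ext i; simp
  rw [this, Finset.card_product, Finset.card_univ, Fintype.card_fin]

lemma sum_exp_le (A : Finset (Fin N)) (B : Finset (Fin M)) (hM : 0 < M) (s : ℝ) :
    ∑ f : Fin N × Fin D → Fin M,
      Real.exp (s * ((hits f A B : ℝ) - ((A.card * D : ℕ) : ℝ) * ((B.card : ℝ) / M)))
      ≤ (M : ℝ) ^ (N * D) * Real.exp (((A.card * D : ℕ) : ℝ) * s ^ 2 / 8) := by
  classical
  set p : ℝ := (B.card : ℝ) / M with hp_def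
  have hMR : (0:ℝ) < M := by exact_mod_cast hM
  have hb : B.card ≤ M := by simpa using Finset.card_le_univ B
  have hp0 : 0 ≤ p := by positivity
  have hp1 : p ≤ 1 := by
    rw [hp_def, div_le_one hMR]; exact_mod_cast hb
  set w : (Fin N × Fin D) → Fin M → ℝ := fun i x =>
    Real.exp (if i.1 ∈ A then s * ((if x ∈ B then (1:ℝ) else 0) - p) else 0) with hw_def
  have key1 : ∀ f : Fin N × Fin D → Fin M,
      Real.exp (s * ((hits f A B : ℝ) - ((A.card * D : ℕ) : ℝ) * p)) = ∏ i, w i (f i) := by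
    intro f
    have hsum : ∑ i : Fin N × Fin D,
        (if i.1 ∈ A then s * ((if f i ∈ B then (1:ℝ) else 0) - p) else 0)
        = s * ((hits f A B : ℝ) - ((A.card * D : ℕ) : ℝ) * p) := by
      have e1 : ∀ i : Fin N × Fin D,
          (if i.1 ∈ A then s * ((if f i ∈ B then (1:ℝ) else 0) - p) else 0)
          = s * ((if i.1 ∈ A ∧ f i ∈ B then (1:ℝ) else 0) - (if i.1 ∈ A then p else 0)) := by
        intro i; by_cases h1 : i.1 ∈ A <;> by_cases h2 : f i ∈ B <;> simp [h1, h2]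
      rw [Finset.sum_congr rfl (fun i _ => e1 i), ← Finset.mul_sum]
      congr 1
      rw [Finset.sum_sub_distrib]
      congr 1
      · rw [hits]; push_cast; rfl
      · rw [Finset.sum_ite, Finset.sum_const, Finset.sum_const, card_filter_fst]
        push_cast
        simp
    rw [hw_def]
    simp only
    rw [← Real.exp_sum, hsum]
  calc ∑ f : Fin N × Fin D → Fin M,
      Real.exp (s * ((hits f A B : ℝ) - ((A.card * D : ℕ) : ℝ) * p))
      = ∑ f : Fin N × Fin D → Fin M, ∏ i, w i (f i) :=
        Finset.sum_congr rfl (fun f _ => key1 f)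
    _ = ∏ i : Fin N × Fin D, ∑ x : Fin M, w i x := by
        rw [Finset.prod_univ_sum, Fintype.piFinset_univ]
    _ ≤ (M : ℝ) ^ (N * D) * Real.exp (((A.card * D : ℕ) : ℝ) * s ^ 2 / 8) := by
        set H : ℝ := (1 - p) * Real.exp (-(s * p)) + p * Real.exp (s * (1 - p)) with hH_def
        have hH0 : 0 ≤ H := by
          apply add_nonneg
          · exact mul_nonneg (by linarith) (Real.exp_pos _).le
          · exact mul_nonneg hp0 (Real.exp_pos _).le
        have hHle : H ≤ Real.exp (s ^ 2 / 8) := hoeffding_bernoulli p hp0 hp1 s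
        have hval : ∀ i : Fin N × Fin D, (∑ x : Fin M, w i x)
            = if i.1 ∈ A then (M : ℝ) * H else (M : ℝ) := by
          intro i
          by_cases h1 : i.1 ∈ A
          · simp only [hw_def, h1, if_true]
            have e2 : ∀ x : Fin M, Real.exp (s * ((if x ∈ B then (1:ℝ) else 0) - p))
                = if x ∈ B then Real.exp (s * (1 - p)) else Real.exp (-(s * p)) := by
              intro x; by_cases h2 : x ∈ B
              · simp only [if_pos h2]
              · simp only [if_neg h2]; congr 1; ring
            rw [Finset.sum_congr rfl (fun x _ => e2 x), Finset.sum_ite,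
              Finset.sum_const, Finset.sum_const]
            have hfB : (univ.filter (fun x : Fin M => x ∈ B)) = B := by ext x; simp
            have hfB' : (univ.filter (fun x : Fin M => ¬ x ∈ B)).card = M - B.card := by
              have := Finset.card_filter_add_card_filter_not
                (s := (univ : Finset (Fin M))) (p := fun x => x ∈ B)
              rw [hfB] at this
              simp only [Finset.card_univ, Fintype.card_fin] at this
              omega
            rw [hfB, hfB']
            rw [hH_def, hp_def]
            push_cast [Nat.cast_sub hb]
            field_simp
            rw [nsmul_eq_mul, nsmul_eq_mul, Nat.cast_sub hb]
            ring
          · simp [hw_def, h1]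
        rw [Finset.prod_congr rfl (fun i _ => hval i), Finset.prod_ite,
          Finset.prod_const, Finset.prod_const, card_filter_fst]
        have hcard' : (univ.filter (fun i : Fin N × Fin D => ¬ i.1 ∈ A)).card
            = N * D - A.card * D := by
          have := Finset.card_filter_add_card_filter_not
            (s := (univ : Finset (Fin N × Fin D))) (p := fun i => i.1 ∈ A)
          rw [card_filter_fst] at this
          simp only [Finset.card_univ, Fintype.card_prod, Fintype.card_fin] at this
          omega
        rw [hcard']
        have hle : A.card * D ≤ N * D :=
          Nat.mul_le_mul_right D (by simpa using Finset.card_le_univ A)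
        calc ((M:ℝ) * H) ^ (A.card * D) * (M:ℝ) ^ (N * D - A.card * D)
            ≤ ((M:ℝ) * Real.exp (s ^ 2 / 8)) ^ (A.card * D) * (M:ℝ) ^ (N * D - A.card * D) := by
              apply mul_le_mul_of_nonneg_right _ (by positivity)
              exact pow_le_pow_left₀ (by positivity)
                (mul_le_mul_of_nonneg_left hHle hMR.le) _
          _ = (M : ℝ) ^ (N * D) * Real.exp (((A.card * D : ℕ) : ℝ) * s ^ 2 / 8) := by
              rw [mul_pow, ← Real.exp_nat_mul]
              rw [mul_assoc, mul_comm (Real.exp _), ← mul_assoc, ← pow_add]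
              rw [Nat.add_sub_cancel' hle]
              push_cast
              ring_nf

lemma card_bad_le (A : Finset (Fin N)) (B : Finset (Fin M)) (hM : 0 < M) {ε : ℝ} (hε : 0 < ε) :
    (((univ : Finset (Fin N × Fin D → Fin M))).filter
      (fun f => ε * ((A.card * D : ℕ) : ℝ)
        ≤ |(hits f A B : ℝ) - ((A.card * D : ℕ) : ℝ) * ((B.card : ℝ) / M)|)).card
    ≤ 2 * (M : ℝ) ^ (N * D) * Real.exp (-(2 * ((A.card * D : ℕ) : ℝ) * ε ^ 2)) := by
  classical
  set n : ℝ := ((A.card * D : ℕ) : ℝ) with hn_def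
  have hn0 : 0 ≤ n := by positivity
  set p : ℝ := (B.card : ℝ) / M with hp_def
  set X : (Fin N × Fin D → Fin M) → ℝ := fun f => (hits f A B : ℝ) - n * p with hX_def
  set Sp := (univ : Finset (Fin N × Fin D → Fin M)).filter (fun f => ε * n ≤ X f) with hSp
  set Sm := (univ : Finset (Fin N × Fin D → Fin M)).filter (fun f => ε * n ≤ -X f) with hSm
  have hsub : (univ : Finset (Fin N × Fin D → Fin M)).filter (fun f => ε * n ≤ |X f|)
      ⊆ Sp ∪ Sm := by
    intro f hf
    simp only [Finset.mem_filter, Finset.mem_univ, true_and] at hf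
    rcases le_abs.1 hf with h | h
    · exact Finset.mem_union_left _ (by simp [hSp, h])
    · exact Finset.mem_union_right _ (by simp [hSm, h])
  have boundp : (Sp.card : ℝ) ≤ (M : ℝ) ^ (N * D) * Real.exp (-(2 * n * ε ^ 2)) := by
    have h1 : (Sp.card : ℝ) * Real.exp (4 * ε * (ε * n)) ≤ ∑ f ∈ Sp, Real.exp (4 * ε * X f) := by
      rw [← nsmul_eq_mul]
      apply Finset.card_nsmul_le_sum
      intro f hf
      apply Real.exp_le_exp.2
      apply mul_le_mul_of_nonneg_left _ (by positivity)
      simp only [hSp, Finset.mem_filter] at hf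
      exact hf.2
    have h2 : ∑ f ∈ Sp, Real.exp (4 * ε * X f)
        ≤ ∑ f : Fin N × Fin D → Fin M, Real.exp (4 * ε * X f) :=
      Finset.sum_le_sum_of_subset_of_nonneg (Finset.subset_univ _)
        (fun f _ _ => (Real.exp_pos _).le)
    have h3 : ∑ f : Fin N × Fin D → Fin M, Real.exp (4 * ε * X f)
        ≤ (M : ℝ) ^ (N * D) * Real.exp (n * (4 * ε) ^ 2 / 8) := sum_exp_le A B hM (4 * ε)
    have h4 : (Sp.card : ℝ) ≤ ((M : ℝ) ^ (N * D) * Real.exp (n * (4 * ε) ^ 2 / 8))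
        / Real.exp (4 * ε * (ε * n)) := by
      rw [le_div_iff₀ (Real.exp_pos _)]
      linarith
    calc (Sp.card : ℝ) ≤ _ := h4
      _ = (M : ℝ) ^ (N * D) * Real.exp (-(2 * n * ε ^ 2)) := by
          rw [mul_div_assoc, ← Real.exp_sub]
          congr 2
          ring
  have boundm : (Sm.card : ℝ) ≤ (M : ℝ) ^ (N * D) * Real.exp (-(2 * n * ε ^ 2)) := by
    have h1 : (Sm.card : ℝ) * Real.exp (4 * ε * (ε * n)) ≤ ∑ f ∈ Sm, Real.exp (-(4 * ε) * X f) := by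
      rw [← nsmul_eq_mul]
      apply Finset.card_nsmul_le_sum
      intro f hf
      apply Real.exp_le_exp.2
      simp only [hSm, Finset.mem_filter] at hf
      have := mul_le_mul_of_nonneg_left hf.2 (show (0:ℝ) ≤ 4 * ε by positivity)
      calc 4 * ε * (ε * n) ≤ 4 * ε * (-X f) := this
        _ = -(4 * ε) * X f := by ring
    have h2 : ∑ f ∈ Sm, Real.exp (-(4 * ε) * X f)
        ≤ ∑ f : Fin N × Fin D → Fin M, Real.exp (-(4 * ε) * X f) :=
      Finset.sum_le_sum_of_subset_of_nonneg (Finset.subset_univ _)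
        (fun f _ _ => (Real.exp_pos _).le)
    have h3 : ∑ f : Fin N × Fin D → Fin M, Real.exp (-(4 * ε) * X f)
        ≤ (M : ℝ) ^ (N * D) * Real.exp (n * (-(4 * ε)) ^ 2 / 8) := sum_exp_le A B hM (-(4 * ε))
    have h4 : (Sm.card : ℝ) ≤ ((M : ℝ) ^ (N * D) * Real.exp (n * (-(4 * ε)) ^ 2 / 8))
        / Real.exp (4 * ε * (ε * n)) := by
      rw [le_div_iff₀ (Real.exp_pos _)]
      linarith
    calc (Sm.card : ℝ) ≤ _ := h4
      _ = (M : ℝ) ^ (N * D) * Real.exp (-(2 * n * ε ^ 2)) := by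
          rw [mul_div_assoc, ← Real.exp_sub]
          congr 2
          ring
  have hcard : ((univ : Finset (Fin N × Fin D → Fin M)).filter
      (fun f => ε * n ≤ |X f|)).card ≤ Sp.card + Sm.card :=
    (Finset.card_le_card hsub).trans (Finset.card_union_le _ _)
  calc (((univ : Finset (Fin N × Fin D → Fin M)).filter
      (fun f => ε * n ≤ |X f|)).card : ℝ)
      ≤ (Sp.card : ℝ) + (Sm.card : ℝ) := by exact_mod_cast hcard
    _ ≤ 2 * (M : ℝ) ^ (N * D) * Real.exp (-(2 * n * ε ^ 2)) := by linarith

lemma pow_self_le_factorial_mul (K : ℕ) (hK : 1 ≤ K) :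
    ((K : ℝ)) ^ K ≤ (K.factorial : ℝ) * Real.exp ((K : ℝ) - 1) := by
  induction K, hK using Nat.le_induction with
  | base => simp
  | succ k hk1 ih =>
    have hkR : (0:ℝ) < k := by exact_mod_cast hk1
    have step : ((k:ℝ) + 1) ^ k ≤ (k:ℝ) ^ k * Real.exp 1 := by
      have h1 : (1 : ℝ) + 1 / k ≤ Real.exp (1 / k) := by
        have := Real.add_one_le_exp (1 / (k:ℝ))
        linarith
      have h2 : ((1:ℝ) + 1 / k) ^ k ≤ Real.exp (1 / k) ^ k :=
        pow_le_pow_left₀ (by positivity) h1 k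
      have h3 : Real.exp (1 / (k:ℝ)) ^ k = Real.exp 1 := by
        rw [← Real.exp_nat_mul]
        congr 1
        field_simp
      have h4 : ((k:ℝ) + 1) ^ k = (k:ℝ) ^ k * ((1:ℝ) + 1/k) ^ k := by
        rw [← mul_pow]
        congr 1
        field_simp
      calc ((k:ℝ) + 1) ^ k = (k:ℝ) ^ k * ((1:ℝ) + 1/k) ^ k := h4
        _ ≤ (k:ℝ) ^ k * Real.exp (1 / k) ^ k :=
            mul_le_mul_of_nonneg_left h2 (by positivity)
        _ = (k:ℝ) ^ k * Real.exp 1 := by rw [h3]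
    have hfac : ((k+1).factorial : ℝ) = ((k:ℝ) + 1) * k.factorial := by
      rw [Nat.factorial_succ]; push_cast; ring
    push_cast
    calc ((k:ℝ) + 1) ^ (k + 1) = ((k:ℝ) + 1) * ((k:ℝ) + 1) ^ k := by ring
      _ ≤ ((k:ℝ) + 1) * ((k:ℝ) ^ k * Real.exp 1) :=
          mul_le_mul_of_nonneg_left step (by positivity)
      _ ≤ ((k:ℝ) + 1) * (((k.factorial : ℝ) * Real.exp ((k:ℝ) - 1)) * Real.exp 1) := by
          apply mul_le_mul_of_nonneg_left _ (by positivity)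
          exact mul_le_mul_of_nonneg_right ih (Real.exp_pos _).le
      _ = ((k+1).factorial : ℝ) * Real.exp (((k:ℝ) + 1) - 1) := by
          rw [hfac, show ((k:ℝ) + 1) - 1 = ((k:ℝ) - 1) + 1 by ring, Real.exp_add]
          ring
  
lemma key_lt (N M K : ℕ) (Dr : ℝ) (hK : 1 ≤ K) (hKN : K ≤ N) (hM : 0 < M)
    {ε : ℝ} (hε : 0 < ε)
    (hD1 : ((M : ℝ) / K) * (Real.log 2 / ε ^ 2) ≤ Dr)
    (hD2 : (1 / ε ^ 2) * (Real.log ((N : ℝ) / K) + 1) ≤ Dr) :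
    2 * (N.choose K : ℝ) * 2 ^ M * Real.exp (-(2 * ((K : ℝ) * Dr) * ε ^ 2)) < 1 := by
  have hKR : (0:ℝ) < K := by exact_mod_cast hK
  have hNR : (0:ℝ) < N := by exact_mod_cast (hK.trans hKN)
  have hMR : (0:ℝ) < M := by exact_mod_cast hM
  have hNK : (1:ℝ) ≤ (N:ℝ) / K := by
    rw [le_div_iff₀ hKR]; simpa using (by exact_mod_cast hKN : (K:ℝ) ≤ N)
  have hlogNK : 0 ≤ Real.log ((N:ℝ) / K) := Real.log_nonneg hNK
  -- K * Dr * ε^2 ≥ M * log 2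
  have e1 : (M : ℝ) * Real.log 2 ≤ (K : ℝ) * Dr * ε ^ 2 := by
    have := mul_le_mul_of_nonneg_left hD1 (le_of_lt (show (0:ℝ) < K * ε ^ 2 by positivity))
    calc (M : ℝ) * Real.log 2 = (K * ε ^ 2) * (((M : ℝ) / K) * (Real.log 2 / ε ^ 2)) := by
          field_simp
      _ ≤ (K * ε ^ 2) * Dr := this
      _ = (K : ℝ) * Dr * ε ^ 2 := by ring
  have e2 : (K : ℝ) * (Real.log ((N:ℝ) / K) + 1) ≤ (K : ℝ) * Dr * ε ^ 2 := by
    have := mul_le_mul_of_nonneg_left hD2 (le_of_lt (show (0:ℝ) < K * ε ^ 2 by positivity))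
    calc (K : ℝ) * (Real.log ((N:ℝ) / K) + 1)
        = (K * ε ^ 2) * ((1 / ε ^ 2) * (Real.log ((N:ℝ) / K) + 1)) := by field_simp
      _ ≤ (K * ε ^ 2) * Dr := this
      _ = (K : ℝ) * Dr * ε ^ 2 := by ring
  have hexp : Real.exp (-(2 * ((K : ℝ) * Dr) * ε ^ 2))
      ≤ Real.exp (-((M : ℝ) * Real.log 2 + (K : ℝ) * Real.log ((N:ℝ)/K) + K)) := by
    apply Real.exp_le_exp.2
    nlinarith [e1, e2]
  have hexp_eq : Real.exp (-((M : ℝ) * Real.log 2 + (K : ℝ) * Real.log ((N:ℝ)/K) + K))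
      = (1 / 2 ^ M) * ((K:ℝ)/N) ^ K * Real.exp (-(K:ℝ)) := by
    rw [show -((M : ℝ) * Real.log 2 + (K : ℝ) * Real.log ((N:ℝ)/K) + K)
        = -((M:ℝ) * Real.log 2) + (-((K:ℝ) * Real.log ((N:ℝ)/K))) + (-(K:ℝ)) by ring]
    rw [Real.exp_add, Real.exp_add]
    congr 2
    · rw [Real.exp_neg, Real.exp_nat_mul, Real.exp_log (by norm_num : (0:ℝ) < 2)]
      rw [one_div]
    · rw [Real.exp_neg, Real.exp_nat_mul, Real.exp_log (by positivity : (0:ℝ) < (N:ℝ)/K)]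
      rw [← inv_pow, inv_div]
  -- choose bound
  have hchoose : (N.choose K : ℝ) ≤ (N:ℝ) ^ K / K.factorial := Nat.choose_le_pow_div K N
  have hfact : ((K:ℝ)) ^ K ≤ (K.factorial : ℝ) * Real.exp ((K : ℝ) - 1) :=
    pow_self_le_factorial_mul K hK
  have hfacpos : (0:ℝ) < K.factorial := by exact_mod_cast K.factorial_pos
  -- 2 * choose * (K/N)^K * exp(-K) ≤ 2/e < 1
  have hmain : 2 * (N.choose K : ℝ) * ((K:ℝ)/N) ^ K * Real.exp (-(K:ℝ)) < 1 := by
    have h5 : (N.choose K : ℝ) * ((K:ℝ)/N) ^ K ≤ Real.exp ((K:ℝ) - 1) := by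
      calc (N.choose K : ℝ) * ((K:ℝ)/N) ^ K ≤ ((N:ℝ) ^ K / K.factorial) * ((K:ℝ)/N) ^ K := by
            apply mul_le_mul_of_nonneg_right hchoose (by positivity)
        _ = (K:ℝ) ^ K / K.factorial := by
            rw [div_pow]
            field_simp
        _ ≤ Real.exp ((K:ℝ) - 1) := by
            rw [div_le_iff₀ hfacpos]
            linarith [hfact]
    have h6 : 2 * (N.choose K : ℝ) * ((K:ℝ)/N) ^ K * Real.exp (-(K:ℝ))
        ≤ 2 * Real.exp ((K:ℝ) - 1) * Real.exp (-(K:ℝ)) := by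
      have := mul_le_mul_of_nonneg_left h5 (show (0:ℝ) ≤ 2 by norm_num)
      have h7 := mul_le_mul_of_nonneg_right this (Real.exp_pos (-(K:ℝ))).le
      calc 2 * (N.choose K : ℝ) * ((K:ℝ)/N) ^ K * Real.exp (-(K:ℝ))
          = 2 * ((N.choose K : ℝ) * ((K:ℝ)/N) ^ K) * Real.exp (-(K:ℝ)) := by ring
        _ ≤ 2 * Real.exp ((K:ℝ) - 1) * Real.exp (-(K:ℝ)) := h7
    have h8 : 2 * Real.exp ((K:ℝ) - 1) * Real.exp (-(K:ℝ)) = 2 * Real.exp (-1) := by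
      rw [mul_assoc, ← Real.exp_add]
      ring_nf
    have h9 : 2 * Real.exp (-1:ℝ) < 1 := by
      rw [Real.exp_neg]
      rw [show (2:ℝ) * (Real.exp 1)⁻¹ = 2 / Real.exp 1 by ring]
      rw [div_lt_one (Real.exp_pos 1)]
      linarith [Real.add_one_le_exp (1:ℝ), Real.exp_one_gt_d9]
    calc 2 * (N.choose K : ℝ) * ((K:ℝ)/N) ^ K * Real.exp (-(K:ℝ)) ≤ 2 * Real.exp (-1) := by
          rw [← h8]; exact h6
      _ < 1 := h9
  calc 2 * (N.choose K : ℝ) * 2 ^ M * Real.exp (-(2 * ((K : ℝ) * Dr) * ε ^ 2))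
      ≤ 2 * (N.choose K : ℝ) * 2 ^ M *
        ((1 / 2 ^ M) * ((K:ℝ)/N) ^ K * Real.exp (-(K:ℝ))) := by
        apply mul_le_mul_of_nonneg_left _ (by positivity)
        rw [← hexp_eq]; exact hexp
    _ = 2 * (N.choose K : ℝ) * ((K:ℝ)/N) ^ K * Real.exp (-(K:ℝ)) := by
        field_simp
    _ < 1 := hmain

lemma exists_good (N D M K : ℕ) (hM : 0 < M) {ε : ℝ} (hε : 0 < ε)
    (hlt : 2 * (N.choose K : ℝ) * 2 ^ M *
      Real.exp (-(2 * ((K * D : ℕ) : ℝ) * ε ^ 2)) < 1) :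
    ∃ f : Fin N × Fin D → Fin M, ∀ A : Finset (Fin N), A.card = K → ∀ B : Finset (Fin M),
      |(hits f A B : ℝ) - ((A.card * D : ℕ) : ℝ) * ((B.card : ℝ) / M)|
        < ε * ((A.card * D : ℕ) : ℝ) := by
  classical
  by_contra hcon
  push_neg at hcon
  set Bad : Finset (Fin N) × Finset (Fin M) → Finset (Fin N × Fin D → Fin M) :=
    fun AB => (univ : Finset (Fin N × Fin D → Fin M)).filter
      (fun f => ε * ((AB.1.card * D : ℕ) : ℝ)
        ≤ |(hits f AB.1 AB.2 : ℝ) - ((AB.1.card * D : ℕ) : ℝ) * ((AB.2.card : ℝ) / M)|)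
    with hBad
  set P : Finset (Finset (Fin N) × Finset (Fin M)) :=
    (univ.powersetCard K) ×ˢ (univ : Finset (Finset (Fin M))) with hP
  have hcover : (univ : Finset (Fin N × Fin D → Fin M)) ⊆ P.biUnion Bad := by
    intro f _
    obtain ⟨A, hA, B, hB⟩ := hcon f
    apply Finset.mem_biUnion.2
    refine ⟨(A, B), ?_, ?_⟩
    · rw [hP, Finset.mem_product]
      exact ⟨Finset.mem_powersetCard_univ.2 hA, Finset.mem_univ _⟩
    · rw [hBad]
      simp only [Finset.mem_filter, Finset.mem_univ, true_and]
      exact hB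
  have hPcard : P.card = N.choose K * 2 ^ M := by
    rw [hP, Finset.card_product, Finset.card_powersetCard, Finset.card_univ, Fintype.card_fin,
      Finset.card_univ, Fintype.card_finset, Fintype.card_fin]
  have h1 : (M : ℕ) ^ (N * D) ≤ ∑ AB ∈ P, (Bad AB).card := by
    calc M ^ (N * D) = Fintype.card (Fin N × Fin D → Fin M) := by
          rw [Fintype.card_fun]
          simp [mul_comm]
      _ = (univ : Finset (Fin N × Fin D → Fin M)).card := Finset.card_univ.symm
      _ ≤ (P.biUnion Bad).card := Finset.card_le_card hcover
      _ ≤ ∑ AB ∈ P, (Bad AB).card := Finset.card_biUnion_le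
  have h2 : ∀ AB ∈ P, ((Bad AB).card : ℝ)
      ≤ 2 * (M : ℝ) ^ (N * D) * Real.exp (-(2 * ((K * D : ℕ) : ℝ) * ε ^ 2)) := by
    intro AB hAB
    have hA : AB.1.card = K := by
      rw [hP, Finset.mem_product] at hAB
      exact Finset.mem_powersetCard_univ.1 hAB.1
    rw [hBad, ← hA]
    exact card_bad_le (D := D) AB.1 AB.2 hM hε
  have h3 : ((M : ℝ)) ^ (N * D) ≤ (P.card : ℝ) *
      (2 * (M : ℝ) ^ (N * D) * Real.exp (-(2 * ((K * D : ℕ) : ℝ) * ε ^ 2))) := by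
    calc ((M : ℝ)) ^ (N * D) = ((M ^ (N * D) : ℕ) : ℝ) := by push_cast; ring
      _ ≤ ((∑ AB ∈ P, (Bad AB).card : ℕ) : ℝ) := by exact_mod_cast h1
      _ = ∑ AB ∈ P, ((Bad AB).card : ℝ) := by push_cast; ring
      _ ≤ ∑ AB ∈ P, (2 * (M : ℝ) ^ (N * D) * Real.exp (-(2 * ((K * D : ℕ) : ℝ) * ε ^ 2))) :=
          Finset.sum_le_sum h2
      _ = (P.card : ℝ) * _ := by rw [Finset.sum_const, nsmul_eq_mul]
  have hMpow : (0:ℝ) < (M : ℝ) ^ (N * D) := by positivity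
  have h4 : (P.card : ℝ) * (2 * (M : ℝ) ^ (N * D) *
      Real.exp (-(2 * ((K * D : ℕ) : ℝ) * ε ^ 2)))
      = (2 * (N.choose K : ℝ) * 2 ^ M * Real.exp (-(2 * ((K * D : ℕ) : ℝ) * ε ^ 2)))
        * (M : ℝ) ^ (N * D) := by
    rw [hPcard]
    push_cast
    ring
  rw [h4] at h3
  nlinarith [hlt, hMpow, h3]

lemma count_containing (A : Finset (Fin N)) (a : Fin N) (ha : a ∈ A) (K : ℕ) (hK : 1 ≤ K) :
    ((A.powersetCard K).filter (fun A' => a ∈ A')).card = (A.card - 1).choose (K - 1) := by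
  classical
  have : ((A.powersetCard K).filter (fun A' => a ∈ A')).card
      = ((A.erase a).powersetCard (K - 1)).card := by
    apply Finset.card_bij (fun A' _ => A'.erase a)
    · intro A' hA'
      simp only [Finset.mem_filter, Finset.mem_powersetCard] at hA'
      obtain ⟨⟨hsub, hcard⟩, hmem⟩ := hA'
      rw [Finset.mem_powersetCard]
      exact ⟨Finset.erase_subset_erase a hsub, by rw [Finset.card_erase_of_mem hmem, hcard]⟩
    · intro A1 h1 A2 h2 heq
      simp only [Finset.mem_filter] at h1 h2
      rw [← Finset.insert_erase h1.2, ← Finset.insert_erase h2.2, heq]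
    · intro S hS
      rw [Finset.mem_powersetCard] at hS
      obtain ⟨hsub, hcard⟩ := hS
      have haS : a ∉ S := fun h => Finset.notMem_erase a A (hsub h)
      refine ⟨insert a S, ?_, ?_⟩
      · simp only [Finset.mem_filter, Finset.mem_powersetCard]
        refine ⟨⟨?_, ?_⟩, Finset.mem_insert_self a S⟩
        · exact Finset.insert_subset ha (hsub.trans (Finset.erase_subset a A))
        · rw [Finset.card_insert_of_notMem haS, hcard]
          omega
      · rw [Finset.erase_insert haS]
  rw [this, Finset.card_powersetCard, Finset.card_erase_of_mem ha]

lemma sum_subsets (A : Finset (Fin N)) (K : ℕ) (hK : 1 ≤ K) (g : Fin N → ℕ) :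
    ∑ A' ∈ A.powersetCard K, ∑ a ∈ A', g a = (A.card - 1).choose (K - 1) * ∑ a ∈ A, g a := by
  classical
  have step1 : ∀ A' ∈ A.powersetCard K, ∑ a ∈ A', g a
      = ∑ a ∈ A, if a ∈ A' then g a else 0 := by
    intro A' hA'
    rw [Finset.mem_powersetCard] at hA'
    rw [Finset.sum_ite_mem, Finset.inter_eq_right.2 hA'.1]
  rw [Finset.sum_congr rfl step1, Finset.sum_comm]
  have step2 : ∀ a ∈ A, ∑ A' ∈ A.powersetCard K, (if a ∈ A' then g a else 0)
      = (A.card - 1).choose (K - 1) * g a := by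
    intro a ha
    rw [Finset.sum_ite, Finset.sum_const, Finset.sum_const, smul_zero, add_zero,
      count_containing A a ha K hK, smul_eq_mul]
  rw [Finset.sum_congr rfl step2, ← Finset.mul_sum]

lemma hits_eq_edgeCount (f : Fin N × Fin D → Fin M) (A : Finset (Fin N))
    (B : Finset (Fin M)) : hits f A B = edgeCount (fun a j => f (a, j)) A B := by
  classical
  rw [hits, edgeCount, Fintype.sum_prod_type]
  have e1 : ∀ a : Fin N, ∑ j : Fin D, (if a ∈ A ∧ f (a, j) ∈ B then 1 else 0)
      = if a ∈ A then (Finset.univ.filter (fun j => f (a, j) ∈ B)).card else 0 := by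
    intro a
    by_cases h : a ∈ A
    · rw [Finset.card_filter]
      simp [h]
    · simp [h]
  rw [Finset.sum_congr rfl (fun a _ => e1 a), Finset.sum_ite_mem, Finset.univ_inter]

end ExtractorAux

/-- For all integers `N, M, K` with `1 < K ≤ N`, `M > 0`, and every real `ε > 0`, there is a
bipartite multigraph with left part `[N]`, right part `[M]` and left degree exactly
`D = ⌈max{(M/K)·ln 2/ε², (1/ε²)(ln(N/K)+1)}⌉` which is a `(K, ε)`-extractor: for every
`A ⊆ [N]` with `|A| ≥ K` and every `B ⊆ [M]`, `| |E(A,B)|/(|A|·D) − |B|/M | < ε`. -/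
theorem extractor_graph_exists (N M K : ℕ) (hK : 1 < K) (hKN : K ≤ N) (hM : 0 < M)
    (ε : ℝ) (hε : 0 < ε) :
    ∃ G : Fin N → Fin (⌈max (((M : ℝ) / K) * (Real.log 2 / ε ^ 2))
        ((1 / ε ^ 2) * (Real.log ((N : ℝ) / K) + 1))⌉₊) → Fin M,
      ∀ A : Finset (Fin N), K ≤ A.card → ∀ B : Finset (Fin M),
        |(edgeCount G A B : ℝ) / ((A.card : ℝ) *
            (⌈max (((M : ℝ) / K) * (Real.log 2 / ε ^ 2))
              ((1 / ε ^ 2) * (Real.log ((N : ℝ) / K) + 1))⌉₊ : ℝ))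
          - (B.card : ℝ) / M| < ε := by
  classical
  set Dn : ℕ := ⌈max (((M : ℝ) / K) * (Real.log 2 / ε ^ 2))
      ((1 / ε ^ 2) * (Real.log ((N : ℝ) / K) + 1))⌉₊ with hDn
  have hK1 : 1 ≤ K := hK.le
  have hKR : (0:ℝ) < K := by exact_mod_cast (by omega : 0 < K)
  have hNK1 : (1:ℝ) ≤ (N:ℝ) / K := by
    rw [le_div_iff₀ hKR]
    simpa using (by exact_mod_cast hKN : (K:ℝ) ≤ N)
  have hDnpos : 0 < Dn := by
    rw [hDn]
    apply Nat.ceil_pos.2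
    apply lt_of_lt_of_le _ (le_max_right _ _)
    have hl : 0 ≤ Real.log ((N:ℝ)/K) := Real.log_nonneg hNK1
    positivity
  have hDR : (0:ℝ) < (Dn : ℝ) := by exact_mod_cast hDnpos
  have hD1 : ((M : ℝ) / K) * (Real.log 2 / ε ^ 2) ≤ (Dn : ℝ) :=
    (le_max_left _ _).trans (Nat.le_ceil _)
  have hD2 : (1 / ε ^ 2) * (Real.log ((N : ℝ) / K) + 1) ≤ (Dn : ℝ) :=
    (le_max_right _ _).trans (Nat.le_ceil _)
  have hlt := key_lt N M K (Dn : ℝ) hK1 hKN hM hε hD1 hD2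
  have hcast : ((K * Dn : ℕ) : ℝ) = (K : ℝ) * (Dn : ℝ) := by push_cast; ring
  rw [show (K:ℝ) * (Dn:ℝ) = ((K * Dn : ℕ) : ℝ) from hcast.symm] at hlt
  obtain ⟨f, hf⟩ := exists_good N Dn M K hM hε hlt
  refine ⟨fun a j => f (a, j), ?_⟩
  intro A hA B
  set p : ℝ := (B.card : ℝ) / M with hp
  set E : ℕ := edgeCount (fun a j => f (a, j)) A B with hE
  set m : ℕ := A.card with hm
  set c1 : ℕ := (m - 1).choose (K - 1) with hc1
  set c : ℕ := m.choose K with hc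
  have hmpos : 0 < m := by omega
  have hmR : (0:ℝ) < m := by exact_mod_cast hmpos
  have hc1pos : 0 < c1 := Nat.choose_pos (by omega)
  have hcpos : 0 < c := Nat.choose_pos (by omega)
  have hc1R : (0:ℝ) < (c1:ℝ) := by exact_mod_cast hc1pos
  have hcR : (0:ℝ) < (c:ℝ) := by exact_mod_cast hcpos
  have hid : m * c1 = c * K := by
    have h := Nat.add_one_mul_choose_eq (m - 1) (K - 1)
    have e1 : m - 1 + 1 = m := by omega
    have e2 : K - 1 + 1 = K := by omega
    rw [e1, e2] at h
    rw [hc1, hc]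
    exact h
  have hidR : (m : ℝ) * c1 = (c : ℝ) * K := by exact_mod_cast hid
  have each : ∀ A' ∈ A.powersetCard K,
      |(edgeCount (fun a j => f (a, j)) A' B : ℝ) - ((K * Dn : ℕ) : ℝ) * p|
        < ε * ((K * Dn : ℕ) : ℝ) := by
    intro A' hA'
    have hcard : A'.card = K := (Finset.mem_powersetCard.1 hA').2
    have h := hf A' hcard B
    rw [hits_eq_edgeCount, hcard] at h
    exact h
  have hne : (A.powersetCard K).Nonempty := by
    rw [← Finset.card_pos, Finset.card_powersetCard]
    exact Nat.choose_pos hA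
  have hsumlt : |∑ A' ∈ A.powersetCard K,
      ((edgeCount (fun a j => f (a, j)) A' B : ℝ) - ((K * Dn : ℕ) : ℝ) * p)|
      < (c : ℝ) * (ε * ((K * Dn : ℕ) : ℝ)) := by
    calc |∑ A' ∈ A.powersetCard K,
        ((edgeCount (fun a j => f (a, j)) A' B : ℝ) - ((K * Dn : ℕ) : ℝ) * p)|
        ≤ ∑ A' ∈ A.powersetCard K,
          |(edgeCount (fun a j => f (a, j)) A' B : ℝ) - ((K * Dn : ℕ) : ℝ) * p| :=
          Finset.abs_sum_le_sum_abs _ _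
      _ < ∑ _A' ∈ A.powersetCard K, ε * ((K * Dn : ℕ) : ℝ) :=
          Finset.sum_lt_sum_of_nonempty hne each
      _ = (c : ℝ) * (ε * ((K * Dn : ℕ) : ℝ)) := by
          rw [Finset.sum_const, nsmul_eq_mul, Finset.card_powersetCard]
  have havg : ∑ A' ∈ A.powersetCard K, (edgeCount (fun a j => f (a, j)) A' B : ℝ)
      = (c1 : ℝ) * E := by
    have h := sum_subsets A K (by omega)
      (fun a => (Finset.univ.filter (fun j => f (a, j) ∈ B)).card)
    have h2 : ∑ A' ∈ A.powersetCard K, edgeCount (fun a j => f (a, j)) A' B = c1 * E := h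
    exact_mod_cast congrArg (Nat.cast : ℕ → ℝ) h2
  have hsum2 : ∑ A' ∈ A.powersetCard K,
      ((edgeCount (fun a j => f (a, j)) A' B : ℝ) - ((K * Dn : ℕ) : ℝ) * p)
      = (c1 : ℝ) * E - (c : ℝ) * (((K * Dn : ℕ) : ℝ) * p) := by
    rw [Finset.sum_sub_distrib, havg, Finset.sum_const, nsmul_eq_mul,
      Finset.card_powersetCard]
  rw [hsum2] at hsumlt
  -- final manipulation
  have hden : (0:ℝ) < (c1 : ℝ) * m * Dn := by positivity
  have hmDn : ((m:ℝ) * Dn) ≠ 0 := by positivity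
  have hrw : (E : ℝ) / ((m : ℝ) * Dn) - p
      = ((c1 : ℝ) * E - (c : ℝ) * (((K * Dn : ℕ) : ℝ) * p)) / ((c1 : ℝ) * m * Dn) := by
    rw [eq_div_iff hden.ne', hcast]
    calc ((E:ℝ) / ((m:ℝ) * Dn) - p) * ((c1:ℝ) * m * Dn)
        = (E:ℝ) / ((m:ℝ) * Dn) * ((m:ℝ) * Dn) * c1 - p * ((m:ℝ) * (c1:ℝ)) * Dn := by ring
      _ = (c1:ℝ) * E - (c:ℝ) * ((K:ℝ) * Dn * p) := by
          rw [div_mul_cancel₀ _ hmDn, hidR]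
          ring
  have e : ε * ((c1:ℝ) * m * Dn) = (c:ℝ) * (ε * ((K:ℝ) * Dn)) := by
    linear_combination ε * (Dn:ℝ) * hidR
  have hsumlt' : |(c1 : ℝ) * E - (c : ℝ) * (((K * Dn : ℕ) : ℝ) * p)|
      < ε * ((c1:ℝ) * m * Dn) := by
    rw [hcast] at hsumlt ⊢
    linarith [hsumlt, e]
  rw [hrw, abs_div, abs_of_pos hden, div_lt_iff₀ hden]
  exact hsumlt'
end

section
/- Let N = 2^n, M = 2^m and K = 2^k be powers of two with k ≤ n, and let ε > 0. Then there exists a function F: {0,1}^n × {0,1}^d → {0,1}^m with d = ⌈log₂(max{(M/K)·(ln 2)/ε², (1/ε²)(1 + ln 2 + ln N)})⌉ which is a prefix (k,ε)-extractor. -/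
open Finset

/-- `X` is a probability distribution on the finite type `α`. -/
def IsDist {α : Type*} [Fintype α] (X : α → ℝ) : Prop :=
  (∀ a, 0 ≤ X a) ∧ ∑ a, X a = 1

/-- Statistical distance between two distributions on a finite type. -/
noncomputable def statDist {α : Type*} [Fintype α] (X Y : α → ℝ) : ℝ :=
  (∑ a, |X a - Y a|) / 2

/-- The uniform distribution on a finite type. -/
noncomputable def unif (α : Type*) [Fintype α] : α → ℝ :=
  fun _ => 1 / (Fintype.card α : ℝ)

/-- The distribution of `F(X, U)` where `X` has distribution `X` and `U` is uniform
on `β` and independent of `X`. -/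
noncomputable def push {α β γ : Type*} [Fintype α] [Fintype β] [Fintype γ] [DecidableEq γ]
    (F : α → β → γ) (X : α → ℝ) : γ → ℝ :=
  fun z => ∑ x, ∑ y, if F x y = z then X x / (Fintype.card β : ℝ) else 0

/-- `F : α × β → γ` is a `(k,ε)`-extractor: for every distribution `X` on `α` with
min-entropy at least `k`, the distribution of `F(X, U_β)` is `ε`-close to uniform. -/
def IsExtractor {α β γ : Type*} [Fintype α] [Fintype β] [Fintype γ] [DecidableEq γ]
    (k ε : ℝ) (F : α → β → γ) : Prop :=
  ∀ X : α → ℝ, IsDist X → (∀ x, X x ≤ (2:ℝ) ^ (-k)) →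
    statDist (push F X) (unif γ) ≤ ε

lemma bernoulli_mgf (p l : ℝ) (hp0 : 0 ≤ p) (hp1 : p ≤ 1) (hl : 0 ≤ l) :
    1 - p + p * Real.exp l ≤ Real.exp (p * l + l ^ 2 / 8) := by
  set q : ℝ := 1 - p with hq
  have hq0 : 0 ≤ q := by linarith
  have hpos : ∀ x : ℝ, 0 < q + p * Real.exp x := by
    intro x
    rcases lt_or_eq_of_le hp0 with h | h
    · have := Real.exp_pos x; nlinarith
    · have : q = 1 := by simp [hq, ← h]
      nlinarith [Real.exp_pos x, mul_nonneg hp0 (Real.exp_pos x).le]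
  -- g1' x = p + x/4 - p e^x/(q + p e^x)
  set g1' : ℝ → ℝ := fun x => p + x / 4 - p * Real.exp x / (q + p * Real.exp x) with hg1'
  set g1 : ℝ → ℝ := fun x => p * x + x ^ 2 / 8 - Real.log (q + p * Real.exp x) with hg1
  have hd1 : ∀ x, HasDerivAt g1 (g1' x) x := by
    intro x
    have h1 : HasDerivAt (fun x : ℝ => q + p * Real.exp x) (p * Real.exp x) x := by
      simpa using ((Real.hasDerivAt_exp x).const_mul p).const_add q
    have h2 : HasDerivAt (fun x => Real.log (q + p * Real.exp x))
        (p * Real.exp x / (q + p * Real.exp x)) x := h1.log (hpos x).ne'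
    have h3 : HasDerivAt (fun x : ℝ => p * x + x ^ 2 / 8) (p + x / 4) x := by
      have := ((hasDerivAt_pow 2 x).div_const 8).const_add 0
      have h4 : HasDerivAt (fun x : ℝ => p * x) p x := by
        simpa using (hasDerivAt_id x).const_mul p
      have h5 : HasDerivAt (fun x : ℝ => x ^ 2 / 8) (x / 4) x := by
        have := (hasDerivAt_pow 2 x).div_const 8
        exact this.congr_deriv (by ring)
      exact h4.add h5
    exact h3.sub h2
  have hd2 : ∀ x, HasDerivAt g1'
      (1 / 4 - (p * Real.exp x * q) / (q + p * Real.exp x) ^ 2) x := by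
    intro x
    have h1 : HasDerivAt (fun x : ℝ => q + p * Real.exp x) (p * Real.exp x) x := by
      simpa using ((Real.hasDerivAt_exp x).const_mul p).const_add q
    have h2 : HasDerivAt (fun x : ℝ => p * Real.exp x) (p * Real.exp x) x :=
      (Real.hasDerivAt_exp x).const_mul p
    have h3 := h2.div h1 (hpos x).ne'
    have h4 : HasDerivAt (fun x : ℝ => p + x / 4) (1 / 4) x := by
      simpa using ((hasDerivAt_id x).div_const 4).const_add p
    have h5 := h4.sub h3
    exact h5.congr_deriv (by ring)
  have hmono' : Monotone g1' := by
    apply monotone_of_deriv_nonneg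
    · exact fun x => (hd2 x).differentiableAt
    · intro x
      rw [(hd2 x).deriv]
      have hs := hpos x
      have he := (Real.exp_pos x).le
      have : p * Real.exp x * q ≤ (q + p * Real.exp x) ^ 2 / 4 := by
        nlinarith [sq_nonneg (q - p * Real.exp x)]
      have h2 : (0:ℝ) < (q + p * Real.exp x) ^ 2 := by positivity
      rw [sub_nonneg, div_le_iff₀ h2]
      linarith
  have hg1'0 : g1' 0 = 0 := by
    simp only [hg1']
    rw [Real.exp_zero]
    have h : q + p * 1 = 1 := by rw [hq]; ring
    rw [h]
    ring
  have hg1'nonneg : ∀ x, 0 ≤ x → 0 ≤ g1' x := by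
    intro x hx
    calc (0:ℝ) = g1' 0 := hg1'0.symm
    _ ≤ g1' x := hmono' hx
  have hmono : MonotoneOn g1 (Set.Ici 0) := by
    apply monotoneOn_of_deriv_nonneg (convex_Ici 0)
    · exact Continuous.continuousOn
        (Differentiable.continuous (fun x => (hd1 x).differentiableAt))
    · intro x _
      exact ((hd1 x).differentiableAt).differentiableWithinAt
    · intro x hx
      rw [(hd1 x).deriv]
      exact hg1'nonneg x (le_of_lt (by simpa using hx))
  have h0 : g1 0 = 0 := by
    simp only [hg1]
    rw [Real.exp_zero, show q + p * 1 = 1 by rw [hq]; ring]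
    simp
  have := hmono (Set.self_mem_Ici) (Set.mem_Ici.mpr hl) hl
  rw [h0] at this
  have hlog : Real.log (q + p * Real.exp l) ≤ p * l + l ^ 2 / 8 := by
    simp only [hg1] at this; linarith
  calc 1 - p + p * Real.exp l = q + p * Real.exp l := by rw [hq]
  _ ≤ Real.exp (p * l + l ^ 2 / 8) := by
      rw [← Real.exp_log (hpos l)]
      exact Real.exp_le_exp.mpr hlog


lemma chernoff_count {J C : Type*} [Fintype J] [DecidableEq J] [Fintype C] [DecidableEq C]
    [Nonempty C] (J' : Finset J) (A : Finset C) (ε : ℝ) (hε : 0 < ε) :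
    ((Finset.univ.filter (fun f : J → C =>
      (((A.card : ℝ) / (Fintype.card C : ℝ) + ε) * J'.card ≤
        ((J'.filter fun j => f j ∈ A).card : ℝ)))).card : ℝ)
      ≤ (Fintype.card C : ℝ) ^ (Fintype.card J) * Real.exp (-(2 * ε ^ 2 * J'.card)) := by
  set l : ℝ := 4 * ε with hldef
  have hl : 0 ≤ l := by positivity
  have hC : (0:ℝ) < (Fintype.card C : ℝ) := by exact_mod_cast Fintype.card_pos
  set p : ℝ := (A.card : ℝ) / (Fintype.card C : ℝ) with hpdef
  have hp0 : 0 ≤ p := by positivity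
  have hp1 : p ≤ 1 := by
    rw [hpdef, div_le_one hC]
    exact_mod_cast Finset.card_le_univ A
  set cnt : (J → C) → ℕ := fun f => (J'.filter fun j => f j ∈ A).card with hcnt
  set W : J → C → ℝ := fun j c => if j ∈ J' then Real.exp (l * (if c ∈ A then 1 else 0)) else 1
    with hW
  -- per-f identity
  have hfprod : ∀ f : J → C, Real.exp (l * cnt f) = ∏ j, W j (f j) := by
    intro f
    have h1 : ((cnt f : ℕ) : ℝ) = ∑ j ∈ J', (if f j ∈ A then (1:ℝ) else 0) := by
      rw [Finset.sum_boole]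
    have h2 : l * cnt f = ∑ j ∈ J', l * (if f j ∈ A then (1:ℝ) else 0) := by
      rw [h1, Finset.mul_sum]
    rw [h2, Real.exp_sum]
    calc (∏ j ∈ J', Real.exp (l * (if f j ∈ A then (1:ℝ) else 0)))
        = ∏ j ∈ univ ∩ J', Real.exp (l * (if f j ∈ A then (1:ℝ) else 0)) := by
          rw [Finset.univ_inter]
      _ = ∏ j, W j (f j) := by rw [← Finset.prod_ite_mem]
  -- column sums
  have hcol : ∀ j, ∑ c, W j c ≤ (Fintype.card C : ℝ) *
      (if j ∈ J' then Real.exp (p * l + l ^ 2 / 8) else 1) := by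
    intro j
    by_cases hj : j ∈ J'
    · simp only [hW, hj, if_true]
      have h4 : ∑ c, Real.exp (l * (if c ∈ A then (1:ℝ) else 0))
          = (A.card : ℝ) * (Real.exp l - 1) + (Fintype.card C : ℝ) := by
        calc ∑ c, Real.exp (l * (if c ∈ A then (1:ℝ) else 0))
            = ∑ c, ((if c ∈ A then Real.exp l - 1 else 0) + 1) := by
              apply Finset.sum_congr rfl; intro c _
              split_ifs <;> simp
          _ = (∑ c, if c ∈ A then Real.exp l - 1 else 0) + (Fintype.card C : ℝ) := by
              rw [Finset.sum_add_distrib]; simp [Finset.card_univ]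
          _ = _ := by
              rw [Finset.sum_ite_mem, Finset.univ_inter, Finset.sum_const, nsmul_eq_mul]
      rw [h4]
      have h5 : (A.card : ℝ) = p * (Fintype.card C : ℝ) := by
        rw [hpdef]; field_simp
      have h6 : (A.card : ℝ) * (Real.exp l - 1) + (Fintype.card C : ℝ)
          = (Fintype.card C : ℝ) * (1 - p + p * Real.exp l) := by
        rw [h5]; ring
      rw [h6]
      exact mul_le_mul_of_nonneg_left (bernoulli_mgf p l hp0 hp1 hl) hC.le
    · simp only [hW, hj, if_false]
      simp [Finset.card_univ]
  -- sum over all f of products equals product of column sums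
  have hswap : ∑ f : J → C, ∏ j, W j (f j) = ∏ j, ∑ c, W j c := by
    rw [Finset.prod_univ_sum]
    rw [Fintype.piFinset_univ]
  -- main chain
  set B : Finset (J → C) := Finset.univ.filter (fun f : J → C =>
      ((p + ε) * J'.card ≤ ((J'.filter fun j => f j ∈ A).card : ℝ))) with hB
  have hlow : (B.card : ℝ) * Real.exp (l * ((p + ε) * J'.card)) ≤ ∑ f : J → C,
      Real.exp (l * cnt f) := by
    calc (B.card : ℝ) * Real.exp (l * ((p + ε) * J'.card))
        = ∑ _f ∈ B, Real.exp (l * ((p + ε) * J'.card)) := by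
          rw [Finset.sum_const, nsmul_eq_mul]
      _ ≤ ∑ f ∈ B, Real.exp (l * cnt f) := by
          apply Finset.sum_le_sum
          intro f hf
          apply Real.exp_le_exp.mpr
          apply mul_le_mul_of_nonneg_left _ hl
          exact (Finset.mem_filter.mp hf).2
      _ ≤ ∑ f : J → C, Real.exp (l * cnt f) := by
          apply Finset.sum_le_sum_of_subset_of_nonneg (Finset.subset_univ B)
          intro f _ _
          exact (Real.exp_pos _).le
  have hup : ∑ f : J → C, Real.exp (l * cnt f)
      ≤ (Fintype.card C : ℝ) ^ (Fintype.card J) * Real.exp (J'.card * (p * l + l ^ 2 / 8)) := by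
    calc ∑ f : J → C, Real.exp (l * cnt f) = ∑ f : J → C, ∏ j, W j (f j) := by
          apply Finset.sum_congr rfl; intro f _; exact hfprod f
      _ = ∏ j, ∑ c, W j c := hswap
      _ ≤ ∏ j, (Fintype.card C : ℝ) * (if j ∈ J' then Real.exp (p * l + l ^ 2 / 8) else 1) := by
          apply Finset.prod_le_prod
          · intro j _
            apply Finset.sum_nonneg
            intro c _
            simp only [hW]
            split_ifs <;> positivity
          · intro j _; exact hcol j
      _ = (Fintype.card C : ℝ) ^ (Fintype.card J) *
            ∏ j, (if j ∈ J' then Real.exp (p * l + l ^ 2 / 8) else 1) := by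
          rw [Finset.prod_mul_distrib, Finset.prod_const, Finset.card_univ]
      _ = (Fintype.card C : ℝ) ^ (Fintype.card J) * Real.exp (J'.card * (p * l + l ^ 2 / 8)) := by
          congr 1
          rw [Finset.prod_ite_mem, Finset.univ_inter, Finset.prod_const]
          rw [← Real.exp_nat_mul]
  have hkey : (B.card : ℝ) * Real.exp (l * ((p + ε) * J'.card))
      ≤ (Fintype.card C : ℝ) ^ (Fintype.card J) * Real.exp (J'.card * (p * l + l ^ 2 / 8)) :=
    le_trans hlow hup
  have hfinal : (B.card : ℝ) ≤ (Fintype.card C : ℝ) ^ (Fintype.card J) *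
      Real.exp (-(2 * ε ^ 2 * J'.card)) := by
    have hepos : (0:ℝ) < Real.exp (l * ((p + ε) * J'.card)) := Real.exp_pos _
    rw [← le_div_iff₀ hepos] at hkey
    calc (B.card : ℝ) ≤ _ := hkey
      _ = (Fintype.card C : ℝ) ^ (Fintype.card J) *
          Real.exp (J'.card * (p * l + l ^ 2 / 8) - l * ((p + ε) * J'.card)) := by
          rw [Real.exp_sub]; ring
      _ = (Fintype.card C : ℝ) ^ (Fintype.card J) * Real.exp (-(2 * ε ^ 2 * J'.card)) := by
          congr 2
          rw [hldef]; ring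
  exact hfinal


lemma greedy_flat {α : Type*} [Fintype α] [DecidableEq α] (v X : α → ℝ) (K : ℕ) (hK : 0 < K)
    (hKc : K ≤ Fintype.card α) (hX0 : ∀ x, 0 ≤ X x) (hX1 : ∑ x, X x = 1)
    (hXb : ∀ x, X x ≤ 1 / (K : ℝ)) :
    ∃ S : Finset α, S.card = K ∧ ∑ x, X x * v x ≤ (∑ x ∈ S, v x) / (K : ℝ) := by
  have hKR : (0:ℝ) < (K : ℝ) := by exact_mod_cast hK
  have hne : (Finset.powersetCard K (univ : Finset α)).Nonempty := by
    apply Finset.powersetCard_nonempty.mpr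
    simpa using hKc
  obtain ⟨S, hSmem, hSmax⟩ := Finset.exists_max_image _ (fun S => ∑ x ∈ S, v x) hne
  have hScard : S.card = K := (Finset.mem_powersetCard_univ).mp hSmem
  have hSne : S.Nonempty := Finset.card_pos.mp (hScard ▸ hK)
  -- any element outside S has v-value at most any element inside S
  have hswap : ∀ x, x ∉ S → ∀ s ∈ S, v x ≤ v s := by
    intro x hx s hs
    by_contra hlt
    push_neg at hlt
    set S' : Finset α := insert x (S.erase s) with hS'
    have hxne : x ∉ S.erase s := fun h => hx (Finset.mem_of_mem_erase h)
    have hcard' : S'.card = K := by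
      rw [hS', Finset.card_insert_of_notMem hxne, Finset.card_erase_of_mem hs, hScard]
      omega
    have hmem' : S' ∈ Finset.powersetCard K (univ : Finset α) :=
      (Finset.mem_powersetCard_univ).mpr hcard'
    have hsum' : ∑ y ∈ S', v y = v x + (∑ y ∈ S, v y - v s) := by
      rw [hS', Finset.sum_insert hxne, Finset.sum_erase_eq_sub hs]
    have := hSmax S' hmem'
    rw [hsum'] at this
    linarith
  obtain ⟨s₀, hs₀, hmin⟩ := Finset.exists_min_image S v hSne
  set t : ℝ := v s₀ with ht
  refine ⟨S, hScard, ?_⟩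
  have hsplit : ∑ x, X x * v x = ∑ x ∈ S, X x * v x + ∑ x ∈ Sᶜ, X x * v x :=
    (Finset.sum_add_sum_compl S _).symm
  have hcompl : ∑ x ∈ Sᶜ, X x = 1 - ∑ x ∈ S, X x := by
    have := Finset.sum_add_sum_compl S X
    linarith [hX1 ▸ this]
  have h1 : ∑ x ∈ Sᶜ, X x * v x ≤ (1 - ∑ x ∈ S, X x) * t := by
    calc ∑ x ∈ Sᶜ, X x * v x ≤ ∑ x ∈ Sᶜ, X x * t := by
          apply Finset.sum_le_sum
          intro x hx
          exact mul_le_mul_of_nonneg_left (hswap x (Finset.mem_compl.mp hx) s₀ hs₀) (hX0 x)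
      _ = (∑ x ∈ Sᶜ, X x) * t := by rw [Finset.sum_mul]
      _ = (1 - ∑ x ∈ S, X x) * t := by rw [hcompl]
  have h2 : ∑ x ∈ S, X x * (v x - t) ≤ ∑ x ∈ S, (1 / (K:ℝ)) * (v x - t) := by
    apply Finset.sum_le_sum
    intro x hx
    exact mul_le_mul_of_nonneg_right (hXb x) (by linarith [hmin x hx])
  have h3 : ∑ x ∈ S, X x * (v x - t) = ∑ x ∈ S, X x * v x - (∑ x ∈ S, X x) * t := by
    rw [Finset.sum_mul, ← Finset.sum_sub_distrib]
    apply Finset.sum_congr rfl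
    intro x _; ring
  have h4 : ∑ x ∈ S, (1 / (K:ℝ)) * (v x - t) = (∑ x ∈ S, v x) / K - t := by
    rw [← Finset.mul_sum, Finset.sum_sub_distrib, Finset.sum_const, hScard, nsmul_eq_mul]
    field_simp
  rw [hsplit]
  have h5 : ∑ x ∈ S, X x * v x - (∑ x ∈ S, X x) * t ≤ (∑ x ∈ S, v x) / K - t := by
    calc ∑ x ∈ S, X x * v x - (∑ x ∈ S, X x) * t = ∑ x ∈ S, X x * (v x - t) := h3.symm
      _ ≤ ∑ x ∈ S, (1 / (K:ℝ)) * (v x - t) := h2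
      _ = (∑ x ∈ S, v x) / K - t := h4
  linarith



lemma unif_sum {γ : Type*} [Fintype γ] [Nonempty γ] : ∑ z : γ, unif γ z = 1 := by
  simp [unif, Finset.sum_const, Finset.card_univ]

lemma statDist_eq_zero_of_card_one {γ : Type*} [Fintype γ] (hcard : Fintype.card γ = 1)
    (P Q : γ → ℝ) (hP : ∑ z, P z = 1) (hQ : ∑ z, Q z = 1) : statDist P Q = 0 := by
  obtain ⟨z₀, hz₀⟩ := Fintype.card_eq_one_iff.mp hcard
  have huniv : (univ : Finset γ) = {z₀} := by
    apply (Finset.eq_of_subset_of_card_le (Finset.subset_univ {z₀}) ?_).symm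
    rw [Finset.card_univ, hcard, Finset.card_singleton]
  have h1 : ∀ f : γ → ℝ, ∑ z, f z = f z₀ := by
    intro f
    rw [huniv, Finset.sum_singleton]
  have hP' : P z₀ = 1 := by rw [← h1 P]; exact hP
  have hQ' : Q z₀ = 1 := by rw [← h1 Q]; exact hQ
  show (∑ a, |P a - Q a|) / 2 = 0
  rw [h1 (fun z => |P z - Q z|)]
  simp [hP', hQ']

lemma statDist_eq_test {γ : Type*} [Fintype γ] (P Q : γ → ℝ) (hP : ∑ z, P z = 1)
    (hQ : ∑ z, Q z = 1) [DecidableEq γ] :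
    statDist P Q = ∑ z ∈ univ.filter (fun z => Q z < P z), (P z - Q z) := by
  set T := univ.filter (fun z => Q z < P z) with hT
  have hsplit : ∑ z, (P z - Q z) = ∑ z ∈ T, (P z - Q z) + ∑ z ∈ Tᶜ, (P z - Q z) :=
    (Finset.sum_add_sum_compl T _).symm
  have hzero : ∑ z, (P z - Q z) = 0 := by
    rw [Finset.sum_sub_distrib, hP, hQ]; ring
  have habs : ∑ z, |P z - Q z| = ∑ z ∈ T, (P z - Q z) + ∑ z ∈ Tᶜ, (Q z - P z) := by
    rw [← Finset.sum_add_sum_compl T (fun z => |P z - Q z|)]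
    congr 1
    · apply Finset.sum_congr rfl
      intro z hz
      rw [hT, Finset.mem_filter] at hz
      rw [abs_of_pos (by linarith [hz.2])]
    · apply Finset.sum_congr rfl
      intro z hz
      rw [Finset.mem_compl, hT, Finset.mem_filter] at hz
      push_neg at hz
      have : P z ≤ Q z := hz (Finset.mem_univ z)
      rw [abs_of_nonpos (by linarith), neg_sub]
  have h2 : ∑ z ∈ Tᶜ, (Q z - P z) = ∑ z ∈ T, (P z - Q z) := by
    have h3 : ∑ z ∈ Tᶜ, (Q z - P z) = - ∑ z ∈ Tᶜ, (P z - Q z) := by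
      rw [← Finset.sum_neg_distrib]
      apply Finset.sum_congr rfl
      intro z _; ring
    rw [h3]
    linarith [hsplit, hzero]
  rw [statDist, habs, h2]
  ring

lemma sum_ite_T {β γ : Type*} [Fintype β] [DecidableEq γ] (g : β → γ) (T : Finset γ)
    (c : ℝ) : ∑ y, (if g y ∈ T then c else 0)
      = ((univ.filter fun y => g y ∈ T).card : ℝ) * c := by
  rw [← Finset.sum_filter, Finset.sum_const, nsmul_eq_mul]

lemma push_sum_subset {α β γ : Type*} [Fintype α] [Fintype β] [Fintype γ] [DecidableEq γ]
    (F : α → β → γ) (X : α → ℝ) (T : Finset γ) :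
    ∑ z ∈ T, push F X z
      = ∑ x, X x * (((univ.filter fun y => F x y ∈ T).card : ℝ) / (Fintype.card β : ℝ)) := by
  simp only [push]
  rw [Finset.sum_comm]
  apply Finset.sum_congr rfl
  intro x _
  rw [Finset.sum_comm]
  have h1 : ∀ y : β, ∑ z ∈ T, (if F x y = z then X x / (Fintype.card β : ℝ) else 0)
      = (if F x y ∈ T then X x / (Fintype.card β : ℝ) else 0) := by
    intro y
    rw [Finset.sum_ite_eq T (F x y) (fun _ => X x / (Fintype.card β : ℝ))]
  calc ∑ y, ∑ z ∈ T, (if F x y = z then X x / (Fintype.card β : ℝ) else 0)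
      = ∑ y, (if F x y ∈ T then X x / (Fintype.card β : ℝ) else 0) := by
        apply Finset.sum_congr rfl; intro y _; exact h1 y
    _ = ((univ.filter fun y => F x y ∈ T).card : ℝ) * (X x / (Fintype.card β : ℝ)) :=
        sum_ite_T _ _ _
    _ = X x * (((univ.filter fun y => F x y ∈ T).card : ℝ) / (Fintype.card β : ℝ)) := by ring

lemma push_isDist {α β γ : Type*} [Fintype α] [Fintype β] [Fintype γ] [DecidableEq γ]
    [Nonempty β] (F : α → β → γ) (X : α → ℝ) (hX : IsDist X) :
    (∀ z, 0 ≤ push F X z) ∧ ∑ z, push F X z = 1 := by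
  have hB : (0:ℝ) < (Fintype.card β : ℝ) := by exact_mod_cast Fintype.card_pos
  constructor
  · intro z
    apply Finset.sum_nonneg; intro x _
    apply Finset.sum_nonneg; intro y _
    split_ifs
    · exact div_nonneg (hX.1 x) hB.le
    · exact le_refl 0
  · have h := push_sum_subset F X (univ : Finset γ)
    rw [h]
    have h2 : ∀ x : α, (univ.filter fun y : β => F x y ∈ (univ : Finset γ)) = univ := by
      intro x; apply Finset.filter_true_of_mem; intro y _; exact Finset.mem_univ _
    calc ∑ x, X x * (((univ.filter fun y => F x y ∈ (univ : Finset γ)).card : ℝ)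
            / (Fintype.card β : ℝ))
        = ∑ x, X x := by
          apply Finset.sum_congr rfl; intro x _
          rw [h2 x, Finset.card_univ]
          field_simp
      _ = 1 := hX.2

lemma extractor_of_count {α β γ : Type*} [Fintype α] [DecidableEq α] [Fintype β] [Nonempty β]
    [Fintype γ] [DecidableEq γ] [Nonempty γ]
    (F : α → β → γ) (K : ℕ) (hK : 0 < K) (hKc : K ≤ Fintype.card α) (ε : ℝ) (hε : 0 < ε)
    (hgood : ∀ S : Finset α, S.card = K → ∀ T : Finset γ,
      (∑ x ∈ S, ((univ.filter fun y => F x y ∈ T).card : ℝ))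
        ≤ (((T.card : ℝ) / (Fintype.card γ : ℝ)) + ε) * ((K : ℝ) * (Fintype.card β : ℝ)))
    (X : α → ℝ) (hX : IsDist X) (hXb : ∀ x, X x ≤ 1 / (K : ℝ)) :
    statDist (push F X) (unif γ) ≤ ε := by
  have hB : (0:ℝ) < (Fintype.card β : ℝ) := by exact_mod_cast Fintype.card_pos
  have hG : (0:ℝ) < (Fintype.card γ : ℝ) := by exact_mod_cast Fintype.card_pos
  have hKR : (0:ℝ) < (K : ℝ) := by exact_mod_cast hK
  obtain ⟨hP0, hP1⟩ := push_isDist F X hX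
  have hQ1 : ∑ z : γ, unif γ z = 1 := by
    simp [unif, Finset.sum_const, Finset.card_univ]
  rw [statDist_eq_test (push F X) (unif γ) hP1 hQ1]
  set T : Finset γ := univ.filter (fun z => unif γ z < push F X z) with hT
  have hTsum : ∑ z ∈ T, (push F X z - unif γ z)
      = ∑ z ∈ T, push F X z - (T.card : ℝ) / (Fintype.card γ : ℝ) := by
    rw [Finset.sum_sub_distrib]
    congr 1
    simp [unif, Finset.sum_const]
    ring
  rw [hTsum, push_sum_subset]
  set v : α → ℝ := fun x => ((univ.filter fun y => F x y ∈ T).card : ℝ) / (Fintype.card β : ℝ)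
    with hv
  obtain ⟨S, hScard, hSle⟩ := greedy_flat v X K hK hKc hX.1 hX.2 hXb
  have hcnt := hgood S hScard T
  have hvS : ∑ x ∈ S, v x = (∑ x ∈ S, ((univ.filter fun y => F x y ∈ T).card : ℝ))
      / (Fintype.card β : ℝ) := by
    rw [hv, Finset.sum_div]
  have hbound : (∑ x ∈ S, v x) / (K : ℝ)
      ≤ (T.card : ℝ) / (Fintype.card γ : ℝ) + ε := by
    rw [hvS, div_div]
    rw [div_le_iff₀ (by positivity)]
    calc (∑ x ∈ S, ((univ.filter fun y => F x y ∈ T).card : ℝ))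
        ≤ (((T.card : ℝ) / (Fintype.card γ : ℝ)) + ε) * ((K : ℝ) * (Fintype.card β : ℝ)) :=
          hcnt
      _ = (((T.card : ℝ) / (Fintype.card γ : ℝ)) + ε) * ((Fintype.card β : ℝ) * (K : ℝ)) := by
          ring
  linarith [le_trans hSle hbound]


lemma fiber_card_eq (m q : ℕ) (hq : q ≤ m) (t t' : Fin q → Bool) :
    (univ.filter fun c : Fin m → Bool => (fun j : Fin q => c (Fin.castLE hq j)) = t).card
      = (univ.filter fun c : Fin m → Bool => (fun j : Fin q => c (Fin.castLE hq j)) = t').card := by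
  set u : Fin m → Bool := fun j => if h : (j : ℕ) < q then xor (t ⟨j.1, h⟩) (t' ⟨j.1, h⟩)
    else false with hu
  set e : (Fin m → Bool) → (Fin m → Bool) := fun c j => xor (c j) (u j) with he
  have hinv : ∀ c, e (e c) = c := by
    intro c; funext j; simp [he]
  have hval : ∀ (c : Fin m → Bool) (j : Fin q),
      e c (Fin.castLE hq j) = xor (c (Fin.castLE hq j)) (xor (t j) (t' j)) := by
    intro c j
    have h1 : ((Fin.castLE hq j : Fin m) : ℕ) < q := by simpa using j.2
    simp [he, hu, h1, Fin.eta]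
  have hmap : ∀ c : Fin m → Bool, (fun j : Fin q => c (Fin.castLE hq j)) = t →
      (fun j : Fin q => e c (Fin.castLE hq j)) = t' := by
    intro c hc
    funext j
    have := congrFun hc j
    rw [hval c j, this]
    cases t j <;> cases t' j <;> simp
  have hmap' : ∀ c : Fin m → Bool, (fun j : Fin q => c (Fin.castLE hq j)) = t' →
      (fun j : Fin q => e c (Fin.castLE hq j)) = t := by
    intro c hc
    funext j
    have := congrFun hc j
    rw [hval c j, this]
    cases t j <;> cases t' j <;> simp
  apply Finset.card_bij' (fun c _ => e c) (fun c _ => e c)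
  · intro c hc
    rw [Finset.mem_filter] at hc ⊢
    exact ⟨Finset.mem_univ _, hmap c hc.2⟩
  · intro c hc
    rw [Finset.mem_filter] at hc ⊢
    exact ⟨Finset.mem_univ _, hmap' c hc.2⟩
  · intro c _; exact hinv c
  · intro c _; exact hinv c

lemma prefix_ratio (m q : ℕ) (hq : q ≤ m) (T : Finset (Fin q → Bool)) :
    ((univ.filter fun c : Fin m → Bool =>
        (fun j : Fin q => c (Fin.castLE hq j)) ∈ T).card : ℝ)
      / (Fintype.card (Fin m → Bool) : ℝ)
    = (T.card : ℝ) / (Fintype.card (Fin q → Bool) : ℝ) := by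
  set π : (Fin m → Bool) → (Fin q → Bool) := fun c j => c (Fin.castLE hq j) with hπ
  set f0 : ℕ := (univ.filter fun c : Fin m → Bool => π c = (fun _ => false)).card with hf0
  have hfib : ∀ t : Fin q → Bool, (univ.filter fun c : Fin m → Bool => π c = t).card = f0 :=
    fun t => fiber_card_eq m q hq t (fun _ => false)
  have hstepA : ∀ t ∈ T,
      ((univ.filter fun c : Fin m → Bool => π c ∈ T).filter fun c => π c = t).card = f0 := by
    intro t ht
    rw [← hfib t]
    congr 1
    rw [Finset.filter_filter]
    apply Finset.filter_congr
    intro c _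
    constructor
    · exact fun h => h.2
    · exact fun h => ⟨h ▸ ht, h⟩
  have hA : (univ.filter fun c : Fin m → Bool => π c ∈ T).card = T.card * f0 := by
    rw [Finset.card_eq_sum_card_fiberwise (f := π) (s := univ.filter fun c => π c ∈ T) (t := T)
      (fun c hc => (Finset.mem_filter.mp hc).2)]
    rw [Finset.sum_congr rfl hstepA, Finset.sum_const, smul_eq_mul]
  have hstepC : ∀ t ∈ (univ : Finset (Fin q → Bool)),
      (((univ : Finset (Fin m → Bool))).filter fun c => π c = t).card = f0 :=
    fun t _ => hfib t
  have hC : Fintype.card (Fin m → Bool) = Fintype.card (Fin q → Bool) * f0 := by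
    rw [← Finset.card_univ (α := Fin m → Bool), Finset.card_eq_sum_card_fiberwise (f := π)
      (t := (univ : Finset (Fin q → Bool))) (fun c _ => Finset.mem_univ _)]
    rw [Finset.sum_congr rfl hstepC, Finset.sum_const, smul_eq_mul, Finset.card_univ]
  have hCpos : 0 < Fintype.card (Fin m → Bool) := Fintype.card_pos
  have hf0pos : 0 < f0 := by
    rcases Nat.eq_zero_or_pos f0 with h | h
    · rw [h, mul_zero] at hC; omega
    · exact h
  rw [hA, hC]
  push_cast
  have h1 : (0:ℝ) < (f0 : ℝ) := by exact_mod_cast hf0pos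
  have h2 : (0:ℝ) < (Fintype.card (Fin q → Bool) : ℝ) := by
    exact_mod_cast (Fintype.card_pos (α := Fin q → Bool))
  field_simp


-- D = 2^d dominates both quantities in the max
lemma ceil_pow_dominates (x : ℝ) (hx : 0 < x) :
    x ≤ ((2:ℕ) ^ (⌈Real.logb 2 x⌉₊) : ℕ) := by
  have h1 : Real.logb 2 x ≤ (⌈Real.logb 2 x⌉₊ : ℝ) := Nat.le_ceil _
  have h2 : x = (2:ℝ) ^ (Real.logb 2 x) := (Real.rpow_logb (by norm_num) (by norm_num) hx).symm
  calc x = (2:ℝ) ^ (Real.logb 2 x) := h2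
    _ ≤ (2:ℝ) ^ ((⌈Real.logb 2 x⌉₊ : ℕ) : ℝ) := by
        apply Real.rpow_le_rpow_of_exponent_le (by norm_num) h1
    _ = ((2:ℕ) ^ (⌈Real.logb 2 x⌉₊) : ℕ) := by
        rw [Real.rpow_natCast]
        push_cast
        ring

lemma per_term_bound (n m k i : ℕ) (hk : k ≤ n) (hik : i ≤ k) (him : i ≤ m)
    (ε : ℝ) (hε : 0 < ε) (D : ℕ)
    (hDa : (2:ℝ) ^ m / (2:ℝ) ^ k * (Real.log 2 / ε ^ 2) ≤ (D : ℝ))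
    (hDb : (1 / ε ^ 2) * (1 + Real.log 2 + Real.log ((2:ℝ) ^ n)) ≤ (D : ℝ)) :
    (((2 ^ n).choose (2 ^ (k - i)) : ℝ)) * (2:ℝ) ^ ((2:ℕ) ^ (m - i)) *
        Real.exp (-(2 * ε ^ 2 * (((2 ^ (k - i) : ℕ) : ℝ) * (D : ℝ))))
      ≤ ((2 * Real.exp 1)⁻¹) ^ (k - i + 1) := by
  set Ki : ℕ := 2 ^ (k - i) with hKi
  set Mi : ℕ := 2 ^ (m - i) with hMi
  have hKiR : (0:ℝ) < (Ki : ℝ) := by positivity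
  have hl2 : (0:ℝ) < Real.log 2 := Real.log_pos (by norm_num)
  -- ε² D ≥ 2^m/2^k · log 2
  have hband1 : (2:ℝ) ^ m / (2:ℝ) ^ k * Real.log 2 ≤ ε ^ 2 * (D : ℝ) := by
    have := mul_le_mul_of_nonneg_left hDa (le_of_lt (show (0:ℝ) < ε ^ 2 by positivity))
    calc (2:ℝ) ^ m / (2:ℝ) ^ k * Real.log 2
        = ε ^ 2 * ((2:ℝ) ^ m / (2:ℝ) ^ k * (Real.log 2 / ε ^ 2)) := by
          field_simp
      _ ≤ ε ^ 2 * (D : ℝ) := this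
  have hband2 : 1 + Real.log 2 + (n : ℝ) * Real.log 2 ≤ ε ^ 2 * (D : ℝ) := by
    have := mul_le_mul_of_nonneg_left hDb (le_of_lt (show (0:ℝ) < ε ^ 2 by positivity))
    calc 1 + Real.log 2 + (n : ℝ) * Real.log 2
        = ε ^ 2 * ((1 / ε ^ 2) * (1 + Real.log 2 + Real.log ((2:ℝ) ^ n))) := by
          rw [Real.log_pow]
          field_simp
      _ ≤ ε ^ 2 * (D : ℝ) := this
  -- Ki · 2^m/2^k = 2^{m-i}  (as reals)
  have hKiM : (Ki : ℝ) * ((2:ℝ) ^ m / (2:ℝ) ^ k) = (Mi : ℝ) := by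
    rw [hKi, hMi]
    push_cast
    rw [mul_div_assoc', div_eq_iff (by positivity : ((2:ℝ)^k) ≠ 0)]
    rw [← pow_add, ← pow_add]
    congr 1
    omega
  -- main exponent bound
  have hexp : (Mi : ℝ) * Real.log 2 + ((Ki : ℝ) + (Ki : ℝ) * Real.log 2
      + (Ki : ℝ) * ((n : ℝ) * Real.log 2)) ≤ 2 * ε ^ 2 * ((Ki : ℝ) * (D : ℝ)) := by
    have h1 : (Mi : ℝ) * Real.log 2 ≤ (Ki : ℝ) * (ε ^ 2 * (D : ℝ)) := by
      calc (Mi : ℝ) * Real.log 2 = (Ki : ℝ) * ((2:ℝ) ^ m / (2:ℝ) ^ k * Real.log 2) := by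
            rw [← hKiM]; ring
        _ ≤ (Ki : ℝ) * (ε ^ 2 * (D : ℝ)) := by
            exact mul_le_mul_of_nonneg_left hband1 hKiR.le
    have h2 : (Ki : ℝ) + (Ki : ℝ) * Real.log 2 + (Ki : ℝ) * ((n : ℝ) * Real.log 2)
        ≤ (Ki : ℝ) * (ε ^ 2 * (D : ℝ)) := by
      calc (Ki : ℝ) + (Ki : ℝ) * Real.log 2 + (Ki : ℝ) * ((n : ℝ) * Real.log 2)
          = (Ki : ℝ) * (1 + Real.log 2 + (n : ℝ) * Real.log 2) := by ring
        _ ≤ (Ki : ℝ) * (ε ^ 2 * (D : ℝ)) := mul_le_mul_of_nonneg_left hband2 hKiR.le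
    calc (Mi : ℝ) * Real.log 2 + ((Ki : ℝ) + (Ki : ℝ) * Real.log 2
          + (Ki : ℝ) * ((n : ℝ) * Real.log 2))
        ≤ (Ki : ℝ) * (ε ^ 2 * (D : ℝ)) + (Ki : ℝ) * (ε ^ 2 * (D : ℝ)) := add_le_add h1 h2
      _ = 2 * ε ^ 2 * ((Ki : ℝ) * (D : ℝ)) := by ring
  have hexp2 : Real.exp (-(2 * ε ^ 2 * ((Ki : ℝ) * (D : ℝ))))
      ≤ Real.exp (-((Mi : ℝ) * Real.log 2)) * Real.exp (-((Ki : ℝ)))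
        * Real.exp (-((Ki : ℝ) * Real.log 2)) * Real.exp (-((Ki : ℝ) * ((n : ℝ) * Real.log 2))) := by
    rw [← Real.exp_add, ← Real.exp_add, ← Real.exp_add]
    apply Real.exp_le_exp.mpr
    linarith
  -- translate the exps into powers of 2
  have hp2 : ∀ a : ℕ, Real.exp (-((a : ℝ) * Real.log 2)) = ((2:ℝ) ^ a)⁻¹ := by
    intro a
    rw [Real.exp_neg]
    congr 1
    rw [Real.exp_nat_mul, Real.exp_log (by norm_num)]
  have hpn : Real.exp (-((Ki:ℝ) * ((n : ℝ) * Real.log 2))) = (((2:ℝ) ^ n) ^ Ki)⁻¹ := by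
    rw [Real.exp_neg]
    congr 1
    rw [show (Ki:ℝ) * ((n : ℝ) * Real.log 2) = (Ki:ℝ) * (Real.log ((2:ℝ)^n)) by
      rw [Real.log_pow], Real.exp_nat_mul, Real.exp_log (by positivity)]
  have hKe : Real.exp (-((Ki : ℝ))) = (Real.exp 1 ^ Ki)⁻¹ := by
    rw [Real.exp_neg]
    congr 1
    rw [show ((Ki : ℝ)) = (Ki : ℝ) * 1 by ring, Real.exp_nat_mul]
  have hchoose : (((2 ^ n).choose Ki : ℕ) : ℝ) ≤ ((2:ℝ) ^ n) ^ Ki := by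
    have := Nat.choose_le_pow (2 ^ n) Ki
    calc (((2 ^ n).choose Ki : ℕ) : ℝ) ≤ (((2 ^ n) ^ Ki : ℕ) : ℝ) := by exact_mod_cast this
      _ = ((2:ℝ) ^ n) ^ Ki := by push_cast; ring
  -- final computation
  calc (((2 ^ n).choose Ki : ℕ) : ℝ) * (2:ℝ) ^ Mi *
        Real.exp (-(2 * ε ^ 2 * ((Ki : ℝ) * (D : ℝ))))
      ≤ ((2:ℝ) ^ n) ^ Ki * (2:ℝ) ^ Mi *
        (((2:ℝ) ^ Mi)⁻¹ * (Real.exp 1 ^ Ki)⁻¹ * ((2:ℝ) ^ Ki)⁻¹ * (((2:ℝ) ^ n) ^ Ki)⁻¹) := by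
        apply mul_le_mul
        · exact mul_le_mul_of_nonneg_right hchoose (by positivity)
        · calc Real.exp (-(2 * ε ^ 2 * ((Ki : ℝ) * (D : ℝ))))
              ≤ _ := hexp2
            _ = ((2:ℝ) ^ Mi)⁻¹ * (Real.exp 1 ^ Ki)⁻¹ * ((2:ℝ) ^ Ki)⁻¹ *
                (((2:ℝ) ^ n) ^ Ki)⁻¹ := by
                rw [hp2 Mi, hp2 Ki, hpn, hKe]
        · positivity
        · positivity
    _ = (Real.exp 1 ^ Ki)⁻¹ * ((2:ℝ) ^ Ki)⁻¹ := by
        field_simp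
    _ = ((2 * Real.exp 1)⁻¹) ^ Ki := by
        rw [inv_pow, mul_pow, mul_inv]
        ring
    _ ≤ ((2 * Real.exp 1)⁻¹) ^ (k - i + 1) := by
        apply pow_le_pow_of_le_one
        · positivity
        · apply inv_le_one_of_one_le₀
          nlinarith [Real.exp_one_gt_d9]
        · exact Nat.succ_le_of_lt ((Nat.lt_two_pow_self (n := k - i)))

lemma geom_sum_bound (k L : ℕ) (hL : L ≤ k) :
    ∑ i ∈ range (L + 1), ((2 * Real.exp 1)⁻¹) ^ (k - i + 1)
      ≤ 2 * ((2 * Real.exp 1)⁻¹) ^ (k - L + 1) := by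
  induction L with
  | zero =>
      rw [Finset.sum_range_one, Nat.sub_zero]
      have := pow_pos (show (0:ℝ) < (2 * Real.exp 1)⁻¹ by positivity) (k + 1)
      linarith
  | succ L ih =>
      have hLk : L ≤ k := by omega
      have ihh := ih hLk
      rw [Finset.sum_range_succ]
      set r := (2 * Real.exp 1)⁻¹ with hr
      have hr0 : (0:ℝ) < r := by positivity
      have h2e : (2:ℝ) ≤ 2 * Real.exp 1 := by nlinarith [Real.exp_one_gt_d9]
      have hr12 : r ≤ 1 / 2 := by
        rw [hr]
        rw [show (1:ℝ)/2 = (2:ℝ)⁻¹ by norm_num]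
        exact inv_anti₀ (by norm_num) h2e
      have hek : k - L + 1 = (k - (L + 1) + 1) + 1 := by omega
      calc ∑ i ∈ range (L + 1), r ^ (k - i + 1) + r ^ (k - (L + 1) + 1)
          ≤ 2 * r ^ (k - L + 1) + r ^ (k - (L + 1) + 1) := by linarith
        _ = r ^ (k - (L + 1) + 1) * (2 * r + 1) := by rw [hek]; ring
        _ ≤ r ^ (k - (L + 1) + 1) * 2 := by
            apply mul_le_mul_of_nonneg_left (by linarith) (pow_nonneg hr0.le _)
        _ = 2 * r ^ (k - (L + 1) + 1) := by ring

lemma geom_sum_lt_one (k L : ℕ) (hL : L ≤ k) :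
    ∑ i ∈ range (L + 1), ((2 * Real.exp 1)⁻¹) ^ (k - i + 1) < 1 := by
  have h := geom_sum_bound k L hL
  set r := (2 * Real.exp 1)⁻¹ with hr
  have hr0 : (0:ℝ) < r := by positivity
  have h2e : (2:ℝ) < 2 * Real.exp 1 := by nlinarith [Real.exp_one_gt_d9]
  have hr12 : r < 1 / 2 := by
    rw [hr, show (1:ℝ)/2 = (2:ℝ)⁻¹ by norm_num]
    exact inv_strictAnti₀ (by norm_num) h2e
  have hpow : r ^ (k - L + 1) ≤ r ^ 1 :=
    pow_le_pow_of_le_one hr0.le (by linarith) (by omega)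
  calc ∑ i ∈ range (L + 1), r ^ (k - i + 1) ≤ 2 * r ^ (k - L + 1) := h
    _ ≤ 2 * r ^ 1 := by linarith
    _ < 1 := by rw [pow_one]; linarith


lemma card_filter_product {α β : Type*} [Fintype β] (S : Finset α) (Q : α × β → Prop)
    [DecidablePred Q] :
    ((S ×ˢ (univ : Finset β)).filter Q).card
      = ∑ x ∈ S, ((univ : Finset β).filter fun y => Q (x, y)).card := by
  rw [Finset.card_filter, Finset.sum_product]
  apply Finset.sum_congr rfl
  intro x _
  rw [Finset.card_filter]

lemma statDist_card_one' {γ : Type*} [Fintype γ] (hcard : Fintype.card γ = 1)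
    (P Q : γ → ℝ) (hP : ∑ z, P z = 1) (hQ : ∑ z, Q z = 1) :
    (∑ z, |P z - Q z|) / 2 = 0 := by
  obtain ⟨z₀, hz₀⟩ := Fintype.card_eq_one_iff.mp hcard
  have huniv : (univ : Finset γ) = {z₀} := by
    apply (Finset.eq_of_subset_of_card_le (Finset.subset_univ {z₀}) ?_).symm
    rw [Finset.card_univ, hcard, Finset.card_singleton]
  rw [huniv] at hP hQ ⊢
  rw [Finset.sum_singleton] at hP hQ ⊢
  rw [hP.trans hQ.symm]
  simp


noncomputable def Aset (m i : ℕ) (T : Finset (Fin (m - i) → Bool)) : Finset (Fin m → Bool) :=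
  univ.filter (fun c => (fun j : Fin (m - i) => c (Fin.castLE (Nat.sub_le m i) j)) ∈ T)

lemma good_exists (n m k : ℕ) (hk : k ≤ n) (ε : ℝ) (hε : 0 < ε) (d : ℕ)
    (hDa : (2:ℝ) ^ m / (2:ℝ) ^ k * (Real.log 2 / ε ^ 2) ≤ (((2:ℕ) ^ d : ℕ) : ℝ))
    (hDb : (1 / ε ^ 2) * (1 + Real.log 2 + Real.log ((2:ℝ) ^ n)) ≤ (((2:ℕ) ^ d : ℕ) : ℝ)) :
    ∃ G : (Fin n → Bool) × (Fin d → Bool) → (Fin m → Bool),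
      ∀ i ∈ range (min k m + 1),
        ∀ S ∈ powersetCard (2 ^ (k - i)) (univ : Finset (Fin n → Bool)),
          ∀ T : Finset (Fin (m - i) → Bool),
            ¬ ((((Aset m i T).card : ℝ) / (Fintype.card (Fin m → Bool) : ℝ) + ε) *
                ((S ×ˢ (univ : Finset (Fin d → Bool))).card : ℝ)
              ≤ (((S ×ˢ (univ : Finset (Fin d → Bool))).filter
                  fun j => G j ∈ Aset m i T).card : ℝ)) := by
  classical
  set L : ℕ := min k m with hL
  set J := (Fin n → Bool) × (Fin d → Bool)
  set C := Fin m → Bool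
  set GoodP : (J → C) → Prop := fun G =>
    ∀ i ∈ range (L + 1),
      ∀ S ∈ powersetCard (2 ^ (k - i)) (univ : Finset (Fin n → Bool)),
        ∀ T : Finset (Fin (m - i) → Bool),
          ¬ ((((Aset m i T).card : ℝ) / (Fintype.card C : ℝ) + ε) *
              ((S ×ˢ (univ : Finset (Fin d → Bool))).card : ℝ)
            ≤ (((S ×ˢ (univ : Finset (Fin d → Bool))).filter
                fun j => G j ∈ Aset m i T).card : ℝ)) with hGoodP
  set BadST : (i : ℕ) → Finset (Fin n → Bool) → Finset (Fin (m - i) → Bool) →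
      Finset (J → C) := fun i S T => univ.filter (fun G : J → C =>
      (((Aset m i T).card : ℝ) / (Fintype.card C : ℝ) + ε) *
          ((S ×ˢ (univ : Finset (Fin d → Bool))).card : ℝ)
        ≤ (((S ×ˢ (univ : Finset (Fin d → Bool))).filter
            fun j => G j ∈ Aset m i T).card : ℝ)) with hBadST
  set BadAll : Finset (J → C) := univ.filter (fun G => ¬ GoodP G) with hBadAll
  have hsub : BadAll ⊆ (range (L + 1)).biUnion (fun i =>
      (powersetCard (2 ^ (k - i)) (univ : Finset (Fin n → Bool))).biUnion (fun S =>
        (univ : Finset (Finset (Fin (m - i) → Bool))).biUnion (fun T => BadST i S T))) := by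
    intro G hG
    rw [hBadAll, Finset.mem_filter, hGoodP] at hG
    have hG2 := hG.2
    simp only [not_forall, not_not, exists_prop] at hG2
    obtain ⟨i, hi, S, hS, T, hT⟩ := hG2
    rw [Finset.mem_biUnion]
    refine ⟨i, hi, ?_⟩
    rw [Finset.mem_biUnion]
    refine ⟨S, hS, ?_⟩
    rw [Finset.mem_biUnion]
    refine ⟨T, Finset.mem_univ _, ?_⟩
    rw [hBadST, Finset.mem_filter]
    exact ⟨Finset.mem_univ _, hT⟩
  -- cardinalities
  have hcardC : Fintype.card C = 2 ^ m := by
    simp [C, Fintype.card_fun]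
  have hcardB : Fintype.card (Fin d → Bool) = 2 ^ d := by
    simp [Fintype.card_fun]
  set CJ : ℝ := (Fintype.card C : ℝ) ^ (Fintype.card J) with hCJ
  have hCJpos : 0 < CJ := by
    rw [hCJ]
    have : (0:ℝ) < (Fintype.card C : ℝ) := by exact_mod_cast Fintype.card_pos
    positivity
  have hBadSTcard : ∀ i, i ≤ L → ∀ S ∈ powersetCard (2 ^ (k - i))
      (univ : Finset (Fin n → Bool)), ∀ T : Finset (Fin (m - i) → Bool),
      ((BadST i S T).card : ℝ)
        ≤ CJ * Real.exp (-(2 * ε ^ 2 * (((2 ^ (k - i) : ℕ) : ℝ) * (((2:ℕ) ^ d : ℕ) : ℝ)))) := by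
    intro i hi S hS T
    have hScard : S.card = 2 ^ (k - i) := (Finset.mem_powersetCard_univ).mp hS
    have hprod : ((S ×ˢ (univ : Finset (Fin d → Bool))).card : ℝ)
        = ((2 ^ (k - i) : ℕ) : ℝ) * (((2:ℕ) ^ d : ℕ) : ℝ) := by
      rw [Finset.card_product, Finset.card_univ, hcardB, hScard]
      push_cast
      ring
    calc ((BadST i S T).card : ℝ)
        ≤ (Fintype.card C : ℝ) ^ (Fintype.card J) *
            Real.exp (-(2 * ε ^ 2 * ((S ×ˢ (univ : Finset (Fin d → Bool))).card : ℝ))) :=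
          chernoff_count (J := J) (C := C) (S ×ˢ (univ : Finset (Fin d → Bool)))
            (Aset m i T) ε hε
      _ = CJ * Real.exp (-(2 * ε ^ 2 *
            (((2 ^ (k - i) : ℕ) : ℝ) * (((2:ℕ) ^ d : ℕ) : ℝ)))) := by
          rw [hprod, hCJ]
  -- counting chain
  have hchain : ((BadAll.card : ℕ) : ℝ) < CJ := by
    have h1 : (BadAll.card : ℝ) ≤ ∑ i ∈ range (L + 1),
        ∑ S ∈ powersetCard (2 ^ (k - i)) (univ : Finset (Fin n → Bool)),
          ∑ T ∈ (univ : Finset (Finset (Fin (m - i) → Bool))), ((BadST i S T).card : ℝ) := by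
      have hnat : BadAll.card ≤ ∑ i ∈ range (L + 1),
          ∑ S ∈ powersetCard (2 ^ (k - i)) (univ : Finset (Fin n → Bool)),
            ∑ T ∈ (univ : Finset (Finset (Fin (m - i) → Bool))), (BadST i S T).card := by
        have step1 : BadAll.card ≤ ∑ i ∈ range (L + 1),
            ((powersetCard (2 ^ (k - i)) (univ : Finset (Fin n → Bool))).biUnion (fun S =>
              (univ : Finset (Finset (Fin (m - i) → Bool))).biUnion
                (fun T => BadST i S T))).card :=
          le_trans (Finset.card_le_card hsub) Finset.card_biUnion_le
        have step2 : ∀ i, ((powersetCard (2 ^ (k - i)) (univ : Finset (Fin n → Bool))).biUnion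
            (fun S => (univ : Finset (Finset (Fin (m - i) → Bool))).biUnion
              (fun T => BadST i S T))).card
            ≤ ∑ S ∈ powersetCard (2 ^ (k - i)) (univ : Finset (Fin n → Bool)),
              ((univ : Finset (Finset (Fin (m - i) → Bool))).biUnion
                (fun T => BadST i S T)).card := fun i => Finset.card_biUnion_le
        have step3 : ∀ (i : ℕ) (S : Finset (Fin n → Bool)),
            ((univ : Finset (Finset (Fin (m - i) → Bool))).biUnion
              (fun T => BadST i S T)).card
            ≤ ∑ T ∈ (univ : Finset (Finset (Fin (m - i) → Bool))), (BadST i S T).card :=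
          fun i S => Finset.card_biUnion_le
        calc BadAll.card ≤ _ := step1
          _ ≤ _ := by
              apply Finset.sum_le_sum
              intro i _
              exact le_trans (step2 i) (Finset.sum_le_sum (fun S _ => step3 i S))
      exact_mod_cast hnat
    have h2 : ∑ i ∈ range (L + 1),
        ∑ S ∈ powersetCard (2 ^ (k - i)) (univ : Finset (Fin n → Bool)),
          ∑ T ∈ (univ : Finset (Finset (Fin (m - i) → Bool))), ((BadST i S T).card : ℝ)
        ≤ ∑ i ∈ range (L + 1), CJ * ((2 * Real.exp 1)⁻¹) ^ (k - i + 1) := by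
      apply Finset.sum_le_sum
      intro i hi
      have hiL : i ≤ L := by
        rw [Finset.mem_range] at hi; omega
      have hik : i ≤ k := le_trans hiL (min_le_left _ _)
      have him : i ≤ m := le_trans hiL (min_le_right _ _)
      calc ∑ S ∈ powersetCard (2 ^ (k - i)) (univ : Finset (Fin n → Bool)),
            ∑ T ∈ (univ : Finset (Finset (Fin (m - i) → Bool))), ((BadST i S T).card : ℝ)
          ≤ ∑ S ∈ powersetCard (2 ^ (k - i)) (univ : Finset (Fin n → Bool)),
            ∑ T ∈ (univ : Finset (Finset (Fin (m - i) → Bool))),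
              CJ * Real.exp (-(2 * ε ^ 2 *
                (((2 ^ (k - i) : ℕ) : ℝ) * (((2:ℕ) ^ d : ℕ) : ℝ)))) := by
            apply Finset.sum_le_sum
            intro S hS
            apply Finset.sum_le_sum
            intro T _
            exact hBadSTcard i hiL S hS T
        _ = (((2 ^ n).choose (2 ^ (k - i)) : ℝ)) * ((2:ℝ) ^ ((2:ℕ) ^ (m - i)) *
              (CJ * Real.exp (-(2 * ε ^ 2 *
                (((2 ^ (k - i) : ℕ) : ℝ) * (((2:ℕ) ^ d : ℕ) : ℝ)))))) := by
            rw [Finset.sum_const, Finset.sum_const, Finset.card_univ,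
              Finset.card_powersetCard, Finset.card_univ]
            have e1 : Fintype.card (Fin n → Bool) = 2 ^ n := by simp [Fintype.card_fun]
            have e2 : Fintype.card (Finset (Fin (m - i) → Bool)) = 2 ^ (2 ^ (m - i)) := by
              rw [Fintype.card_finset]
              simp [Fintype.card_fun]
            rw [e1, e2]
            rw [nsmul_eq_mul, nsmul_eq_mul]
            push_cast
            ring
        _ ≤ CJ * ((2 * Real.exp 1)⁻¹) ^ (k - i + 1) := by
            have hterm := per_term_bound n m k i hk hik him ε hε (2 ^ d) hDa hDb
            calc (((2 ^ n).choose (2 ^ (k - i)) : ℝ)) * ((2:ℝ) ^ ((2:ℕ) ^ (m - i)) *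
                  (CJ * Real.exp (-(2 * ε ^ 2 *
                    (((2 ^ (k - i) : ℕ) : ℝ) * (((2:ℕ) ^ d : ℕ) : ℝ))))))
                = CJ * ((((2 ^ n).choose (2 ^ (k - i)) : ℝ)) * (2:ℝ) ^ ((2:ℕ) ^ (m - i)) *
                    Real.exp (-(2 * ε ^ 2 *
                      (((2 ^ (k - i) : ℕ) : ℝ) * (((2:ℕ) ^ d : ℕ) : ℝ))))) := by ring
              _ ≤ CJ * ((2 * Real.exp 1)⁻¹) ^ (k - i + 1) :=
                  mul_le_mul_of_nonneg_left hterm hCJpos.le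
    have h3 : ∑ i ∈ range (L + 1), CJ * ((2 * Real.exp 1)⁻¹) ^ (k - i + 1) < CJ := by
      rw [← Finset.mul_sum]
      calc CJ * ∑ i ∈ range (L + 1), ((2 * Real.exp 1)⁻¹) ^ (k - i + 1)
          < CJ * 1 := by
            apply mul_lt_mul_of_pos_left (geom_sum_lt_one k L (min_le_left _ _)) hCJpos
        _ = CJ := mul_one CJ
    linarith
  -- extract a good G
  have hCJeq : CJ = ((Fintype.card (J → C) : ℕ) : ℝ) := by
    have hcf : Fintype.card (J → C) = Fintype.card C ^ Fintype.card J := by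
      rw [Fintype.card_fun]
    rw [hCJ, hcf]
    push_cast
    ring
  have hlt : BadAll.card < Fintype.card (J → C) := by
    rw [hCJeq] at hchain
    exact_mod_cast hchain
  have hne : (BadAllᶜ).Nonempty := by
    rw [← Finset.card_pos, Finset.card_compl]
    omega
  obtain ⟨G, hG⟩ := hne
  refine ⟨G, ?_⟩
  rw [Finset.mem_compl, hBadAll, Finset.mem_filter] at hG
  have h2 : ¬ ¬ GoodP G := fun hn => hG ⟨Finset.mem_univ _, hn⟩
  exact not_not.mp h2


/-- Let `N = 2^n`, `M = 2^m`, `K = 2^k` with `k ≤ n` and `ε > 0`. Then there is a function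
`F : {0,1}^n × {0,1}^d → {0,1}^m` with
`d = ⌈log₂(max{(M/K)·ln 2/ε², (1/ε²)(1 + ln 2 + ln N)})⌉` which is a prefix
`(k, ε)`-extractor: for every `i = 0, …, k`, the length-`(m-i)` prefix of `F` is a
`(k-i, ε)`-extractor. -/
theorem prefix_extractor_exists (n m k : ℕ) (hk : k ≤ n) (ε : ℝ) (hε : 0 < ε) :
    ∃ F : (Fin n → Bool) →
        (Fin (⌈Real.logb 2 (max ((((2:ℝ) ^ m) / ((2:ℝ) ^ k)) * (Real.log 2 / ε ^ 2))
            ((1 / ε ^ 2) * (1 + Real.log 2 + Real.log ((2:ℝ) ^ n))))⌉₊) → Bool) →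
        (Fin m → Bool),
      ∀ i : ℕ, i ≤ k →
        IsExtractor (((k - i : ℕ) : ℝ)) ε
          (fun x y => fun j : Fin (m - i) => F x y (Fin.castLE (Nat.sub_le m i) j)) := by
  classical
  set x : ℝ := max ((((2:ℝ) ^ m) / ((2:ℝ) ^ k)) * (Real.log 2 / ε ^ 2))
      ((1 / ε ^ 2) * (1 + Real.log 2 + Real.log ((2:ℝ) ^ n))) with hx
  set d : ℕ := ⌈Real.logb 2 x⌉₊ with hd
  have hl2 : (0:ℝ) < Real.log 2 := Real.log_pos (by norm_num)
  have hxpos : 0 < x := by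
    apply lt_max_of_lt_left
    positivity
  have hdom : x ≤ (((2:ℕ) ^ d : ℕ) : ℝ) := ceil_pow_dominates x hxpos
  have hDa : (2:ℝ) ^ m / (2:ℝ) ^ k * (Real.log 2 / ε ^ 2) ≤ (((2:ℕ) ^ d : ℕ) : ℝ) :=
    le_trans (le_max_left _ _) hdom
  have hDb : (1 / ε ^ 2) * (1 + Real.log 2 + Real.log ((2:ℝ) ^ n)) ≤ (((2:ℕ) ^ d : ℕ) : ℝ) :=
    le_trans (le_max_right _ _) hdom
  obtain ⟨G, hGood⟩ := good_exists n m k hk ε hε d hDa hDb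
  refine ⟨fun x y => G (x, y), ?_⟩
  intro i hik
  intro X hX hXb
  by_cases him : m ≤ i
  · -- trivial case: output space has one point
    have hcard : Fintype.card (Fin (m - i) → Bool) = 1 := by
      have : m - i = 0 := by omega
      rw [this]
      simp [Fintype.card_fun]
    have hNE : Nonempty (Fin (m - i) → Bool) := inferInstance
    obtain ⟨hP0, hP1⟩ := push_isDist
      (fun x y => fun j : Fin (m - i) => G (x, y) (Fin.castLE (Nat.sub_le m i) j)) X hX
    rw [statDist_eq_zero_of_card_one hcard _ _ hP1 unif_sum]
    exact hε.le
  · -- main case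
    have him' : i < m := by omega
    have hiL : i ∈ range (min k m + 1) := Finset.mem_range.mpr (by omega)
    have hconv : (2:ℝ) ^ (-((k - i : ℕ) : ℝ)) = 1 / (((2:ℕ) ^ (k - i) : ℕ) : ℝ) := by
      rw [Real.rpow_neg (by norm_num : (0:ℝ) ≤ 2), Real.rpow_natCast]
      push_cast
      rw [one_div]
    have hXb2 : ∀ x, X x ≤ 1 / (((2:ℕ) ^ (k - i) : ℕ) : ℝ) := by
      intro x0
      rw [← hconv]
      exact hXb x0
    apply extractor_of_count _ (2 ^ (k - i)) (by positivity) ?hKc ε hε ?hgood X hX hXb2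
    case hKc =>
      have : Fintype.card (Fin n → Bool) = 2 ^ n := by simp [Fintype.card_fun]
      rw [this]
      exact Nat.pow_le_pow_right (by norm_num) (by omega)
    case hgood =>
      intro S hScard T
      have hg := hGood i hiL S (Finset.mem_powersetCard_univ.mpr hScard) T
      rw [not_le] at hg
      -- the count in hg equals the sum of per-row counts
      have hcount : (((S ×ˢ (univ : Finset (Fin d → Bool))).filter
            fun j => G j ∈ Aset m i T).card : ℝ)
          = ∑ x ∈ S, (((univ : Finset (Fin d → Bool)).filter
              fun y => (fun j : Fin (m - i) => G (x, y) (Fin.castLE (Nat.sub_le m i) j))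
                ∈ T).card : ℝ) := by
        rw [card_filter_product S (fun j => G j ∈ Aset m i T)]
        push_cast
        apply Finset.sum_congr rfl
        intro x0 _
        have hfe : (Finset.filter (fun y => G (x0, y) ∈ Aset m i T)
              (univ : Finset (Fin d → Bool)))
            = Finset.filter (fun y => (fun j : Fin (m - i) =>
                G (x0, y) (Fin.castLE (Nat.sub_le m i) j)) ∈ T) univ := by
          apply Finset.filter_congr
          intro y _
          rw [Aset, Finset.mem_filter]
          simp
        rw [hfe]
      -- the threshold in hg equals the desired threshold
      have hratio : ((Aset m i T).card : ℝ) / (Fintype.card (Fin m → Bool) : ℝ)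
          = (T.card : ℝ) / (Fintype.card (Fin (m - i) → Bool) : ℝ) :=
        prefix_ratio m (m - i) (Nat.sub_le m i) T
      have hprodc : ((S ×ˢ (univ : Finset (Fin d → Bool))).card : ℝ)
          = ((2 ^ (k - i) : ℕ) : ℝ) * (Fintype.card (Fin d → Bool) : ℝ) := by
        rw [Finset.card_product, Finset.card_univ, hScard]
        push_cast
        ring
      rw [hcount, hratio, hprodc] at hg
      exact hg.le
end

section
/- Let A be a finite set, K a positive integer with K ≤ |A|, and X a probability distribution on A such that X(a) ≤ 1/K for every a ∈ A. Then X can be written as a convex combination of uniform distributions on subsets of A of size exactly K; moreover, at most |A| subsets suffice: there exist subsets S₁,…,S_t ⊆ A with t ≤ |A|, |S_i| = K, and nonnegative weights w₁,…,w_t summing to 1, such that X(a) = Σ_{i : a ∈ S_i} w_i / K for every a ∈ A. -/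
open Finset


private lemma base_case {α : Type*} [Fintype α] [DecidableEq α]
    (K : ℕ) (hK : 0 < K) (X : α → ℝ) (hX1 : ∑ a, X a = 1)
    (hall : ∀ a, X a = 0 ∨ X a = 1 / (K : ℝ)) :
    ∃ S : Finset α, S.card = K ∧ ∀ a, X a = if a ∈ S then 1 / (K : ℝ) else 0 := by
  classical
  have hKR : (0:ℝ) < K := by exact_mod_cast hK
  set S := univ.filter (fun a => X a = 1/(K:ℝ)) with hS
  have hsum : ∑ a, X a = (S.card : ℝ) * (1/(K:ℝ)) := by
    rw [← Finset.sum_filter_add_sum_filter_not univ (fun a => X a = 1/(K:ℝ))]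
    have h1 : ∑ a ∈ S, X a = (S.card : ℝ) * (1/(K:ℝ)) := by
      rw [Finset.sum_congr rfl (fun a ha => (mem_filter.mp ha).2), Finset.sum_const,
        nsmul_eq_mul]
    have h2 : ∑ a ∈ univ.filter (fun a => ¬ (X a = 1/(K:ℝ))), X a = 0 := by
      refine Finset.sum_eq_zero fun a ha => ?_
      rcases hall a with h | h
      · exact h
      · exact absurd h (mem_filter.mp ha).2
    rw [h2, add_zero]; exact h1
  have hcard : S.card = K := by
    rw [hX1] at hsum
    field_simp at hsum
    exact_mod_cast (by linarith : (S.card:ℝ) = K)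
  refine ⟨S, hcard, fun a => ?_⟩
  by_cases ha : a ∈ S
  · simpa [ha] using (mem_filter.mp ha).2
  · simp only [ha, if_neg, if_false]
    rcases hall a with h | h
    · exact h
    · exact absurd (mem_filter.mpr ⟨mem_univ a, h⟩) ha

private lemma card_ne_one {α : Type*} [Fintype α] [DecidableEq α]
    (K : ℕ) (hK : 0 < K)
    (X : α → ℝ) (hX0 : ∀ a, 0 ≤ X a) (hX1 : ∑ a, X a = 1)
    (hXK : ∀ a, X a ≤ 1 / (K : ℝ)) :
    (univ.filter (fun a => X a ≠ 0 ∧ X a ≠ 1/(K:ℝ))).card ≠ 1 := by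
  classical
  intro hcard
  have hKR : (0:ℝ) < K := by exact_mod_cast hK
  obtain ⟨a₀, ha₀⟩ := Finset.card_eq_one.mp hcard
  have ha₀mem : a₀ ∈ univ.filter (fun a => X a ≠ 0 ∧ X a ≠ 1/(K:ℝ)) := by
    rw [ha₀]; exact mem_singleton_self a₀
  obtain ⟨h0, hk⟩ := (mem_filter.mp ha₀mem).2
  set H := univ.filter (fun a => X a = 1/(K:ℝ)) with hH
  have hsum' : ∑ a, X a = X a₀ + (H.card : ℝ) * (1/(K:ℝ)) := by
    rw [← Finset.sum_filter_add_sum_filter_not univ (fun a => X a = 1/(K:ℝ))]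
    have h1 : ∑ a ∈ H, X a = (H.card : ℝ) * (1/(K:ℝ)) := by
      rw [Finset.sum_congr rfl (fun a ha => (mem_filter.mp ha).2), Finset.sum_const,
        nsmul_eq_mul]
    have ha₀mem2 : a₀ ∈ univ.filter (fun a => ¬ (X a = 1/(K:ℝ))) := by
      simp only [mem_filter, mem_univ, true_and]
      exact hk
    have h2 : ∑ a ∈ univ.filter (fun a => ¬ (X a = 1/(K:ℝ))), X a = X a₀ := by
      rw [← Finset.sum_erase_add _ _ ha₀mem2]
      have hz : ∑ a ∈ (univ.filter (fun a => ¬ (X a = 1/(K:ℝ)))).erase a₀, X a = 0 := by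
        refine Finset.sum_eq_zero fun a ha => ?_
        obtain ⟨hne, hmem⟩ := Finset.mem_erase.mp ha
        by_contra h
        have : a ∈ univ.filter (fun a => X a ≠ 0 ∧ X a ≠ 1/(K:ℝ)) :=
          mem_filter.mpr ⟨mem_univ a, h, (mem_filter.mp hmem).2⟩
        rw [ha₀] at this
        exact hne (mem_singleton.mp this)
      rw [hz, zero_add]
    rw [h1, h2]; ring
  rw [hX1] at hsum'
  have hsum : X a₀ + (H.card : ℝ) * (1/(K:ℝ)) = 1 := hsum'.symm
  have hpos : 0 < X a₀ := lt_of_le_of_ne (hX0 a₀) (Ne.symm h0)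
  have hlt : X a₀ < 1/(K:ℝ) := lt_of_le_of_ne (hXK a₀) hk
  rcases Nat.lt_or_ge H.card K with h | h
  · -- H.card ≤ K - 1 : then X a₀ ≥ 1/K, contradiction
    have h' : H.card + 1 ≤ K := h
    have hc1 : (H.card : ℝ) + 1 ≤ (K : ℝ) := by exact_mod_cast h'
    have hd : (1 + (H.card:ℝ))/(K:ℝ) ≤ 1 := by
      rw [div_le_one hKR]; linarith
    have hsplit : (1 + (H.card:ℝ))/(K:ℝ) = 1/(K:ℝ) + (H.card:ℝ)/(K:ℝ) := add_div 1 (H.card:ℝ) (K:ℝ)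
    have : 1/(K:ℝ) + (H.card:ℝ) * (1/(K:ℝ)) ≤ 1 := by
      rw [mul_one_div]; linarith [hsplit ▸ hd]
    linarith
  · -- K ≤ H.card : then X a₀ ≤ 0, contradiction
    have hcK : (K : ℝ) ≤ (H.card:ℝ) := by exact_mod_cast h
    have : (1:ℝ) ≤ (H.card:ℝ) * (1/(K:ℝ)) := by
      rw [mul_one_div, le_div_iff₀ hKR]; linarith
    linarith

private lemma step_lemma {α : Type*} [Fintype α] [DecidableEq α]
    (K : ℕ) (hK : 0 < K)
    (X : α → ℝ) (hX0 : ∀ a, 0 ≤ X a) (hX1 : ∑ a, X a = 1)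
    (hXK : ∀ a, X a ≤ 1 / (K : ℝ))
    (hne : (univ.filter (fun a => X a ≠ 0 ∧ X a ≠ 1/(K:ℝ))).Nonempty) :
    ∃ (S₀ : Finset α) (v : ℝ) (Y : α → ℝ), S₀.card = K ∧ 0 ≤ v ∧ v < 1 ∧
      (∀ a, 0 ≤ Y a) ∧ (∑ a, Y a = 1) ∧ (∀ a, Y a ≤ 1/(K:ℝ)) ∧
      (univ.filter (fun a => Y a ≠ 0 ∧ Y a ≠ 1/(K:ℝ))).card
        < (univ.filter (fun a => X a ≠ 0 ∧ X a ≠ 1/(K:ℝ))).card ∧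
      (∀ a, X a = (if a ∈ S₀ then v/(K:ℝ) else 0) + (1-v) * Y a) := by
  classical
  have hKR : (0:ℝ) < K := by exact_mod_cast hK
  set H := univ.filter (fun a => X a = 1/(K:ℝ)) with hH
  set supp := univ.filter (fun a => X a ≠ 0) with hsupp
  have hHsupp : H ⊆ supp := by
    intro a ha
    refine mem_filter.mpr ⟨mem_univ a, ?_⟩
    rw [(mem_filter.mp ha).2]
    positivity
  have hsumH : ∑ a ∈ H, X a = (H.card : ℝ) * (1/(K:ℝ)) := by
    rw [Finset.sum_congr rfl (fun a ha => (mem_filter.mp ha).2), Finset.sum_const,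
      nsmul_eq_mul]
  have hHle : ∑ a ∈ H, X a ≤ 1 := by
    rw [← hX1]
    exact Finset.sum_le_sum_of_subset_of_nonneg (subset_univ H) (fun a _ _ => hX0 a)
  have hHcardle : H.card ≤ K := by
    rw [hsumH, mul_one_div, div_le_one hKR] at hHle
    exact_mod_cast hHle
  have hHcard : H.card < K := by
    rcases lt_or_eq_of_le hHcardle with h | h
    · exact h
    · exfalso
      have hs1 : ∑ a ∈ H, X a = 1 := by
        rw [hsumH, h, mul_one_div, div_self (ne_of_gt hKR)]
      have hzero : ∑ a ∈ univ.filter (fun a => ¬ (X a = 1/(K:ℝ))), X a = 0 := by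
        have := Finset.sum_filter_add_sum_filter_not univ (fun a => X a = 1/(K:ℝ)) X
        rw [hX1] at this
        rw [← hH] at this
        linarith [hs1, this]
      obtain ⟨a, ha⟩ := hne
      obtain ⟨h0, hk⟩ := (mem_filter.mp ha).2
      have hamem : a ∈ univ.filter (fun a => ¬ (X a = 1/(K:ℝ))) := by
        simp only [mem_filter, mem_univ, true_and]; exact hk
      exact h0 ((Finset.sum_eq_zero_iff_of_nonneg (fun b _ => hX0 b)).mp hzero a hamem)
  have hsuppcard : K ≤ supp.card := by
    have h1 : ∑ a ∈ supp, X a = 1 := by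
      rw [← hX1, ← Finset.sum_filter_add_sum_filter_not univ (fun a => X a ≠ 0)]
      rw [← hsupp]
      have : ∑ a ∈ univ.filter (fun a => ¬ (X a ≠ 0)), X a = 0 :=
        Finset.sum_eq_zero fun a ha => not_not.mp (mem_filter.mp ha).2
      rw [this, add_zero]
    have h2 : ∑ a ∈ supp, X a ≤ (supp.card : ℝ) * (1/(K:ℝ)) := by
      have := Finset.sum_le_card_nsmul supp X (1/(K:ℝ)) (fun a _ => hXK a)
      rwa [nsmul_eq_mul] at this
    rw [h1] at h2
    have : (K:ℝ) ≤ (supp.card : ℝ) := by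
      rw [mul_one_div, le_div_iff₀ hKR] at h2
      linarith
    exact_mod_cast this
  obtain ⟨S, hHS, hSsupp, hScard⟩ :=
    Finset.exists_subsuperset_card_eq hHsupp hHcardle hsuppcard
  have hSne : S.Nonempty := Finset.card_pos.mp (hScard ▸ hK)
  have huniv : (univ : Finset α).Nonempty := ⟨hSne.choose, mem_univ _⟩
  set f : α → ℝ := fun a => if a ∈ S then (K:ℝ) * X a else 1 - (K:ℝ) * X a with hf
  set v := univ.inf' huniv f with hv
  have hXpos : ∀ a ∈ S, 0 < X a := fun a ha =>
    lt_of_le_of_ne (hX0 a) (Ne.symm ((mem_filter.mp (hSsupp ha)).2))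
  have hv0 : 0 ≤ v := by
    refine Finset.le_inf' huniv f fun b _ => ?_
    by_cases hb : b ∈ S
    · simp only [hf, hb, if_pos]
      exact mul_nonneg hKR.le (hX0 b)
    · simp only [hf, hb, if_neg, if_false]
      rw [sub_nonneg, mul_comm]
      exact (le_div_iff₀ hKR).mp (hXK b)
  have hvS : ∀ a ∈ S, v ≤ (K:ℝ) * X a := by
    intro a ha
    have h : v ≤ f a := Finset.inf'_le f (mem_univ a)
    simp only [hf] at h
    rwa [if_pos ha] at h
  have hvnS : ∀ a, a ∉ S → v ≤ 1 - (K:ℝ) * X a := by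
    intro a ha
    have h : v ≤ f a := Finset.inf'_le f (mem_univ a)
    simp only [hf] at h
    rwa [if_neg ha] at h
  -- a fractional element of S
  have hnotsub : ¬ S ⊆ H := by
    intro h
    have := Finset.card_le_card h
    omega
  obtain ⟨b, hbS, hbH⟩ := Finset.not_subset.mp hnotsub
  have hbk : X b ≠ 1/(K:ℝ) := fun h => hbH (mem_filter.mpr ⟨mem_univ b, h⟩)
  have hblt : X b < 1/(K:ℝ) := lt_of_le_of_ne (hXK b) hbk
  have hv1 : v < 1 := by
    have h1 : v ≤ (K:ℝ) * X b := hvS b hbS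
    have h3 := mul_lt_mul_of_pos_left hblt hKR
    rw [mul_one_div, div_self (ne_of_gt hKR)] at h3
    linarith
  have h1v : (0:ℝ) < 1 - v := by linarith
  set Y : α → ℝ := fun a => (X a - if a ∈ S then v/(K:ℝ) else 0)/(1-v) with hY
  have hXeq : ∀ a, X a = (if a ∈ S then v/(K:ℝ) else 0) + (1-v) * Y a := by
    intro a
    simp only [hY]
    field_simp
    ring
  have hY0 : ∀ a, 0 ≤ Y a := by
    intro a
    simp only [hY]
    apply div_nonneg _ h1v.le
    by_cases ha : a ∈ S
    · simp only [ha, if_pos]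
      have := hvS a ha
      rw [sub_nonneg, div_le_iff₀ hKR]
      linarith
    · simp only [ha, if_neg, if_false, sub_zero]
      exact hX0 a
  have hYK : ∀ a, Y a ≤ 1/(K:ℝ) := by
    intro a
    simp only [hY]
    rw [div_le_div_iff₀ h1v hKR]
    by_cases ha : a ∈ S
    · simp only [ha, if_pos]
      rw [sub_mul, div_mul_cancel₀ _ (ne_of_gt hKR)]
      have := (le_div_iff₀ hKR).mp (hXK a)
      linarith
    · simp only [ha, if_neg, if_false, sub_zero]
      have := hvnS a ha
      nlinarith
  have hYsum : ∑ a, Y a = 1 := by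
    have hind : ∑ a, (if a ∈ S then v/(K:ℝ) else 0) = v := by
      rw [Finset.sum_ite_mem, Finset.univ_inter, Finset.sum_const, hScard, nsmul_eq_mul,
        mul_div_cancel₀ _ (ne_of_gt hKR)]
    simp only [hY]
    rw [← Finset.sum_div, Finset.sum_sub_distrib, hX1, hind]
    exact div_self (ne_of_gt h1v)
  obtain ⟨a₀, _, hva₀⟩ := Finset.exists_mem_eq_inf' huniv f
  have hva : v = f a₀ := hva₀
  have ha₀F : a₀ ∈ univ.filter (fun a => X a ≠ 0 ∧ X a ≠ 1/(K:ℝ)) := by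
    refine mem_filter.mpr ⟨mem_univ a₀, ?_⟩
    by_cases ha : a₀ ∈ S
    · have hva' : v = (K:ℝ) * X a₀ := by
        rw [hva]; simp only [hf]; rw [if_pos ha]
      refine ⟨(mem_filter.mp (hSsupp ha)).2, fun h => ?_⟩
      rw [h, mul_one_div, div_self (ne_of_gt hKR)] at hva'
      linarith
    · have hva' : v = 1 - (K:ℝ) * X a₀ := by
        rw [hva]; simp only [hf]; rw [if_neg ha]
      constructor
      · intro h
        rw [h, mul_zero, sub_zero] at hva'
        linarith
      · intro h
        exact ha (hHS (mem_filter.mpr ⟨mem_univ a₀, h⟩))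
  have hYa₀ : Y a₀ = 0 ∨ Y a₀ = 1/(K:ℝ) := by
    by_cases ha : a₀ ∈ S
    · left
      have hva' : v = (K:ℝ) * X a₀ := by
        rw [hva]; simp only [hf]; rw [if_pos ha]
      simp only [hY, ha, if_pos]
      have hcanc : (K:ℝ) * X a₀ / (K:ℝ) = X a₀ := by field_simp
      rw [hva', hcanc, sub_self, zero_div]
    · right
      have hva' : v = 1 - (K:ℝ) * X a₀ := by
        rw [hva]; simp only [hf]; rw [if_neg ha]
      simp only [hY, ha, if_neg, if_false, sub_zero]
      have hX0' : X a₀ ≠ 0 := (mem_filter.mp ha₀F).2.1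
      have hXpos' : 0 < X a₀ := lt_of_le_of_ne (hX0 a₀) (Ne.symm hX0')
      have h1veq : 1 - v = (K:ℝ) * X a₀ := by rw [hva']; ring
      rw [h1veq, div_eq_div_iff (by positivity) (ne_of_gt hKR)]
      ring
  have hsubset : (univ.filter (fun a => Y a ≠ 0 ∧ Y a ≠ 1/(K:ℝ)))
      ⊆ (univ.filter (fun a => X a ≠ 0 ∧ X a ≠ 1/(K:ℝ))).erase a₀ := by
    intro a ha
    obtain ⟨hy0, hyk⟩ := (mem_filter.mp ha).2
    refine Finset.mem_erase.mpr ⟨?_, mem_filter.mpr ⟨mem_univ a, ?_, ?_⟩⟩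
    · rintro rfl
      rcases hYa₀ with h | h
      · exact hy0 h
      · exact hyk h
    · intro h
      have haS : a ∉ S := fun hmem => (mem_filter.mp (hSsupp hmem)).2 h
      apply hy0
      simp only [hY, haS, if_neg, if_false, sub_zero, h, zero_div]
    · intro h
      have haS : a ∈ S := hHS (mem_filter.mpr ⟨mem_univ a, h⟩)
      apply hyk
      simp only [hY, haS, if_pos, h]
      rw [div_eq_div_iff (ne_of_gt h1v) (ne_of_gt hKR)]
      field_simp
  have hcardlt : (univ.filter (fun a => Y a ≠ 0 ∧ Y a ≠ 1/(K:ℝ))).card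
      < (univ.filter (fun a => X a ≠ 0 ∧ X a ≠ 1/(K:ℝ))).card :=
    lt_of_le_of_lt (Finset.card_le_card hsubset) (Finset.card_erase_lt_of_mem ha₀F)
  exact ⟨S, v, Y, hScard, hv0, hv1, hY0, hYsum, hYK, hcardlt, hXeq⟩

private lemma single_case {α : Type*} [Fintype α] [DecidableEq α]
    (K : ℕ) (hK : 0 < K) (X : α → ℝ) (hX1 : ∑ a, X a = 1)
    (hall : ∀ a, X a = 0 ∨ X a = 1 / (K : ℝ)) :
    ∃ (S : Fin 1 → Finset α) (w : Fin 1 → ℝ),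
      (∀ i, (S i).card = K) ∧ (∀ i, 0 ≤ w i) ∧ (∑ i, w i = 1) ∧
      ∀ a, X a = ∑ i, if a ∈ S i then w i / (K : ℝ) else 0 := by
  obtain ⟨S₀, hc, heq⟩ := base_case K hK X hX1 hall
  refine ⟨fun _ => S₀, fun _ => 1, fun _ => hc, fun _ => zero_le_one, by simp, fun a => ?_⟩
  rw [heq a]
  simp [Fin.sum_univ_one]

private lemma main_ind {α : Type*} [Fintype α] [DecidableEq α]
    (K : ℕ) (hK : 0 < K) :
    ∀ n : ℕ, ∀ X : α → ℝ, (∀ a, 0 ≤ X a) → (∑ a, X a = 1) → (∀ a, X a ≤ 1/(K:ℝ)) →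
      (univ.filter (fun a => X a ≠ 0 ∧ X a ≠ 1/(K:ℝ))).card ≤ n →
      ∃ t : ℕ, t ≤ max n 1 ∧ ∃ (S : Fin t → Finset α) (w : Fin t → ℝ),
        (∀ i, (S i).card = K) ∧ (∀ i, 0 ≤ w i) ∧ (∑ i, w i = 1) ∧
        ∀ a, X a = ∑ i, if a ∈ S i then w i / (K:ℝ) else 0 := by
  intro n
  induction n with
  | zero =>
    intro X hX0 hX1 hXK hcard
    have hempty : univ.filter (fun a => X a ≠ 0 ∧ X a ≠ 1/(K:ℝ)) = ∅ :=
      Finset.card_eq_zero.mp (Nat.le_zero.mp hcard)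
    have hall : ∀ a, X a = 0 ∨ X a = 1/(K:ℝ) := by
      intro a
      by_contra h
      push_neg at h
      exact (Finset.eq_empty_iff_forall_notMem.mp hempty a)
        (mem_filter.mpr ⟨mem_univ a, h.1, h.2⟩)
    obtain ⟨S, w, h⟩ := single_case K hK X hX1 hall
    exact ⟨1, le_refl _, S, w, h⟩
  | succ n ih =>
    intro X hX0 hX1 hXK hcard
    by_cases hne : (univ.filter (fun a => X a ≠ 0 ∧ X a ≠ 1/(K:ℝ))).Nonempty
    · rcases Nat.eq_zero_or_pos n with rfl | hn
      · exfalso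
        have h1 : (univ.filter (fun a => X a ≠ 0 ∧ X a ≠ 1/(K:ℝ))).card = 1 :=
          le_antisymm hcard (Finset.card_pos.mpr hne)
        exact card_ne_one K hK X hX0 hX1 hXK h1
      · obtain ⟨S₀, v, Y, hS₀card, hv0, hv1, hY0, hYsum, hYK, hcardlt, hXeq⟩ :=
          step_lemma K hK X hX0 hX1 hXK hne
        have hYcard : (univ.filter (fun a => Y a ≠ 0 ∧ Y a ≠ 1/(K:ℝ))).card ≤ n := by
          omega
        obtain ⟨t', ht', S', w', hS'card, hw'0, hw'sum, hw'eq⟩ :=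
          ih Y hY0 hYsum hYK hYcard
        refine ⟨t'+1, ?_, Fin.cons S₀ S', Fin.cons v (fun i => (1-v) * w' i), ?_, ?_, ?_, ?_⟩
        · rw [max_eq_left hn] at ht'
          have : t' + 1 ≤ n + 1 := by omega
          exact le_trans this (le_max_left _ _)
        · intro i
          refine Fin.cases ?_ ?_ i
          · simpa using hS₀card
          · intro j
            simpa using hS'card j
        · intro i
          refine Fin.cases ?_ ?_ i
          · simpa using hv0
          · intro j
            simpa using mul_nonneg (by linarith) (hw'0 j)
        · rw [Fin.sum_cons, ← Finset.mul_sum, hw'sum, mul_one]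
          ring
        · intro a
          rw [hXeq a, hw'eq a, Finset.mul_sum, Fin.sum_univ_succ]
          simp only [Fin.cons_zero, Fin.cons_succ]
          congr 1
          refine Finset.sum_congr rfl fun i _ => ?_
          by_cases h : a ∈ S' i <;> simp [h, mul_div_assoc]
    · have hall : ∀ a, X a = 0 ∨ X a = 1/(K:ℝ) := by
        intro a
        by_contra h
        push_neg at h
        exact hne ⟨a, mem_filter.mpr ⟨mem_univ a, h.1, h.2⟩⟩
      obtain ⟨S, w, h⟩ := single_case K hK X hX1 hall
      exact ⟨1, le_max_right _ _, S, w, h⟩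

/-- A distribution on a finite set `α` in which every point has probability at most `1/K`
(with `0 < K ≤ |α|`) is a convex combination of at most `|α|` uniform distributions on
subsets of size exactly `K`. -/
theorem dist_convex_combination_of_flat {α : Type*} [Fintype α] [DecidableEq α]
    (K : ℕ) (hK : 0 < K) (hKA : K ≤ Fintype.card α)
    (X : α → ℝ) (hX0 : ∀ a, 0 ≤ X a) (hX1 : ∑ a, X a = 1)
    (hXK : ∀ a, X a ≤ 1 / (K : ℝ)) :
    ∃ t : ℕ, t ≤ Fintype.card α ∧
      ∃ (S : Fin t → Finset α) (w : Fin t → ℝ),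
        (∀ i, (S i).card = K) ∧ (∀ i, 0 ≤ w i) ∧ (∑ i, w i = 1) ∧
        ∀ a, X a = ∑ i, if a ∈ S i then w i / (K : ℝ) else 0 := by
  classical
  obtain ⟨t, ht, rest⟩ := main_ind K hK (Fintype.card α) X hX0 hX1 hXK
    (le_trans (Finset.card_filter_le _ _) (by rw [Finset.card_univ]))
  refine ⟨t, ?_, rest⟩
  have h1 : 1 ≤ Fintype.card α := le_trans hK hKA
  rwa [max_eq_left h1] at ht
end

section
/- Let K ≤ N be positive integers and let x₁,…,x_N be nonnegative reals, each satisfying x_j ≤ (1/K)·Σ_{i=1}^N x_i. Then there exist at most N pairs (S₁,t₁),…,(S_r,t_r) with r ≤ N, where each S_i ⊆ {1,…,N} has |S_i| = K and each t_i ≥ 0, such that for every j one has x_j = Σ_{i : j ∈ S_i} t_i. (Equivalently: performing at most N operations, each of which decreases some K of the numbers by the same nonnegative amount while keeping all numbers nonnegative, one can reduce all the numbers to 0.) -/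
open Finset

set_option maxHeartbeats 1000000

private lemma telescope_ico (f : ℕ → ℝ) {u v : ℕ} (h : u ≤ v) :
    ∑ i ∈ Finset.Ico u v, (f (i+1) - f i) = f v - f u := by
  rw [Finset.sum_Ico_eq_sub _ h, Finset.sum_range_sub, Finset.sum_range_sub]; ring

/-- Let `K ≤ N` be positive and `x₁,…,x_N` nonnegative reals each at most `(1/K)` of the total
sum. Then there are at most `N` pairs `(Sᵢ, tᵢ)` with `Sᵢ ⊆ {1,…,N}` of size `K` and `tᵢ ≥ 0`
such that `x_j = Σ_{i : j ∈ Sᵢ} tᵢ` for every `j`; i.e. at most `N` operations, each decreasing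
some `K` of the numbers by a common nonnegative amount, reduce all the numbers to `0`. -/
theorem flat_decomposition (K N : ℕ) (hK : 0 < K) (hKN : K ≤ N)
    (x : Fin N → ℝ) (hx : ∀ j, 0 ≤ x j)
    (hbd : ∀ j, x j ≤ (1 / (K : ℝ)) * ∑ i, x i) :
    ∃ r : ℕ, r ≤ N ∧
      ∃ (S : Fin r → Finset (Fin N)) (t : Fin r → ℝ),
        (∀ i, (S i).card = K) ∧ (∀ i, 0 ≤ t i) ∧
        ∀ j, x j = ∑ i, if j ∈ S i then t i else 0 := by
  classical
  have hKR : (0:ℝ) < K := by exact_mod_cast hK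
  set T : ℝ := (∑ i, x i) / K with hTdef
  have hsum : ∑ i, x i = K * T := by rw [hTdef]; field_simp
  have hxT : ∀ j, x j ≤ T := by
    intro j
    have := hbd j
    rw [one_div, inv_mul_eq_div] at this
    exact this
  have hT0 : 0 ≤ T := le_trans (hx ⟨0, lt_of_lt_of_le hK hKN⟩) (hxT _)
  by_cases hT : T = 0
  · -- all x j are 0
    refine ⟨0, Nat.zero_le N, Fin.elim0, Fin.elim0, (fun i => i.elim0), (fun i => i.elim0), ?_⟩
    intro j
    have : x j = 0 := le_antisymm (by rw [hT] at hxT; exact hxT j) (hx j)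
    simp [this]
  have hTpos : 0 < T := lt_of_le_of_ne hT0 (Ne.symm hT)
  -- prefix sums
  set x' : ℕ → ℝ := fun n => if h : n < N then x ⟨n, h⟩ else 0 with hx'def
  have hx'0 : ∀ n, 0 ≤ x' n := by
    intro n; simp only [hx'def]; split <;> simp [hx]
  set p : ℕ → ℝ := fun n => ∑ i ∈ Finset.range n, x' i with hpdef
  have hpsucc : ∀ n, p (n+1) = p n + x' n := fun n => Finset.sum_range_succ x' n
  have hpmono : Monotone p := by
    apply monotone_nat_of_le_succ
    intro n; rw [hpsucc]; linarith [hx'0 n]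
  have hp0 : p 0 = 0 := Finset.sum_range_zero x'
  have hp_nonneg : ∀ n, 0 ≤ p n := fun n => hp0 ▸ hpmono (Nat.zero_le n)
  have hpN : p N = K * T := by
    rw [← hsum]
    have h1 : p N = ∑ i ∈ Finset.range N, x' i := rfl
    rw [h1, ← Fin.sum_univ_eq_sum_range x' N]
    apply Finset.sum_congr rfl
    intro i _
    simp [hx'def, i.isLt]
  have hpx : ∀ j : Fin N, p (j.val+1) = p j.val + x j := by
    intro j; rw [hpsucc]; simp [hx'def, j.isLt]
  -- residues
  set q : ℕ → ℝ := fun n => T * Int.fract (p n / T) with hqdef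
  have hq0 : ∀ n, 0 ≤ q n := by
    intro n; exact mul_nonneg hT0 (Int.fract_nonneg _)
  have hqT : ∀ n, q n < T := by
    intro n
    have := Int.fract_lt_one (p n / T)
    calc T * Int.fract (p n / T) < T * 1 := by
          exact mul_lt_mul_of_pos_left this hTpos
      _ = T := mul_one T
  have hqspec : ∀ (n m : ℕ) (s : ℝ), 0 ≤ s → s < T → p n = m * T + s → q n = s := by
    intro n m s hs0 hsT hpn
    have : p n / T = (m:ℝ) + s / T := by
      rw [hpn, add_div, mul_div_assoc, div_self (ne_of_gt hTpos), mul_one]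
    rw [hqdef]
    simp only
    rw [this]
    have : Int.fract ((m:ℝ) + s / T) = Int.fract (s / T) := by
      exact_mod_cast Int.fract_intCast_add m (s / T)
    rw [this, Int.fract_eq_self.2 ⟨by positivity, by rw [div_lt_one hTpos]; exact hsT⟩]
    field_simp
  have hq00 : q 0 = 0 := by
    have := hqspec 0 0 0 le_rfl hTpos (by simp [hp0])
    simpa using this
  -- breakpoints
  set B : Finset ℝ := (Finset.range N).image q with hBdef
  have h0B : (0:ℝ) ∈ B := by
    rw [hBdef]
    exact Finset.mem_image.2 ⟨0, Finset.mem_range.2 (lt_of_lt_of_le hK hKN), hq00⟩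
  have hBnonneg : ∀ y ∈ B, 0 ≤ y := by
    intro y hy
    obtain ⟨n, _, rfl⟩ := Finset.mem_image.1 hy
    exact hq0 n
  have hBlt : ∀ y ∈ B, y < T := by
    intro y hy
    obtain ⟨n, _, rfl⟩ := Finset.mem_image.1 hy
    exact hqT n
  set r : ℕ := B.card with hrdef
  have hrN : r ≤ N := le_trans (Finset.card_image_le) (by simp)
  have hrpos : 0 < r := Finset.card_pos.2 ⟨0, h0B⟩
  set e := B.orderIsoOfFin (rfl : B.card = r) with hedef
  set b' : ℕ → ℝ := fun n => if h : n < r then (e ⟨n, h⟩ : ℝ) else T with hb'def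
  have hb'B : ∀ n (h : n < r), b' n ∈ B := by
    intro n h; simp only [hb'def, dif_pos h]; exact (e ⟨n, h⟩).2
  have hb'T : ∀ n, n ≥ r → b' n = T := by
    intro n h; simp only [hb'def, dif_neg (not_lt.2 h)]
  have hb'mono : ∀ u v, u < v → v ≤ r → b' u < b' v := by
    intro u v huv hvr
    have hur : u < r := lt_of_lt_of_le huv hvr
    rcases eq_or_lt_of_le hvr with h | h
    · rw [h, hb'T r le_rfl]
      exact hBlt _ (hb'B u hur)
    · simp only [hb'def, dif_pos hur, dif_pos h]
      exact_mod_cast e.strictMono (show (⟨u, hur⟩ : Fin r) < ⟨v, h⟩ from huv)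
  have hb'mono' : ∀ u v, u ≤ v → v ≤ r → b' u ≤ b' v := by
    intro u v huv hvr
    rcases eq_or_lt_of_le huv with h | h
    · rw [h]
    · exact le_of_lt (hb'mono u v h hvr)
  have hb'0 : b' 0 = 0 := by
    have h1 : b' 0 ∈ B := hb'B 0 hrpos
    have h2 : ∃ u, u < r ∧ b' u = 0 := by
      obtain ⟨i, hi⟩ := e.surjective ⟨0, h0B⟩
      exact ⟨i.val, i.isLt, by simp only [hb'def, dif_pos i.isLt, Fin.eta, hi]; exact dif_pos i.isLt⟩
    obtain ⟨u, hur, hu⟩ := h2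
    rcases Nat.eq_zero_or_pos u with h | h
    · rw [← hu, h]
    · have := hb'mono 0 u h (le_of_lt hur)
      have h0 := hBnonneg _ h1
      linarith [hu ▸ this]
  have hb'nonneg : ∀ n, 0 ≤ b' n := by
    intro n
    rcases lt_or_ge n r with h | h
    · exact hBnonneg _ (hb'B n h)
    · rw [hb'T n h]; exact hT0
  have hb'leT : ∀ n, b' n ≤ T := by
    intro n
    rcases lt_or_ge n r with h | h
    · exact le_of_lt (hBlt _ (hb'B n h))
    · rw [hb'T n h]
  have hBmem : ∀ y ∈ B, ∃ u, u < r ∧ b' u = y := by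
    intro y hy
    obtain ⟨i, hi⟩ := e.surjective ⟨y, hy⟩
    refine ⟨i.val, i.isLt, ?_⟩
    simp only [hb'def, dif_pos i.isLt, Fin.eta, hi]
    exact dif_pos i.isLt
  -- locating function
  set F : ℝ → ℕ := fun y => Nat.findGreatest (fun n => p n ≤ y) N with hFdef
  have hF : ∀ y, 0 ≤ y → y < K * T → F y < N ∧ p (F y) ≤ y ∧ y < p (F y + 1) := by
    intro y hy0 hyK
    have hFle : F y ≤ N := Nat.findGreatest_le N
    have hFspec : p (F y) ≤ y :=
      Nat.findGreatest_spec (P := fun n => p n ≤ y) (m := 0) (Nat.zero_le N) (by show p 0 ≤ y; rw [hp0]; exact hy0)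
    have hFN : F y < N := by
      rcases eq_or_lt_of_le hFle with h | h
      · exfalso; rw [h, hpN] at hFspec; linarith
      · exact h
    refine ⟨hFN, hFspec, ?_⟩
    by_contra hcon
    push_neg at hcon
    exact absurd hcon (Nat.findGreatest_is_greatest (Nat.lt_succ_self _) hFN)
  have hFuniq : ∀ (y : ℝ) (j : ℕ), j < N → p j ≤ y → y < p (j+1) → j = F y := by
    intro y j hjN hpj hpj1
    have hy0 : 0 ≤ y := le_trans (hp_nonneg j) hpj
    have hyK : y < K * T := lt_of_lt_of_le hpj1 (hpN ▸ hpmono hjN)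
    obtain ⟨h1, h2, h3⟩ := hF y hy0 hyK
    rcases lt_trichotomy j (F y) with h | h | h
    · exfalso
      have : p (j+1) ≤ p (F y) := hpmono h
      linarith
    · exact h
    · exfalso
      have : p (F y + 1) ≤ p j := hpmono h
      linarith
  -- the decomposition
  set S : Fin r → Finset (Fin N) := fun i =>
    Finset.univ.filter (fun j : Fin N =>
      ∃ m : ℕ, m < K ∧ p j.val ≤ b' i.val + m * T ∧ b' i.val + m * T < p (j.val + 1)) with hSdef
  set t : Fin r → ℝ := fun i => b' (i.val + 1) - b' i.val with htdef
  have hmemS : ∀ (i : Fin r) (j : Fin N), j ∈ S i ↔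
      ∃ m : ℕ, m < K ∧ p j.val ≤ b' i.val + m * T ∧ b' i.val + m * T < p (j.val + 1) := by
    intro i j
    simp [hSdef]
  -- two distinct witnesses impossible
  have hwituniq : ∀ (c : ℝ) (j : Fin N) (m m' : ℕ),
      p j.val ≤ c + m * T → c + m * T < p (j.val + 1) →
      p j.val ≤ c + m' * T → c + m' * T < p (j.val + 1) → m = m' := by
    intro c j m m' h1 h2 h3 h4
    by_contra hne
    have hxj := hxT j
    have hpxj := hpx j
    rcases Nat.lt_or_ge m m' with h | h
    · have : (m:ℝ) + 1 ≤ m' := by exact_mod_cast h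
      nlinarith
    · have h' : m' < m := lt_of_le_of_ne h (Ne.symm hne)
      have : (m':ℝ) + 1 ≤ m := by exact_mod_cast h'
      nlinarith
  refine ⟨r, hrN, S, t, ?_, ?_, ?_⟩
  · -- cardinality
    intro i
    have hbi : 0 ≤ b' i.val ∧ b' i.val < T :=
      ⟨hb'nonneg _, hBlt _ (hb'B i.val i.isLt)⟩
    have key : ∀ m : ℕ, m < K → 0 ≤ b' i.val + m * T ∧ b' i.val + m * T < K * T := by
      intro m hm
      have h0 := hbi.1
      have h1 : (0:ℝ) ≤ (m:ℝ) * T := by positivity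
      constructor
      · linarith
      · have : (m:ℝ) + 1 ≤ K := by exact_mod_cast hm
        nlinarith [hbi.2]
    have := Finset.card_bij
      (s := Finset.range K) (t := S i)
      (i := fun m hm => (⟨F (b' i.val + m * T),
        (hF _ (key m (Finset.mem_range.1 hm)).1 (key m (Finset.mem_range.1 hm)).2).1⟩ : Fin N))
      (by
        intro m hm
        have hmK := Finset.mem_range.1 hm
        obtain ⟨h1, h2, h3⟩ := hF _ (key m hmK).1 (key m hmK).2
        rw [hmemS]
        exact ⟨m, hmK, h2, h3⟩)
      (by
        intro m₁ hm₁ m₂ hm₂ heq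
        have h1 := hF _ (key m₁ (Finset.mem_range.1 hm₁)).1 (key m₁ (Finset.mem_range.1 hm₁)).2
        have h2 := hF _ (key m₂ (Finset.mem_range.1 hm₂)).1 (key m₂ (Finset.mem_range.1 hm₂)).2
        have hveq : F (b' i.val + m₁ * T) = F (b' i.val + m₂ * T) := by
          exact congrArg Fin.val heq
        have hA : p (F (b' i.val + m₂ * T)) ≤ b' i.val + m₂ * T := h2.2.1
        have hB : b' i.val + m₂ * T < p (F (b' i.val + m₂ * T) + 1) := h2.2.2
        rw [← hveq] at hA hB
        exact hwituniq (b' i.val) ⟨F (b' i.val + m₁ * T), h1.1⟩ m₁ m₂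
          h1.2.1 h1.2.2 hA hB)
      (by
        intro j hj
        rw [hmemS] at hj
        obtain ⟨m, hmK, h1, h2⟩ := hj
        refine ⟨m, Finset.mem_range.2 hmK, ?_⟩
        apply Fin.ext
        exact (hFuniq _ j.val j.isLt h1 h2).symm)
    rw [← this, Finset.card_range]
  · -- nonnegativity
    intro i
    rw [htdef]
    simp only
    linarith [hb'mono i.val (i.val + 1) (Nat.lt_succ_self _) i.isLt]
  · -- the sum identity
    intro j
    set G : ℕ → ℝ := fun m => min (p (j.val + 1)) (max (p j.val) (m * T)) with hGdef
    have hpxj := hpx j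
    have hpj0 : 0 ≤ p j.val := hp_nonneg _
    have hpjK : p (j.val + 1) ≤ K * T := hpN ▸ hpmono j.isLt
    have hpjle : p j.val ≤ p (j.val + 1) := hpmono (Nat.le_succ _)
    -- step a: expand the if into a sum over m
    have stepa : ∀ i : Fin r, (if j ∈ S i then t i else 0) =
        ∑ m ∈ Finset.range K,
          (if p j.val ≤ b' i.val + m * T ∧ b' i.val + m * T < p (j.val + 1) then t i else 0) := by
      intro i
      by_cases hj : j ∈ S i
      · rw [if_pos hj]
        obtain ⟨m₀, hm₀K, h1, h2⟩ := (hmemS i j).1 hj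
        rw [Finset.sum_eq_single_of_mem m₀ (Finset.mem_range.2 hm₀K)]
        · rw [if_pos ⟨h1, h2⟩]
        · intro m hm hne
          rw [if_neg]
          intro ⟨h3, h4⟩
          exact hne (hwituniq (b' i.val) j m m₀ h3 h4 h1 h2)
      · rw [if_neg hj]
        symm
        apply Finset.sum_eq_zero
        intro m hm
        rw [if_neg]
        intro ⟨h1, h2⟩
        exact hj ((hmemS i j).2 ⟨m, Finset.mem_range.1 hm, h1, h2⟩)
    -- step c: for each m, the sum over i equals G (m+1) - G m
    have stepc : ∀ m : ℕ, m < K →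
        (∑ i : Fin r,
          (if p j.val ≤ b' i.val + m * T ∧ b' i.val + m * T < p (j.val + 1) then t i else 0))
        = G (m+1) - G m := by
      intro m hmK
      set c : ℝ := p j.val - m * T with hcdef
      set d : ℝ := p (j.val + 1) - m * T with hddef
      have hcd : c ≤ d := by rw [hcdef, hddef]; linarith
      have hcond : ∀ i : Fin r,
          (p j.val ≤ b' i.val + m * T ∧ b' i.val + m * T < p (j.val + 1)) ↔
          (c ≤ b' i.val ∧ b' i.val < d) := by
        intro i; constructor <;> (intro ⟨h1, h2⟩; constructor <;> [linarith; linarith])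
      have hsum_eq : (∑ i : Fin r,
          (if p j.val ≤ b' i.val + m * T ∧ b' i.val + m * T < p (j.val + 1) then t i else 0))
          = ∑ i ∈ Finset.range r, (if c ≤ b' i ∧ b' i < d then (b' (i+1) - b' i) else 0) := by
        rw [← Fin.sum_univ_eq_sum_range (fun i => if c ≤ b' i ∧ b' i < d then (b' (i+1) - b' i) else 0) r]
        apply Finset.sum_congr rfl
        intro i _
        rw [htdef]
        simp only [hcond i]
      rw [hsum_eq]
      rcases le_or_gt d 0 with hd0 | hd0
      · -- empty: all b' i ≥ 0 ≥ d
        have hz : ∀ i ∈ Finset.range r, (if c ≤ b' i ∧ b' i < d then (b' (i+1) - b' i) else 0) = 0 := by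
          intro i _
          rw [if_neg]
          intro ⟨h1, h2⟩
          linarith [hb'nonneg i]
        rw [Finset.sum_eq_zero hz]
        have hG1 : G (m+1) = p (j.val + 1) := by
          rw [hGdef]
          simp only
          apply min_eq_left
          have : (m:ℝ) * T ≤ (↑(m+1)) * T := by push_cast; nlinarith
          have h2 : p (j.val+1) ≤ (↑(m+1):ℝ) * T := by
            push_cast; push_cast at this; nlinarith [hddef ▸ hd0]
          exact le_trans h2 (le_max_right _ _)
        have hG0 : G m = p (j.val + 1) := by
          rw [hGdef]
          simp only
          apply min_eq_left
          have h2 : p (j.val+1) ≤ (m:ℝ) * T := by nlinarith [hddef ▸ hd0]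
          exact le_trans h2 (le_max_right _ _)
        rw [hG1, hG0]; ring
      rcases le_or_gt T c with hcT | hcT
      · -- empty: all b' i < T ≤ c
        have hz : ∀ i ∈ Finset.range r, (if c ≤ b' i ∧ b' i < d then (b' (i+1) - b' i) else 0) = 0 := by
          intro i hi
          rw [if_neg]
          intro ⟨h1, h2⟩
          have := hBlt _ (hb'B i (Finset.mem_range.1 hi))
          linarith
        rw [Finset.sum_eq_zero hz]
        have hpjm1 : (↑(m+1):ℝ) * T ≤ p j.val := by
          push_cast; nlinarith [hcdef ▸ hcT]
        have hG1 : G (m+1) = p j.val := by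
          rw [hGdef]
          simp only
          rw [max_eq_left hpjm1, min_eq_right hpjle]
        have hG0 : G m = p j.val := by
          rw [hGdef]
          simp only
          have : (m:ℝ) * T ≤ p j.val := by nlinarith
          rw [max_eq_left this, min_eq_right hpjle]
        rw [hG1, hG0]; ring
      · -- main case : 0 < d, c < T
        set c' : ℝ := max c 0 with hc'def
        set d' : ℝ := min d T with hd'def
        have hc'd' : c' ≤ d' := by
          rw [hc'def, hd'def]
          apply max_le <;> apply le_min <;> [exact hcd; exact le_of_lt hcT; exact le_of_lt hd0; exact hT0]
        obtain ⟨u, hur, hu⟩ : ∃ u, u ≤ r ∧ b' u = c' := by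
          rcases le_or_gt c 0 with hc0 | hc0
          · exact ⟨0, Nat.zero_le r, by rw [hb'0, hc'def, max_eq_right hc0]⟩
          · have hc'c : c' = c := max_eq_left (le_of_lt hc0)
            have : c ∈ B := by
              have hqj : q j.val = c := hqspec j.val m c (le_of_lt hc0) hcT (by rw [hcdef]; ring)
              rw [hBdef, ← hqj]
              exact Finset.mem_image.2 ⟨j.val, Finset.mem_range.2 j.isLt, rfl⟩
            obtain ⟨u, hur, hu⟩ := hBmem c this
            exact ⟨u, le_of_lt hur, by rw [hu, hc'c]⟩
        obtain ⟨v, hvr, hv⟩ : ∃ v, v ≤ r ∧ b' v = d' := by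
          rcases le_or_gt T d with hTd | hTd
          · exact ⟨r, le_rfl, by rw [hb'T r le_rfl, hd'def, min_eq_right hTd]⟩
          · have hd'd : d' = d := min_eq_left (le_of_lt hTd)
            have hjN : j.val + 1 < N := by
              rcases Nat.lt_or_ge (j.val + 1) N with h | h
              · exact h
              · exfalso
                have : j.val + 1 = N := le_antisymm j.isLt h
                rw [this, hpN] at hddef
                have : (m:ℝ) + 1 ≤ K := by exact_mod_cast hmK
                nlinarith [hddef ▸ hTd]
            have : d ∈ B := by
              have hqj : q (j.val+1) = d := hqspec (j.val+1) m d (le_of_lt hd0) hTd (by rw [hddef]; ring)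
              rw [hBdef, ← hqj]
              exact Finset.mem_image.2 ⟨j.val+1, Finset.mem_range.2 hjN, rfl⟩
            obtain ⟨v, hvr, hv⟩ := hBmem d this
            exact ⟨v, le_of_lt hvr, by rw [hv, hd'd]⟩
        have huv : u ≤ v := by
          by_contra hcon
          push_neg at hcon
          have := hb'mono v u hcon hur
          rw [hu, hv] at this
          linarith
        -- the index set is exactly Ico u v
        have hcondidx : ∀ i, i < r → ((c ≤ b' i ∧ b' i < d) ↔ (u ≤ i ∧ i < v)) := by
          intro i hir
          constructor
          · intro ⟨h1, h2⟩
            constructor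
            · by_contra hcon
              push_neg at hcon
              have := hb'mono i u hcon hur
              rw [hu] at this
              have h4 : c' ≤ b' i := max_le h1 (hb'nonneg i)
              linarith
            · by_contra hcon
              push_neg at hcon
              have := hb'mono' v i hcon (le_of_lt hir)
              rw [hv] at this
              have h4 : b' i < d' := lt_min h2 (hBlt _ (hb'B i hir))
              linarith
          · intro ⟨h1, h2⟩
            have hb1 : b' u ≤ b' i := hb'mono' u i h1 (le_of_lt hir)
            have hb2 : b' i < b' v := hb'mono i v h2 hvr
            rw [hu] at hb1; rw [hv] at hb2
            exact ⟨le_trans (le_max_left c 0) hb1, lt_of_lt_of_le hb2 (min_le_left d T)⟩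
        have hfilter : Finset.filter (fun i => c ≤ b' i ∧ b' i < d) (Finset.range r)
            = Finset.Ico u v := by
          ext i
          simp only [Finset.mem_filter, Finset.mem_range, Finset.mem_Ico]
          constructor
          · intro ⟨h1, h2⟩
            exact (hcondidx i h1).1 h2
          · intro ⟨h1, h2⟩
            have hir : i < r := lt_of_lt_of_le h2 hvr
            exact ⟨hir, (hcondidx i hir).2 ⟨h1, h2⟩⟩
        rw [← Finset.sum_filter, hfilter, telescope_ico b' huv, hu, hv]
        -- now show d' - c' = G (m+1) - G m
        have hG1 : G (m+1) = d' + m * T := by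
          rw [hGdef, hd'def]
          simp only
          rcases le_or_gt T d with hTd | hTd
          · have h1 : p j.val ≤ (↑(m+1):ℝ) * T := by push_cast; nlinarith
            have h2 : (↑(m+1):ℝ) * T ≤ p (j.val+1) := by push_cast; nlinarith [hddef ▸ hTd]
            rw [max_eq_right h1, min_eq_right h2, min_eq_right hTd]
            push_cast; ring
          · have h1 : p (j.val+1) < (↑(m+1):ℝ) * T := by push_cast; nlinarith [hddef ▸ hTd]
            have h2 : p (j.val+1) ≤ max (p j.val) ((↑(m+1):ℝ) * T) :=
              le_trans (le_of_lt h1) (le_max_right _ _)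
            rw [min_eq_left h2, min_eq_left (le_of_lt hTd), hddef]
            ring
        have hG0 : G m = c' + m * T := by
          rw [hGdef, hc'def]
          simp only
          rcases le_or_gt c 0 with hc0 | hc0
          · have h1 : p j.val ≤ (m:ℝ) * T := by nlinarith [hcdef ▸ hc0]
            have h2 : (m:ℝ) * T ≤ p (j.val+1) := by nlinarith [hddef ▸ hd0]
            rw [max_eq_right h1, min_eq_right h2, max_eq_right hc0]
            ring
          · have h1 : (m:ℝ) * T ≤ p j.val := by nlinarith [hcdef ▸ hc0]
            rw [max_eq_left h1, min_eq_right hpjle, max_eq_left (le_of_lt hc0), hcdef]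
            ring
        rw [hG1, hG0]
        ring
    -- combine
    calc x j = G K - G 0 := by
          have hGK : G K = p (j.val + 1) := by
            rw [hGdef]
            simp only
            have h1 : p j.val ≤ (K:ℝ) * T := le_trans hpjle hpjK
            rw [max_eq_right h1, min_eq_left hpjK]
          have hG0 : G 0 = p j.val := by
            rw [hGdef]
            simp only
            rw [Nat.cast_zero, zero_mul, max_eq_left hpj0, min_eq_right hpjle]
          rw [hGK, hG0]
          linarith [hpxj]
      _ = ∑ m ∈ Finset.range K, (G (m+1) - G m) := (Finset.sum_range_sub G K).symm
      _ = ∑ m ∈ Finset.range K, (∑ i : Fin r,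
            (if p j.val ≤ b' i.val + m * T ∧ b' i.val + m * T < p (j.val + 1) then t i else 0)) := by
          apply Finset.sum_congr rfl
          intro m hm
          rw [stepc m (Finset.mem_range.1 hm)]
      _ = ∑ i : Fin r, ∑ m ∈ Finset.range K,
            (if p j.val ≤ b' i.val + m * T ∧ b' i.val + m * T < p (j.val + 1) then t i else 0) :=
          Finset.sum_comm
      _ = ∑ i, if j ∈ S i then t i else 0 := by
          apply Finset.sum_congr rfl
          intro i _
          rw [← stepa i]
end

section
/- Let F₁: {0,1}^{n₁} × {0,1}^{d₁} → {0,1}^{m₁} be a (k₁,ε₁)-extractor and F₂: {0,1}^{n₂} × {0,1}^{d₂} → {0,1}^{d₁} a (k₂,ε₂)-extractor. Let (X₁,X₂) be a (k₁,k₂)-block source on {0,1}^{n₁} × {0,1}^{n₂}. Then the distribution of F₁(X₁, F₂(X₂, U_{d₂})), where U_{d₂} is uniform on {0,1}^{d₂} and independent of (X₁,X₂), is (ε₁+ε₂)-close to the uniform distribution on {0,1}^{m₁}. -/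
open Finset

lemma statDist_triangle {α : Type*} [Fintype α] (X Y Z : α → ℝ) :
    statDist X Z ≤ statDist X Y + statDist Y Z := by
  unfold statDist
  rw [← add_div, div_le_div_iff_of_pos_right (by norm_num : (0:ℝ) < 2)]
  rw [← Finset.sum_add_distrib]
  exact Finset.sum_le_sum fun a _ => abs_sub_le _ _ _

/-- Composition of extractors on a block source: if `F₁` is a `(k₁,ε₁)`-extractor,
`F₂` a `(k₂,ε₂)`-extractor, and `(X₁,X₂)` (with joint distribution `P`) is a
`(k₁,k₂)`-block source, then the distribution of `F₁(X₁, F₂(X₂, U_{d₂}))` is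
`(ε₁+ε₂)`-close to uniform. -/
theorem block_source_composition (n₁ n₂ d₁ d₂ m₁ : ℕ) (k₁ k₂ : ℕ) (ε₁ ε₂ : ℝ)
    (F₁ : (Fin n₁ → Bool) → (Fin d₁ → Bool) → (Fin m₁ → Bool))
    (F₂ : (Fin n₂ → Bool) → (Fin d₂ → Bool) → (Fin d₁ → Bool))
    (hF₁ : IsExtractor (k₁ : ℝ) ε₁ F₁) (hF₂ : IsExtractor (k₂ : ℝ) ε₂ F₂)
    (P : (Fin n₁ → Bool) × (Fin n₂ → Bool) → ℝ) (hP : IsDist P)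
    -- `H∞(X₁) ≥ k₁` :
    (hblk₁ : ∀ x₁, (∑ x₂, P (x₁, x₂)) ≤ (2:ℝ) ^ (-(k₁ : ℝ)))
    -- for every `x₁` with positive probability, `H∞(X₂ | X₁ = x₁) ≥ k₂` :
    (hblk₂ : ∀ x₁, 0 < (∑ x₂, P (x₁, x₂)) →
      ∀ x₂, P (x₁, x₂) / (∑ x₂', P (x₁, x₂')) ≤ (2:ℝ) ^ (-(k₂ : ℝ))) :
    statDist
      (fun z => ∑ x : (Fin n₁ → Bool) × (Fin n₂ → Bool), ∑ y : Fin d₂ → Bool,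
        if F₁ x.1 (F₂ x.2 y) = z then P x / (Fintype.card (Fin d₂ → Bool) : ℝ) else 0)
      (unif (Fin m₁ → Bool)) ≤ ε₁ + ε₂ := by
  classical
  obtain ⟨hPnn, hPsum⟩ := hP
  set p₁ : (Fin n₁ → Bool) → ℝ := fun x₁ => ∑ x₂, P (x₁, x₂) with hp₁def
  have hp₁nn : ∀ x₁, 0 ≤ p₁ x₁ := fun x₁ => Finset.sum_nonneg fun _ _ => hPnn _
  have hp₁sum : ∑ x₁, p₁ x₁ = 1 := by
    rw [← hPsum, Fintype.sum_prod_type]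
  have hM : statDist (push F₁ p₁) (unif (Fin m₁ → Bool)) ≤ ε₁ :=
    hF₁ p₁ ⟨hp₁nn, hp₁sum⟩ hblk₁
  set J : (Fin n₁ → Bool) → (Fin d₁ → Bool) → ℝ := fun x₁ w =>
    ∑ x₂, ∑ y, if F₂ x₂ y = w then P (x₁, x₂) / (Fintype.card (Fin d₂ → Bool) : ℝ) else 0
    with hJdef
  set Q : (Fin m₁ → Bool) → ℝ := fun z =>
    ∑ x : (Fin n₁ → Bool) × (Fin n₂ → Bool), ∑ y : Fin d₂ → Bool,
      if F₁ x.1 (F₂ x.2 y) = z then P x / (Fintype.card (Fin d₂ → Bool) : ℝ) else 0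
    with hQdef
  have hQ : ∀ z, Q z = ∑ x₁, ∑ w, if F₁ x₁ w = z then J x₁ w else 0 := by
    intro z
    simp only [hQdef]
    rw [Fintype.sum_prod_type]
    refine Finset.sum_congr rfl fun x₁ _ => ?_
    calc ∑ x₂, ∑ y, (if F₁ x₁ (F₂ x₂ y) = z
            then P (x₁, x₂) / (Fintype.card (Fin d₂ → Bool) : ℝ) else 0)
        = ∑ x₂, ∑ y, ∑ w, (if F₂ x₂ y = w then
            (if F₁ x₁ w = z then P (x₁, x₂) / (Fintype.card (Fin d₂ → Bool) : ℝ) else 0)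
            else 0) := by
          refine Finset.sum_congr rfl fun x₂ _ => Finset.sum_congr rfl fun y _ => ?_
          simp [Finset.sum_ite_eq]
      _ = ∑ x₂, ∑ w, ∑ y, (if F₂ x₂ y = w then
            (if F₁ x₁ w = z then P (x₁, x₂) / (Fintype.card (Fin d₂ → Bool) : ℝ) else 0)
            else 0) :=
          Finset.sum_congr rfl fun x₂ _ => Finset.sum_comm
      _ = ∑ w, ∑ x₂, ∑ y, (if F₂ x₂ y = w then
            (if F₁ x₁ w = z then P (x₁, x₂) / (Fintype.card (Fin d₂ → Bool) : ℝ) else 0)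
            else 0) := Finset.sum_comm
      _ = ∑ w, (if F₁ x₁ w = z then J x₁ w else 0) := by
          refine Finset.sum_congr rfl fun w _ => ?_
          by_cases h : F₁ x₁ w = z <;> simp [h, hJdef]
  have hJrow : ∀ x₁,
      ∑ w, |J x₁ w - p₁ x₁ / (Fintype.card (Fin d₁ → Bool) : ℝ)| ≤ p₁ x₁ * (2 * ε₂) := by
    intro x₁
    rcases eq_or_lt_of_le (hp₁nn x₁) with h0 | hpos
    · have hzero : ∀ x₂, P (x₁, x₂) = 0 := by
        intro x₂
        have h := (Finset.sum_eq_zero_iff_of_nonneg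
          (fun i _ => hPnn (x₁, i))).mp h0.symm
        exact h x₂ (Finset.mem_univ _)
      have hJ0 : ∀ w, J x₁ w = 0 := fun w => by simp [hJdef, hzero]
      have hp0 : p₁ x₁ = 0 := h0.symm
      simp [hJ0, hp0]
    · set c : (Fin n₂ → Bool) → ℝ := fun x₂ => P (x₁, x₂) / p₁ x₁ with hcdef
      have hc : IsDist c := by
        constructor
        · exact fun x₂ => div_nonneg (hPnn _) hpos.le
        · simp only [hcdef]
          rw [← Finset.sum_div, div_eq_one_iff_eq (ne_of_gt hpos)]
      have hext := hF₂ c hc (hblk₂ x₁ hpos)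
      have hsum2 : ∑ w, |push F₂ c w - unif (Fin d₁ → Bool) w| ≤ 2 * ε₂ := by
        unfold statDist at hext
        linarith
      have hJw : ∀ w, J x₁ w = p₁ x₁ * push F₂ c w := by
        intro w
        simp only [hJdef, push, Finset.mul_sum]
        refine Finset.sum_congr rfl fun x₂ _ => Finset.sum_congr rfl fun y _ => ?_
        rw [mul_ite, mul_zero]
        congr 1
        simp only [hcdef]
        rw [div_div, eq_comm, ← mul_div_assoc,
          mul_div_mul_left _ _ (ne_of_gt hpos)]
      calc ∑ w, |J x₁ w - p₁ x₁ / (Fintype.card (Fin d₁ → Bool) : ℝ)|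
          = ∑ w, p₁ x₁ * |push F₂ c w - unif (Fin d₁ → Bool) w| := by
            refine Finset.sum_congr rfl fun w _ => ?_
            rw [hJw, show p₁ x₁ / (Fintype.card (Fin d₁ → Bool) : ℝ)
                = p₁ x₁ * unif (Fin d₁ → Bool) w from by
              simp only [unif]; ring]
            rw [← mul_sub, abs_mul, abs_of_nonneg (hp₁nn x₁)]
        _ = p₁ x₁ * ∑ w, |push F₂ c w - unif (Fin d₁ → Bool) w| :=
            (Finset.mul_sum _ _ _).symm
        _ ≤ p₁ x₁ * (2 * ε₂) := mul_le_mul_of_nonneg_left hsum2 (hp₁nn x₁)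
  have hQM : statDist Q (push F₁ p₁) ≤ ε₂ := by
    have hsum : ∑ z, |Q z - push F₁ p₁ z| ≤ 2 * ε₂ := by
      have e1 : ∀ z, Q z - push F₁ p₁ z =
          ∑ x₁, ∑ w, if F₁ x₁ w = z
            then (J x₁ w - p₁ x₁ / (Fintype.card (Fin d₁ → Bool) : ℝ)) else 0 := by
        intro z
        rw [hQ z]
        simp only [push, ← Finset.sum_sub_distrib]
        refine Finset.sum_congr rfl fun x₁ _ => Finset.sum_congr rfl fun w _ => ?_
        split_ifs <;> simp
      calc ∑ z, |Q z - push F₁ p₁ z|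
          ≤ ∑ z, ∑ x₁, ∑ w, (if F₁ x₁ w = z
              then |J x₁ w - p₁ x₁ / (Fintype.card (Fin d₁ → Bool) : ℝ)| else 0) := by
            refine Finset.sum_le_sum fun z _ => ?_
            rw [e1 z]
            refine (Finset.abs_sum_le_sum_abs _ _).trans ?_
            refine Finset.sum_le_sum fun x₁ _ => ?_
            refine (Finset.abs_sum_le_sum_abs _ _).trans ?_
            refine Finset.sum_le_sum fun w _ => ?_
            split_ifs <;> simp
        _ = ∑ x₁, ∑ w, ∑ z, (if F₁ x₁ w = z
              then |J x₁ w - p₁ x₁ / (Fintype.card (Fin d₁ → Bool) : ℝ)| else 0) := by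
            rw [Finset.sum_comm]
            exact Finset.sum_congr rfl fun x₁ _ => Finset.sum_comm
        _ = ∑ x₁, ∑ w, |J x₁ w - p₁ x₁ / (Fintype.card (Fin d₁ → Bool) : ℝ)| := by
            refine Finset.sum_congr rfl fun x₁ _ => Finset.sum_congr rfl fun w _ => ?_
            simp [Finset.sum_ite_eq]
        _ ≤ ∑ x₁, p₁ x₁ * (2 * ε₂) := Finset.sum_le_sum fun x₁ _ => hJrow x₁
        _ = 2 * ε₂ := by rw [← Finset.sum_mul, hp₁sum, one_mul]
    unfold statDist
    linarith
  calc statDist Q (unif (Fin m₁ → Bool))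
      ≤ statDist Q (push F₁ p₁) + statDist (push F₁ p₁) (unif (Fin m₁ → Bool)) :=
        statDist_triangle _ _ _
    _ ≤ ε₂ + ε₁ := add_le_add hQM hM
    _ = ε₁ + ε₂ := by ring
end

section
/- Let A and B be random variables with values in {0,1}^k and Y a random variable on the same probability space. Suppose S₁ and S₂ are disjoint sets of values of Y with Pr[Y ∈ S₁] > 0 and Pr[Y ∈ S₂] > 0, such that the conditional distribution of A given Y ∈ S₁ is ε-close to U_k and the conditional distribution of B given Y ∈ S₂ is ε-close to U_k. Then the conditional distribution of the concatenation AB given Y ∈ S₁ ∪ S₂ is ε-close to some distribution W on {0,1}^{2k} with H∞(W) ≥ k. -/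
open Finset

/-- Let `A, B : Ω → {0,1}^k` and `Y : Ω → γ` be random variables on a finite probability
space `(Ω, P)`, and let `S₁, S₂` be disjoint sets of values of `Y` of positive probability
such that `A` conditioned on `Y ∈ S₁` is `ε`-close to uniform and `B` conditioned on
`Y ∈ S₂` is `ε`-close to uniform. Then the concatenation `AB` (as a pair) conditioned on
`Y ∈ S₁ ∪ S₂` is `ε`-close to some distribution `W` on `{0,1}^{2k}` with `H∞(W) ≥ k`. -/
theorem concat_somewhere_random {Ω γ : Type*} [Fintype Ω] [Fintype γ] [DecidableEq γ]
    (k : ℕ) (P : Ω → ℝ) (hP0 : ∀ ω, 0 ≤ P ω) (hP1 : ∑ ω, P ω = 1)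
    (A B : Ω → (Fin k → Bool)) (Y : Ω → γ) (ε : ℝ)
    (S₁ S₂ : Finset γ) (hdisj : Disjoint S₁ S₂)
    (h₁pos : 0 < ∑ ω ∈ Finset.univ.filter (fun ω => Y ω ∈ S₁), P ω)
    (h₂pos : 0 < ∑ ω ∈ Finset.univ.filter (fun ω => Y ω ∈ S₂), P ω)
    (hA : statDist
      (fun v : Fin k → Bool =>
        (∑ ω ∈ Finset.univ.filter (fun ω => Y ω ∈ S₁ ∧ A ω = v), P ω) /
          (∑ ω ∈ Finset.univ.filter (fun ω => Y ω ∈ S₁), P ω))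
      (unif (Fin k → Bool)) ≤ ε)
    (hB : statDist
      (fun v : Fin k → Bool =>
        (∑ ω ∈ Finset.univ.filter (fun ω => Y ω ∈ S₂ ∧ B ω = v), P ω) /
          (∑ ω ∈ Finset.univ.filter (fun ω => Y ω ∈ S₂), P ω))
      (unif (Fin k → Bool)) ≤ ε) :
    ∃ W : (Fin k → Bool) × (Fin k → Bool) → ℝ,
      (∀ w, 0 ≤ W w) ∧ (∑ w, W w = 1) ∧ (∀ w, W w ≤ 1 / (2:ℝ) ^ k) ∧
      statDist
        (fun v : (Fin k → Bool) × (Fin k → Bool) =>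
          (∑ ω ∈ Finset.univ.filter (fun ω => Y ω ∈ S₁ ∪ S₂ ∧ A ω = v.1 ∧ B ω = v.2), P ω) /
            (∑ ω ∈ Finset.univ.filter (fun ω => Y ω ∈ S₁ ∪ S₂), P ω))
        W ≤ ε := by
  have hcard : (Fintype.card (Fin k → Bool) : ℝ) = 2 ^ k := by simp
  set u : ℝ := 1 / (2:ℝ) ^ k with hu
  have hupos : 0 < u := by positivity
  set s1 := ∑ ω ∈ Finset.univ.filter (fun ω => Y ω ∈ S₁), P ω with hs1def
  set s2 := ∑ ω ∈ Finset.univ.filter (fun ω => Y ω ∈ S₂), P ω with hs2def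
  have hspos : (0:ℝ) < s1 + s2 := by linarith
  set a1 : (Fin k → Bool) → ℝ :=
    fun v₁ => ∑ ω ∈ Finset.univ.filter (fun ω => Y ω ∈ S₁ ∧ A ω = v₁), P ω with ha1def
  set b2 : (Fin k → Bool) → ℝ :=
    fun v₂ => ∑ ω ∈ Finset.univ.filter (fun ω => Y ω ∈ S₂ ∧ B ω = v₂), P ω with hb2def
  set n1 : (Fin k → Bool) × (Fin k → Bool) → ℝ :=
    fun v => ∑ ω ∈ Finset.univ.filter (fun ω => Y ω ∈ S₁ ∧ A ω = v.1 ∧ B ω = v.2), P ω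
    with hn1def
  set n2 : (Fin k → Bool) × (Fin k → Bool) → ℝ :=
    fun v => ∑ ω ∈ Finset.univ.filter (fun ω => Y ω ∈ S₂ ∧ A ω = v.1 ∧ B ω = v.2), P ω
    with hn2def
  -- basic positivity facts
  have ha1nn : ∀ v₁, 0 ≤ a1 v₁ := fun v₁ => Finset.sum_nonneg fun ω _ => hP0 ω
  have hb2nn : ∀ v₂, 0 ≤ b2 v₂ := fun v₂ => Finset.sum_nonneg fun ω _ => hP0 ω
  have hn1nn : ∀ v, 0 ≤ n1 v := fun v => Finset.sum_nonneg fun ω _ => hP0 ω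
  have hn2nn : ∀ v, 0 ≤ n2 v := fun v => Finset.sum_nonneg fun ω _ => hP0 ω
  have hn1le : ∀ v, n1 v ≤ a1 v.1 := by
    intro v
    apply Finset.sum_le_sum_of_subset_of_nonneg
    · intro ω hω
      simp only [Finset.mem_filter] at hω ⊢
      exact ⟨hω.1, hω.2.1, hω.2.2.1⟩
    · exact fun ω _ _ => hP0 ω
  have hn2le : ∀ v, n2 v ≤ b2 v.2 := by
    intro v
    apply Finset.sum_le_sum_of_subset_of_nonneg
    · intro ω hω
      simp only [Finset.mem_filter] at hω ⊢
      exact ⟨hω.1, hω.2.1, hω.2.2.2⟩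
    · exact fun ω _ _ => hP0 ω
  -- fiberwise sums
  have fib1 : ∀ v₁, ∑ v₂, n1 (v₁, v₂) = a1 v₁ := by
    intro v₁
    simp only [hn1def, ha1def]
    rw [← Finset.sum_fiberwise
      (Finset.univ.filter (fun ω => Y ω ∈ S₁ ∧ A ω = v₁)) B P]
    refine Finset.sum_congr rfl fun v₂ _ => Finset.sum_congr ?_ fun _ _ => rfl
    rw [Finset.filter_filter]
    exact Finset.filter_congr fun ω _ => by tauto
  have fib2 : ∀ v₂, ∑ v₁, n2 (v₁, v₂) = b2 v₂ := by
    intro v₂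
    simp only [hn2def, hb2def]
    rw [← Finset.sum_fiberwise
      (Finset.univ.filter (fun ω => Y ω ∈ S₂ ∧ B ω = v₂)) A P]
    refine Finset.sum_congr rfl fun v₁ _ => Finset.sum_congr ?_ fun _ _ => rfl
    rw [Finset.filter_filter]
    exact Finset.filter_congr fun ω _ => by tauto
  -- conditional distributions
  set Q1 : (Fin k → Bool) → (Fin k → Bool) → ℝ :=
    fun v₁ v₂ => if a1 v₁ = 0 then u else n1 (v₁, v₂) / a1 v₁ with hQ1def
  set Q2 : (Fin k → Bool) → (Fin k → Bool) → ℝ :=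
    fun v₂ v₁ => if b2 v₂ = 0 then u else n2 (v₁, v₂) / b2 v₂ with hQ2def
  have hQ1nn : ∀ v₁ v₂, 0 ≤ Q1 v₁ v₂ := by
    intro v₁ v₂
    simp only [hQ1def]
    split
    · exact le_of_lt hupos
    · exact div_nonneg (hn1nn _) (ha1nn _)
  have hQ2nn : ∀ v₂ v₁, 0 ≤ Q2 v₂ v₁ := by
    intro v₂ v₁
    simp only [hQ2def]
    split
    · exact le_of_lt hupos
    · exact div_nonneg (hn2nn _) (hb2nn _)
  have hule1 : u ≤ 1 := by
    rw [hu]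
    rw [div_le_one (by positivity)]
    exact one_le_pow₀ (by norm_num)
  have hQ1le1 : ∀ v₁ v₂, Q1 v₁ v₂ ≤ 1 := by
    intro v₁ v₂
    simp only [hQ1def]
    split
    · exact hule1
    · rename_i h
      rw [div_le_one (lt_of_le_of_ne (ha1nn v₁) (Ne.symm h))]
      exact hn1le (v₁, v₂)
  have hQ2le1 : ∀ v₂ v₁, Q2 v₂ v₁ ≤ 1 := by
    intro v₂ v₁
    simp only [hQ2def]
    split
    · exact hule1
    · rename_i h
      rw [div_le_one (lt_of_le_of_ne (hb2nn v₂) (Ne.symm h))]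
      exact hn2le (v₁, v₂)
  have key1 : ∀ v : (Fin k → Bool) × (Fin k → Bool), a1 v.1 * Q1 v.1 v.2 = n1 v := by
    intro v
    simp only [hQ1def]
    by_cases h : a1 v.1 = 0
    · have h0 : n1 v = 0 := le_antisymm (h ▸ hn1le v) (hn1nn v)
      simp [h, h0]
    · rw [if_neg h]
      field_simp
  have key2 : ∀ v : (Fin k → Bool) × (Fin k → Bool), b2 v.2 * Q2 v.2 v.1 = n2 v := by
    intro v
    simp only [hQ2def]
    by_cases h : b2 v.2 = 0
    · have h0 : n2 v = 0 := le_antisymm (h ▸ hn2le v) (hn2nn v)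
      simp [h, h0]
    · rw [if_neg h]
      field_simp
  have hsum_u : ∑ _v : Fin k → Bool, u = 1 := by
    rw [Finset.sum_const, Finset.card_univ, nsmul_eq_mul, hcard, hu]
    field_simp
  have sumQ1 : ∀ v₁, ∑ v₂, Q1 v₁ v₂ = 1 := by
    intro v₁
    by_cases h : a1 v₁ = 0
    · simp only [hQ1def, h, if_pos rfl]
      exact hsum_u
    · simp only [hQ1def, if_neg h]
      rw [← Finset.sum_div, fib1 v₁, div_self h]
  have sumQ2 : ∀ v₂, ∑ v₁, Q2 v₂ v₁ = 1 := by
    intro v₂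
    by_cases h : b2 v₂ = 0
    · simp only [hQ2def, h, if_pos rfl]
      exact hsum_u
    · simp only [hQ2def, if_neg h]
      rw [← Finset.sum_div, fib2 v₂, div_self h]
  -- the witness distribution
  set W : (Fin k → Bool) × (Fin k → Bool) → ℝ :=
    fun v => (s1 * (u * Q1 v.1 v.2) + s2 * (u * Q2 v.2 v.1)) / (s1 + s2) with hWdef
  -- splitting lemmas
  have hsplit : ∀ v : (Fin k → Bool) × (Fin k → Bool),
      (∑ ω ∈ Finset.univ.filter (fun ω => Y ω ∈ S₁ ∪ S₂ ∧ A ω = v.1 ∧ B ω = v.2), P ω)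
        = n1 v + n2 v := by
    intro v
    simp only [hn1def, hn2def]
    rw [Finset.sum_filter, Finset.sum_filter, Finset.sum_filter, ← Finset.sum_add_distrib]
    refine Finset.sum_congr rfl fun ω _ => ?_
    by_cases h1 : Y ω ∈ S₁ <;> by_cases h2 : Y ω ∈ S₂
    · exact absurd h2 (Finset.disjoint_left.mp hdisj h1)
    all_goals simp [Finset.mem_union, h1, h2]
  have hsTotal : (∑ ω ∈ Finset.univ.filter (fun ω => Y ω ∈ S₁ ∪ S₂), P ω) = s1 + s2 := by
    rw [hs1def, hs2def]
    rw [Finset.sum_filter, Finset.sum_filter, Finset.sum_filter, ← Finset.sum_add_distrib]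
    refine Finset.sum_congr rfl fun ω _ => ?_
    by_cases h1 : Y ω ∈ S₁ <;> by_cases h2 : Y ω ∈ S₂
    · exact absurd h2 (Finset.disjoint_left.mp hdisj h1)
    all_goals simp [Finset.mem_union, h1, h2]
  -- bounds from the hypotheses
  have hA' : ∑ v₁, |a1 v₁ / s1 - u| ≤ 2 * ε := by
    have h := hA
    simp only [statDist, unif, hcard] at h
    simp only [ha1def, hu]
    linarith
  have hB' : ∑ v₂, |b2 v₂ / s2 - u| ≤ 2 * ε := by
    have h := hB
    simp only [statDist, unif, hcard] at h
    simp only [hb2def, hu]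
    linarith
  refine ⟨W, ?_, ?_, ?_, ?_⟩
  · intro w
    simp only [hWdef]
    have := hQ1nn w.1 w.2
    have := hQ2nn w.2 w.1
    positivity
  · simp only [hWdef]
    rw [← Finset.sum_div]
    have e1 : ∑ v : (Fin k → Bool) × (Fin k → Bool), s1 * (u * Q1 v.1 v.2) = s1 := by
      rw [Fintype.sum_prod_type]
      have h : ∀ v₁, ∑ v₂, s1 * (u * Q1 v₁ v₂) = s1 * u := by
        intro v₁
        rw [← Finset.mul_sum, ← Finset.mul_sum, sumQ1 v₁, mul_one]
      simp only [h]
      rw [Finset.sum_const, Finset.card_univ, nsmul_eq_mul, hcard, hu]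
      field_simp
    have e2 : ∑ v : (Fin k → Bool) × (Fin k → Bool), s2 * (u * Q2 v.2 v.1) = s2 := by
      rw [Fintype.sum_prod_type, Finset.sum_comm]
      have h : ∀ v₂, ∑ v₁, s2 * (u * Q2 v₂ v₁) = s2 * u := by
        intro v₂
        rw [← Finset.mul_sum, ← Finset.mul_sum, sumQ2 v₂, mul_one]
      simp only [h]
      rw [Finset.sum_const, Finset.card_univ, nsmul_eq_mul, hcard, hu]
      field_simp
    rw [Finset.sum_add_distrib, e1, e2, div_self (ne_of_gt hspos)]
  · intro w
    simp only [hWdef]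
    rw [div_le_iff₀ hspos]
    have h1 := hQ1le1 w.1 w.2
    have h2 := hQ2le1 w.2 w.1
    have h1' := hQ1nn w.1 w.2
    have h2' := hQ2nn w.2 w.1
    nlinarith [mul_le_mul_of_nonneg_left h1 (le_of_lt hupos),
      mul_le_mul_of_nonneg_left h2 (le_of_lt hupos),
      mul_le_mul_of_nonneg_left (mul_le_mul_of_nonneg_left h1 (le_of_lt hupos)) (le_of_lt h₁pos),
      mul_le_mul_of_nonneg_left (mul_le_mul_of_nonneg_left h2 (le_of_lt hupos)) (le_of_lt h₂pos)]
  · -- the statistical distance bound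
    have hD : (fun v : (Fin k → Bool) × (Fin k → Bool) =>
        (∑ ω ∈ Finset.univ.filter (fun ω => Y ω ∈ S₁ ∪ S₂ ∧ A ω = v.1 ∧ B ω = v.2), P ω) /
          (∑ ω ∈ Finset.univ.filter (fun ω => Y ω ∈ S₁ ∪ S₂), P ω))
        = fun v => (n1 v + n2 v) / (s1 + s2) := by
      funext v
      rw [hsplit v, hsTotal]
    rw [hD]
    simp only [statDist]
    have habs : ∀ v : (Fin k → Bool) × (Fin k → Bool),
        |(n1 v + n2 v) / (s1 + s2) - W v|
          ≤ (|a1 v.1 - s1 * u| * Q1 v.1 v.2 + |b2 v.2 - s2 * u| * Q2 v.2 v.1) / (s1 + s2) := by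
      intro v
      have hdiff : (n1 v + n2 v) / (s1 + s2) - W v
          = ((a1 v.1 - s1 * u) * Q1 v.1 v.2 + (b2 v.2 - s2 * u) * Q2 v.2 v.1) / (s1 + s2) := by
        simp only [hWdef]
        rw [div_sub_div_same]
        congr 1
        rw [← key1 v, ← key2 v]
        ring
      rw [hdiff, abs_div, abs_of_pos hspos]
      gcongr
      calc |(a1 v.1 - s1 * u) * Q1 v.1 v.2 + (b2 v.2 - s2 * u) * Q2 v.2 v.1|
          ≤ |(a1 v.1 - s1 * u) * Q1 v.1 v.2| + |(b2 v.2 - s2 * u) * Q2 v.2 v.1| := abs_add_le _ _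
        _ = |a1 v.1 - s1 * u| * Q1 v.1 v.2 + |b2 v.2 - s2 * u| * Q2 v.2 v.1 := by
            rw [abs_mul, abs_mul, abs_of_nonneg (hQ1nn _ _), abs_of_nonneg (hQ2nn _ _)]
    have hT1 : ∑ v : (Fin k → Bool) × (Fin k → Bool), |a1 v.1 - s1 * u| * Q1 v.1 v.2
        ≤ 2 * ε * s1 := by
      rw [Fintype.sum_prod_type]
      have h : ∀ v₁, ∑ v₂, |a1 v₁ - s1 * u| * Q1 v₁ v₂ = |a1 v₁ - s1 * u| := by
        intro v₁
        rw [← Finset.mul_sum, sumQ1 v₁, mul_one]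
      simp only [h]
      have heq : ∀ v₁, |a1 v₁ - s1 * u| = s1 * |a1 v₁ / s1 - u| := by
        intro v₁
        have e : a1 v₁ - s1 * u = s1 * (a1 v₁ / s1 - u) := by field_simp
        rw [e, abs_mul, abs_of_pos h₁pos]
      simp only [heq]
      rw [← Finset.mul_sum]
      calc s1 * ∑ v₁, |a1 v₁ / s1 - u| ≤ s1 * (2 * ε) :=
            mul_le_mul_of_nonneg_left hA' (le_of_lt h₁pos)
        _ = 2 * ε * s1 := by ring
    have hT2 : ∑ v : (Fin k → Bool) × (Fin k → Bool), |b2 v.2 - s2 * u| * Q2 v.2 v.1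
        ≤ 2 * ε * s2 := by
      rw [Fintype.sum_prod_type, Finset.sum_comm]
      have h : ∀ v₂, ∑ v₁, |b2 v₂ - s2 * u| * Q2 v₂ v₁ = |b2 v₂ - s2 * u| := by
        intro v₂
        rw [← Finset.mul_sum, sumQ2 v₂, mul_one]
      simp only [h]
      have heq : ∀ v₂, |b2 v₂ - s2 * u| = s2 * |b2 v₂ / s2 - u| := by
        intro v₂
        have e : b2 v₂ - s2 * u = s2 * (b2 v₂ / s2 - u) := by field_simp
        rw [e, abs_mul, abs_of_pos h₂pos]
      simp only [heq]
      rw [← Finset.mul_sum]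
      calc s2 * ∑ v₂, |b2 v₂ / s2 - u| ≤ s2 * (2 * ε) :=
            mul_le_mul_of_nonneg_left hB' (le_of_lt h₂pos)
        _ = 2 * ε * s2 := by ring
    have hmain : ∑ v : (Fin k → Bool) × (Fin k → Bool),
        |(n1 v + n2 v) / (s1 + s2) - W v| ≤ 2 * ε := by
      calc ∑ v : (Fin k → Bool) × (Fin k → Bool), |(n1 v + n2 v) / (s1 + s2) - W v|
          ≤ ∑ v : (Fin k → Bool) × (Fin k → Bool),
              (|a1 v.1 - s1 * u| * Q1 v.1 v.2 + |b2 v.2 - s2 * u| * Q2 v.2 v.1) / (s1 + s2) :=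
            Finset.sum_le_sum fun v _ => habs v
        _ = ((∑ v : (Fin k → Bool) × (Fin k → Bool), |a1 v.1 - s1 * u| * Q1 v.1 v.2)
              + ∑ v : (Fin k → Bool) × (Fin k → Bool), |b2 v.2 - s2 * u| * Q2 v.2 v.1)
              / (s1 + s2) := by
            rw [← Finset.sum_div, Finset.sum_add_distrib]
        _ ≤ (2 * ε * s1 + 2 * ε * s2) / (s1 + s2) := by
            gcongr
        _ = 2 * ε := by
            field_simp
    linarith
end
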